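/- arXiv:2007.02547 — 9 statements merged into one kernel-verified Lean document; each statement's English description precedes it below -/
import Mathlib

section
/- There exists a unique α > η such that c − λμ = (α − η)·(λ·∫₀^∞ min((θ+ηy)/α, y)·S_Y(y) dy + β²/2). Moreover, writing g₁(α) = E[R_α(Y)], g₂(α) = E[Y·R_α(Y)], g₃(α) = E[R_α(Y)²] with R_α(y) = min((θ+ηy)/α, y), the function G(α) = θ·g₁(α) + η·g₂(α) − (α/2)·g₃(α) − (β²·(α−η) + 2κ)/(2λ) satisfies G(η) = (c − λμ)/λ > 0, G is strictly decreasing on (η, ∞), G(α) → −∞ as α → ∞, and the unique α* > η above is the unique zero of G. -/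
open MeasureTheory Filter Set

lemma layer_aux {Ω : Type*} [MeasurableSpace Ω] (P : Measure Ω) [IsProbabilityMeasure P]
    (Y : Ω → ℝ) (hY : Measurable Y) (hpos : ∀ᵐ ω ∂P, 0 < Y ω)
    (g : ℝ → ℝ) (hg : Continuous g) (hgnn : ∀ t, 0 ≤ t → 0 ≤ g t)
    (hint : Integrable (fun ω => ∫ t in (0:ℝ)..(Y ω), g t) P) :
    IntegrableOn (fun t => g t * (P {ω | t < Y ω}).toReal) (Ioi (0:ℝ)) volume ∧
    ∫ t in Ioi (0:ℝ), g t * (P {ω | t < Y ω}).toReal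
      = ∫ ω, (∫ t in (0:ℝ)..(Y ω), g t) ∂P := by
  have f_nn : 0 ≤ᵐ[P] Y := hpos.mono fun ω h => h.le
  have key := lintegral_comp_eq_lintegral_meas_lt_mul P f_nn hY.aemeasurable
    (fun t _ => hg.intervalIntegrable 0 t)
    ((ae_restrict_iff' measurableSet_Ioi).2 (ae_of_all _ fun t ht => hgnn t (le_of_lt ht)))
  have hFnn : 0 ≤ᵐ[P] fun ω => ∫ t in (0:ℝ)..(Y ω), g t := by
    filter_upwards [hpos] with ω hω
    exact intervalIntegral.integral_nonneg hω.le (fun t ht => hgnn t ht.1)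
  rw [← ofReal_integral_eq_lintegral_ofReal hint hFnn] at key
  have hrhs : ∫⁻ t in Ioi (0:ℝ), P {a | t < Y a} * ENNReal.ofReal (g t)
      = ∫⁻ t in Ioi (0:ℝ), ENNReal.ofReal (g t * (P {ω | t < Y ω}).toReal) := by
    apply setLIntegral_congr_fun measurableSet_Ioi
    intro t ht
    beta_reduce
    rw [ENNReal.ofReal_mul (hgnn t (le_of_lt ht)), mul_comm]
    congr 1
    exact (ENNReal.ofReal_toReal (measure_ne_top P _)).symm
  rw [hrhs] at key
  have hanti : Antitone fun t : ℝ => (P {ω | t < Y ω}).toReal := by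
    intro s t hst
    apply ENNReal.toReal_mono (measure_ne_top P _)
    exact measure_mono fun ω (h : t < Y ω) => lt_of_le_of_lt hst h
  have hSmeas : Measurable fun t : ℝ => (P {ω | t < Y ω}).toReal := hanti.measurable
  have hmeas : AEStronglyMeasurable (fun t => g t * (P {ω | t < Y ω}).toReal)
      (volume.restrict (Ioi (0:ℝ))) := (hg.measurable.mul hSmeas).aestronglyMeasurable
  have hnn : 0 ≤ᵐ[volume.restrict (Ioi (0:ℝ))] fun t => g t * (P {ω | t < Y ω}).toReal :=
    (ae_restrict_iff' measurableSet_Ioi).2 (ae_of_all _ fun t ht =>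
      mul_nonneg (hgnn t (le_of_lt ht)) ENNReal.toReal_nonneg)
  have hfin : HasFiniteIntegral (fun t => g t * (P {ω | t < Y ω}).toReal)
      (volume.restrict (Ioi (0:ℝ))) := by
    rw [hasFiniteIntegral_iff_ofReal hnn, ← key]
    exact ENNReal.ofReal_lt_top
  have hIOn : IntegrableOn (fun t => g t * (P {ω | t < Y ω}).toReal) (Ioi (0:ℝ)) volume :=
    ⟨hmeas, hfin⟩
  refine ⟨hIOn, ?_⟩
  rw [← ofReal_integral_eq_lintegral_ofReal hIOn hnn] at key
  have h1 : 0 ≤ ∫ ω, (∫ t in (0:ℝ)..(Y ω), g t) ∂P := integral_nonneg_of_ae hFnn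
  have h2 : 0 ≤ ∫ t in Ioi (0:ℝ), g t * (P {ω | t < Y ω}).toReal := integral_nonneg_of_ae hnn
  exact ((ENNReal.ofReal_eq_ofReal_iff h1 h2).1 key).symm

lemma key_ident (θ η α : ℝ) (hθ : 0 ≤ θ) (hη : 0 ≤ η) (hα : η < α) (y : ℝ) (hy : 0 ≤ y) :
    θ * min ((θ + η * y) / α) y + η * (y * min ((θ + η * y) / α) y)
      - α / 2 * (min ((θ + η * y) / α) y) ^ 2
      + (α - η) * ∫ t in (0:ℝ)..y, min ((θ + η * t) / α) t
    = θ * y + η / 2 * y ^ 2 := by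
  have hα0 : 0 < α := lt_of_le_of_lt hη hα
  have hαη : 0 < α - η := sub_pos.2 hα
  set b := θ / (α - η) with hbdef
  have hb : 0 ≤ b := div_nonneg hθ hαη.le
  have hminr : ∀ t : ℝ, t ≤ b → min ((θ + η * t) / α) t = t := by
    intro t ht
    have h1 : t * (α - η) ≤ θ := (le_div_iff₀ hαη).1 ht
    exact min_eq_right (by rw [le_div_iff₀ hα0]; nlinarith)
  have hminl : ∀ t : ℝ, b ≤ t → min ((θ + η * t) / α) t = (θ + η * t) / α := by
    intro t ht
    have h1 : θ ≤ t * (α - η) := (div_le_iff₀ hαη).1 ht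
    exact min_eq_left (by rw [div_le_iff₀ hα0]; nlinarith)
  have cont : Continuous fun t : ℝ => min ((θ + η * t) / α) t :=
    ((continuous_const.add (continuous_const.mul continuous_id)).div_const α).min continuous_id
  rcases le_or_gt y b with hyb | hby
  · have hI : (∫ t in (0:ℝ)..y, min ((θ + η * t) / α) t) = ∫ t in (0:ℝ)..y, t := by
      apply intervalIntegral.integral_congr
      intro t ht
      rw [uIcc_of_le hy] at ht
      exact hminr t (le_trans ht.2 hyb)
    rw [hI, integral_id, hminr y hyb]
    ring
  · have hsplit : (∫ t in (0:ℝ)..b, min ((θ + η * t) / α) t)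
        + (∫ t in b..y, min ((θ + η * t) / α) t)
        = ∫ t in (0:ℝ)..y, min ((θ + η * t) / α) t :=
      intervalIntegral.integral_add_adjacent_intervals
        (cont.intervalIntegrable _ _) (cont.intervalIntegrable _ _)
    have hI1 : (∫ t in (0:ℝ)..b, min ((θ + η * t) / α) t) = (b ^ 2 - 0 ^ 2) / 2 := by
      rw [← integral_id]
      apply intervalIntegral.integral_congr
      intro t ht
      rw [uIcc_of_le hb] at ht
      exact hminr t ht.2
    have hI2 : (∫ t in b..y, min ((θ + η * t) / α) t)
        = (θ * (y - b) + η * ((y ^ 2 - b ^ 2) / 2)) / α := by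
      have : (∫ t in b..y, min ((θ + η * t) / α) t) = ∫ t in b..y, (θ + η * t) / α := by
        apply intervalIntegral.integral_congr
        intro t ht
        rw [uIcc_of_le hby.le] at ht
        exact hminl t ht.1
      rw [this, intervalIntegral.integral_div]
      congr 1
      rw [intervalIntegral.integral_add (intervalIntegrable_const)
        ((continuous_mul_left _).intervalIntegrable _ _),
        intervalIntegral.integral_const, intervalIntegral.integral_const_mul, integral_id]
      simp only [smul_eq_mul]
      ring
    rw [← hsplit, hI1, hI2, hminl y hby.le]
    have hbθ : b * (α - η) = θ := div_mul_cancel₀ θ hαη.ne'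
    clear_value b
    rw [← hbθ]
    field_simp
    ring

lemma main_ident {Ω : Type*} [MeasurableSpace Ω] (P : Measure Ω) [IsProbabilityMeasure P]
    (Y : Ω → ℝ) (hY : Measurable Y) (hpos : ∀ᵐ ω ∂P, 0 < Y ω)
    (hYint : Integrable Y P) (hY2int : Integrable (fun ω => (Y ω) ^ 2) P)
    (θ η α : ℝ) (hθ : 0 ≤ θ) (hη : 0 ≤ η) (hα : η < α) :
    IntegrableOn (fun y => min ((θ + η * y) / α) y * (P {ω | y < Y ω}).toReal)
      (Ioi (0:ℝ)) volume ∧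
    θ * (∫ ω, min ((θ + η * Y ω) / α) (Y ω) ∂P)
      + η * (∫ ω, Y ω * min ((θ + η * Y ω) / α) (Y ω) ∂P)
      - α / 2 * (∫ ω, (min ((θ + η * Y ω) / α) (Y ω)) ^ 2 ∂P)
      + (α - η) * (∫ y in Ioi (0:ℝ), min ((θ + η * y) / α) y * (P {ω | y < Y ω}).toReal)
    = θ * (∫ ω, Y ω ∂P) + η / 2 * (∫ ω, (Y ω) ^ 2 ∂P) := by
  have hα0 : 0 < α := lt_of_le_of_lt hη hα
  have contR : Continuous fun t : ℝ => min ((θ + η * t) / α) t :=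
    ((continuous_const.add (continuous_const.mul continuous_id)).div_const α).min continuous_id
  have hRnn : ∀ t : ℝ, 0 ≤ t → 0 ≤ min ((θ + η * t) / α) t := fun t ht =>
    le_min (div_nonneg (by nlinarith) hα0.le) ht
  have hRle : ∀ t : ℝ, min ((θ + η * t) / α) t ≤ t := fun t => min_le_right _ _
  -- the primitive F
  set F : ℝ → ℝ := fun y => ∫ t in (0:ℝ)..y, min ((θ + η * t) / α) t with hFdef
  have hFcont : Continuous F :=
    intervalIntegral.continuous_primitive (fun a b => contR.intervalIntegrable a b) 0
  have hFnn : ∀ y : ℝ, 0 ≤ y → 0 ≤ F y := fun y hy =>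
    intervalIntegral.integral_nonneg hy fun t ht => hRnn t ht.1
  have hFle : ∀ y : ℝ, 0 ≤ y → F y ≤ y ^ 2 / 2 := by
    intro y hy
    have : F y ≤ ∫ t in (0:ℝ)..y, t :=
      intervalIntegral.integral_mono_on hy (contR.intervalIntegrable _ _)
        (continuous_id.intervalIntegrable _ _) (fun t _ => hRle t)
    simpa [integral_id] using this
  have hFYint : Integrable (fun ω => F (Y ω)) P := by
    refine Integrable.mono' (hY2int.div_const 2)
      ((hFcont.measurable.comp hY).aestronglyMeasurable) ?_
    filter_upwards [hpos] with ω hω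
    rw [Real.norm_eq_abs, abs_of_nonneg (hFnn _ hω.le)]
    exact hFle _ hω.le
  obtain ⟨hIon, hlay⟩ := layer_aux P Y hY hpos _ contR hRnn hFYint
  refine ⟨hIon, ?_⟩
  -- integrability of the three moment integrands
  have hi1 : Integrable (fun ω => min ((θ + η * Y ω) / α) (Y ω)) P := by
    refine Integrable.mono' hYint.abs
      ((contR.measurable.comp hY).aestronglyMeasurable) ?_
    filter_upwards [hpos] with ω hω
    rw [Real.norm_eq_abs, abs_of_nonneg (hRnn _ hω.le)]
    exact le_trans (hRle _) (le_abs_self _)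
  have hi2 : Integrable (fun ω => Y ω * min ((θ + η * Y ω) / α) (Y ω)) P := by
    refine Integrable.mono' hY2int
      ((hY.mul (contR.measurable.comp hY)).aestronglyMeasurable) ?_
    filter_upwards [hpos] with ω hω
    rw [Real.norm_eq_abs, abs_of_nonneg (mul_nonneg hω.le (hRnn _ hω.le)), sq]
    exact mul_le_mul_of_nonneg_left (hRle _) hω.le
  have hi3 : Integrable (fun ω => (min ((θ + η * Y ω) / α) (Y ω)) ^ 2) P := by
    refine Integrable.mono' hY2int
      (((contR.measurable.comp hY).pow_const 2).aestronglyMeasurable) ?_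
    filter_upwards [hpos] with ω hω
    rw [Real.norm_eq_abs, abs_of_nonneg (sq_nonneg _)]
    have h1 := hRnn _ hω.le
    have h2 := hRle (Y ω)
    nlinarith
  rw [hlay]
  have e1 : ∫ ω, (θ * min ((θ + η * Y ω) / α) (Y ω)
        + η * (Y ω * min ((θ + η * Y ω) / α) (Y ω))
        - α / 2 * (min ((θ + η * Y ω) / α) (Y ω)) ^ 2
        + (α - η) * F (Y ω)) ∂P
      = θ * (∫ ω, min ((θ + η * Y ω) / α) (Y ω) ∂P)
        + η * (∫ ω, Y ω * min ((θ + η * Y ω) / α) (Y ω) ∂P)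
        - α / 2 * (∫ ω, (min ((θ + η * Y ω) / α) (Y ω)) ^ 2 ∂P)
        + (α - η) * (∫ ω, F (Y ω) ∂P) := by
    have hiA : Integrable (fun ω => θ * min ((θ + η * Y ω) / α) (Y ω)
        + η * (Y ω * min ((θ + η * Y ω) / α) (Y ω))) P :=
      (hi1.const_mul θ).add (hi2.const_mul η)
    have hiB : Integrable (fun ω => θ * min ((θ + η * Y ω) / α) (Y ω)
        + η * (Y ω * min ((θ + η * Y ω) / α) (Y ω))
        - α / 2 * (min ((θ + η * Y ω) / α) (Y ω)) ^ 2) P :=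
      hiA.sub (hi3.const_mul (α/2))
    rw [integral_add hiB (hFYint.const_mul (α - η)),
      integral_sub hiA (hi3.const_mul (α/2)),
      integral_add (hi1.const_mul θ) (hi2.const_mul η),
      integral_const_mul, integral_const_mul, integral_const_mul, integral_const_mul]
  have e2 : ∫ ω, (θ * min ((θ + η * Y ω) / α) (Y ω)
        + η * (Y ω * min ((θ + η * Y ω) / α) (Y ω))
        - α / 2 * (min ((θ + η * Y ω) / α) (Y ω)) ^ 2
        + (α - η) * F (Y ω)) ∂P
      = ∫ ω, (θ * Y ω + η / 2 * (Y ω) ^ 2) ∂P := by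
    apply integral_congr_ae
    filter_upwards [hpos] with ω hω
    exact key_ident θ η α hθ hη hα (Y ω) hω.le
  have e3 : ∫ ω, (θ * Y ω + η / 2 * (Y ω) ^ 2) ∂P
      = θ * (∫ ω, Y ω ∂P) + η / 2 * (∫ ω, (Y ω) ^ 2 ∂P) := by
    rw [integral_add (hYint.const_mul θ) (hY2int.const_mul (η/2)),
      integral_const_mul, integral_const_mul]
  rw [← e3, ← e2, e1]

set_option maxHeartbeats 1600000 in
theorem stmt_0
    {Ω : Type*} [MeasurableSpace Ω] (P : Measure Ω) [IsProbabilityMeasure P]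
    (Y : Ω → ℝ) (hYmeas : Measurable Y)
    (hYpos : P {ω | 0 < Y ω} = 1)
    (hfull : ∀ y : ℝ, 0 < y → 0 < P {ω | Y ω ≤ y} ∧ 0 < P {ω | y < Y ω})
    (μ σ2 : ℝ) (hμ : μ = ∫ ω, Y ω ∂P) (hσ2 : σ2 = ∫ ω, (Y ω) ^ 2 ∂P)
    (hYint : Integrable Y P) (hY2int : Integrable (fun ω => (Y ω) ^ 2) P)
    (hmgf : ∃ ε : ℝ, 0 < ε ∧ ∀ r : ℝ, |r| < ε →
      Integrable (fun ω => Real.exp (r * Y ω)) P)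
    (lam β θ η c κ : ℝ)
    (hlam : 0 < lam) (hβ : 0 < β) (hθ : 0 ≤ θ) (hη : 0 ≤ η) (hθη : 0 < θ + η)
    (hc1 : lam * μ < c) (hc2 : c < (1 + θ) * lam * μ + η / 2 * lam * σ2)
    (hκ : κ = (1 + θ) * lam * μ + η / 2 * lam * σ2 - c)
    (S : ℝ → ℝ) (hS : ∀ y, S y = (P {ω | y < Y ω}).toReal)
    (Rα : ℝ → ℝ → ℝ)
    (hRα : ∀ α y : ℝ, Rα α y = if α = 0 then y else min ((θ + η * y) / α) y)
    (g1 g2 g3 G : ℝ → ℝ)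
    (hg1 : ∀ α, g1 α = ∫ ω, Rα α (Y ω) ∂P)
    (hg2 : ∀ α, g2 α = ∫ ω, Y ω * Rα α (Y ω) ∂P)
    (hg3 : ∀ α, g3 α = ∫ ω, (Rα α (Y ω)) ^ 2 ∂P)
    (hG : ∀ α, G α = θ * g1 α + η * g2 α - α / 2 * g3 α
      - (β ^ 2 * (α - η) + 2 * κ) / (2 * lam)) :
    (∃! α : ℝ, η < α ∧
      c - lam * μ =
        (α - η) * (lam * (∫ y in Ioi (0 : ℝ), Rα α y * S y) + β ^ 2 / 2))
    ∧ G η = (c - lam * μ) / lam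
    ∧ 0 < G η
    ∧ StrictAntiOn G (Ioi η)
    ∧ Tendsto G atTop atBot
    ∧ ∀ α : ℝ, η < α →
        (G α = 0 ↔
          c - lam * μ =
            (α - η) * (lam * (∫ y in Ioi (0 : ℝ), Rα α y * S y) + β ^ 2 / 2)) := by
  have hms : MeasurableSet {ω | 0 < Y ω} := measurableSet_lt measurable_const hYmeas
  have hpos : ∀ᵐ ω ∂P, 0 < Y ω := by
    rw [ae_iff]
    have h : {a | ¬ 0 < Y a} = {ω | 0 < Y ω}ᶜ := rfl
    rw [h]
    exact (prob_compl_eq_zero_iff hms).2 hYpos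
  have hSfun : S = fun t => (P {ω | t < Y ω}).toReal := funext hS
  have hSnn : ∀ y, 0 ≤ S y := fun y => by rw [hS]; exact ENNReal.toReal_nonneg
  have hSm : Measurable S := by
    rw [hSfun]
    apply Antitone.measurable
    intro s t hst
    apply ENNReal.toReal_mono (measure_ne_top P _)
    exact measure_mono fun ω (h : t < Y ω) => lt_of_le_of_lt hst h
  have hRfun : ∀ α : ℝ, η < α → (Rα α = fun y => min ((θ + η * y) / α) y) := by
    intro α hα
    funext y
    rw [hRα, if_neg (lt_of_le_of_lt hη hα).ne']
  set J : ℝ → ℝ := fun α => ∫ y in Ioi (0:ℝ), Rα α y * S y with hJdef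
  set H : ℝ → ℝ := fun α => (α - η) * (lam * J α + β ^ 2 / 2) with hHdef
  have hmain : ∀ α : ℝ, η < α →
      (IntegrableOn (fun y => Rα α y * S y) (Ioi (0:ℝ)) volume ∧
       θ * g1 α + η * g2 α - α / 2 * g3 α + (α - η) * J α = θ * μ + η / 2 * σ2) := by
    intro α hα
    obtain ⟨h1, h2⟩ := main_ident P Y hYmeas hpos hYint hY2int θ η α hθ hη hα
    constructor
    · simpa only [hRfun α hα, hSfun] using h1
    · rw [hg1, hg2, hg3, hμ, hσ2]
      simp only [hJdef, hRfun α hα, hSfun]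
      exact h2
  have hJnn : ∀ α : ℝ, η < α → 0 ≤ J α := by
    intro α hα
    apply setIntegral_nonneg measurableSet_Ioi
    intro y hy
    apply mul_nonneg _ (hSnn y)
    rw [hRα, if_neg (lt_of_le_of_lt hη hα).ne']
    exact le_min (div_nonneg (by nlinarith [le_of_lt (mem_Ioi.1 hy)])
      (lt_of_le_of_lt hη hα).le) (le_of_lt (mem_Ioi.1 hy))
  -- the dominating integrable function (θ + η y + y) S y on (0,∞)
  have hprimval : ∀ y : ℝ, (∫ t in (0:ℝ)..y, (θ + η * t + t)) = θ * y + (η + 1) * (y ^ 2 / 2) := by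
    intro y
    have h : (fun t : ℝ => θ + η * t + t) = fun t : ℝ => θ + (η + 1) * t := by
      funext t; ring
    rw [h, intervalIntegral.integral_add intervalIntegrable_const
      ((continuous_mul_left _).intervalIntegrable _ _),
      intervalIntegral.integral_const, intervalIntegral.integral_const_mul, integral_id]
    simp only [smul_eq_mul]
    ring
  have hprim : Integrable (fun ω => ∫ t in (0:ℝ)..(Y ω), (θ + η * t + t)) P := by
    have h2 : Integrable (fun ω => θ * Y ω + (η + 1) * (Y ω ^ 2 / 2)) P :=
      (hYint.const_mul θ).add ((hY2int.div_const 2).const_mul (η + 1))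
    exact h2.congr (ae_of_all _ fun ω => (hprimval (Y ω)).symm)
  have hcontD : Continuous fun t : ℝ => θ + η * t + t :=
    (continuous_const.add (continuous_const.mul continuous_id)).add continuous_id
  obtain ⟨hDint, -⟩ := layer_aux P Y hYmeas hpos (fun t => θ + η * t + t) hcontD
    (fun t ht => by show (0:ℝ) ≤ θ + η * t + t; nlinarith) hprim
  have hDS : IntegrableOn (fun t => (θ + η * t + t) * S t) (Ioi (0:ℝ)) volume := by
    rw [hSfun]; exact hDint
  have hD1 : IntegrableOn (fun y => (θ + η * y) * S y) (Ioi (0:ℝ)) volume := by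
    refine Integrable.mono' hDS
      (((continuous_const.add (continuous_const.mul continuous_id)).measurable.mul
        hSm).aestronglyMeasurable) ?_
    refine (ae_restrict_iff' measurableSet_Ioi).2 (ae_of_all _ fun y hy => ?_)
    have hy0 : (0:ℝ) < y := mem_Ioi.1 hy
    rw [Real.norm_eq_abs, abs_of_nonneg (mul_nonneg (by nlinarith) (hSnn y))]
    nlinarith [mul_nonneg hy0.le (hSnn y)]
  have hySint : IntegrableOn (fun y => y * S y) (Ioi (0:ℝ)) volume := by
    refine Integrable.mono' hDS ((measurable_id.mul hSm).aestronglyMeasurable) ?_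
    refine (ae_restrict_iff' measurableSet_Ioi).2 (ae_of_all _ fun y hy => ?_)
    have hy0 : (0:ℝ) < y := mem_Ioi.1 hy
    rw [Real.norm_eq_abs, abs_of_nonneg (mul_nonneg hy0.le (hSnn y))]
    nlinarith [mul_nonneg (show (0:ℝ) ≤ θ + η * y by nlinarith) (hSnn y)]
  set M2 : ℝ := ∫ y in Ioi (0:ℝ), y * S y with hM2def
  have hM2nn : 0 ≤ M2 :=
    setIntegral_nonneg measurableSet_Ioi fun y hy =>
      mul_nonneg (le_of_lt (mem_Ioi.1 hy)) (hSnn y)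
  have hJleM2 : ∀ α : ℝ, η < α → J α ≤ M2 := by
    intro α hα
    apply setIntegral_mono_on (hmain α hα).1 hySint measurableSet_Ioi
    intro y hy
    rw [hRα, if_neg (lt_of_le_of_lt hη hα).ne']
    exact mul_le_mul_of_nonneg_right (min_le_right _ _) (hSnn y)
  have hGH : ∀ α : ℝ, η < α → G α = ((c - lam * μ) - H α) / lam := by
    intro α hα
    have hk := (hmain α hα).2
    have hHα : H α = (α - η) * (lam * J α + β ^ 2 / 2) := rfl
    rw [hG, hκ, hHα]
    field_simp
    linear_combination (2 * lam) * hk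
  -- strict monotonicity of H on (η, ∞)
  have hmono : StrictMonoOn H (Ioi η) := by
    intro a ha b hb hab
    have ha' : η < a := mem_Ioi.1 ha
    have hb' : η < b := mem_Ioi.1 hb
    have ha0 : 0 < a := lt_of_le_of_lt hη ha'
    have hb0 : 0 < b := lt_of_le_of_lt hη hb'
    have hJab : (a - η) * J a ≤ (b - η) * J b := by
      have e1 : (a - η) * J a = ∫ y in Ioi (0:ℝ), (a - η) * (Rα a y * S y) :=
        (integral_const_mul _ _).symm
      have e2 : (b - η) * J b = ∫ y in Ioi (0:ℝ), (b - η) * (Rα b y * S y) :=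
        (integral_const_mul _ _).symm
      rw [e1, e2]
      apply setIntegral_mono_on ((hmain a ha').1.const_mul _) ((hmain b hb').1.const_mul _)
        measurableSet_Ioi
      intro y hy
      have hy0 : (0:ℝ) < y := mem_Ioi.1 hy
      rw [hRα, hRα, if_neg ha0.ne', if_neg hb0.ne', ← mul_assoc, ← mul_assoc]
      apply mul_le_mul_of_nonneg_right _ (hSnn y)
      rw [mul_min_of_nonneg _ _ (sub_nonneg.2 ha'.le),
        mul_min_of_nonneg _ _ (sub_nonneg.2 hb'.le)]
      apply min_le_min
      · rw [← mul_div_assoc, ← mul_div_assoc, div_le_div_iff₀ ha0 hb0]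
        nlinarith [mul_nonneg (mul_nonneg hη (show (0:ℝ) ≤ θ + η * y by nlinarith))
          (sub_nonneg.2 hab.le)]
      · nlinarith
    show (a - η) * (lam * J a + β ^ 2 / 2) < (b - η) * (lam * J b + β ^ 2 / 2)
    have h1 := mul_le_mul_of_nonneg_left hJab hlam.le
    have h2 : (a - η) * (β ^ 2 / 2) < (b - η) * (β ^ 2 / 2) := by
      have hb2 : (0:ℝ) < β ^ 2 / 2 := by positivity
      exact mul_lt_mul_of_pos_right (by linarith) hb2
    have e1 : (a - η) * (lam * J a + β ^ 2 / 2)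
        = lam * ((a - η) * J a) + (a - η) * (β ^ 2 / 2) := by ring
    have e2 : (b - η) * (lam * J b + β ^ 2 / 2)
        = lam * ((b - η) * J b) + (b - η) * (β ^ 2 / 2) := by ring
    rw [e1, e2]
    linarith
  -- continuity of H on (η, ∞)
  have hHconAt : ∀ α₀ : ℝ, η < α₀ → ContinuousAt H α₀ := by
    intro α₀ hα₀
    have hα₀0 : 0 < α₀ := lt_of_le_of_lt hη hα₀
    set K : ℝ → ℝ := fun α => ∫ y in Ioi (0:ℝ), (α - η) * (min ((θ + η * y) / α) y * S y)
      with hKdef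
    have hKc : ContinuousAt K α₀ := by
      apply continuousAt_of_dominated (bound := fun y => (θ + η * y) * S y)
      · exact Eventually.of_forall fun α =>
          ((((((continuous_const.add (continuous_const.mul continuous_id)).div_const
            α).min continuous_id).measurable.mul hSm).const_mul _).aestronglyMeasurable)
      · filter_upwards [eventually_gt_nhds hα₀] with α hα
        refine (ae_restrict_iff' measurableSet_Ioi).2 (ae_of_all _ fun y hy => ?_)
        have hy0 : (0:ℝ) < y := mem_Ioi.1 hy
        have hα0 : 0 < α := lt_of_le_of_lt hη hα
        have hθηy : (0:ℝ) ≤ θ + η * y := by nlinarith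
        have hmnn : 0 ≤ min ((θ + η * y) / α) y := le_min (div_nonneg hθηy hα0.le) hy0.le
        have hmle : min ((θ + η * y) / α) y ≤ (θ + η * y) / α := min_le_left _ _
        rw [Real.norm_eq_abs,
          abs_of_nonneg (mul_nonneg (sub_nonneg.2 hα.le) (mul_nonneg hmnn (hSnn y)))]
        have h2 : (α - η) * ((θ + η * y) / α) ≤ θ + η * y := by
          rw [← mul_div_assoc, div_le_iff₀ hα0]
          nlinarith [mul_nonneg hη hθηy]
        have h1 : (α - η) * min ((θ + η * y) / α) y ≤ θ + η * y :=
          le_trans (mul_le_mul_of_nonneg_left hmle (sub_nonneg.2 hα.le)) h2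
        calc (α - η) * (min ((θ + η * y) / α) y * S y)
            = ((α - η) * min ((θ + η * y) / α) y) * S y := by ring
          _ ≤ (θ + η * y) * S y := mul_le_mul_of_nonneg_right h1 (hSnn y)
      · exact hD1
      · refine (ae_restrict_iff' measurableSet_Ioi).2 (ae_of_all _ fun y hy => ?_)
        exact ContinuousAt.mul (continuousAt_id.sub continuousAt_const)
          (ContinuousAt.mul
            (Filter.Tendsto.min (continuousAt_const.div continuousAt_id hα₀0.ne')
              continuousAt_const) continuousAt_const)
    have hHK : ∀ α : ℝ, η < α → H α = lam * K α + (α - η) * (β ^ 2 / 2) := by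
      intro α hα
      have hKα : K α = (α - η) * J α := by
        show (∫ y in Ioi (0:ℝ), (α - η) * (min ((θ + η * y) / α) y * S y)) = _
        rw [integral_const_mul]
        congr 1
        simp only [hJdef, hRfun α hα]
      show (α - η) * (lam * J α + β ^ 2 / 2) = _
      rw [hKα]; ring
    have hcont2 : ContinuousAt (fun α : ℝ => lam * K α + (α - η) * (β ^ 2 / 2)) α₀ :=
      (continuousAt_const.mul hKc).add
        ((continuousAt_id.sub continuousAt_const).mul continuousAt_const)
    apply hcont2.congr
    filter_upwards [eventually_gt_nhds hα₀] with α hα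
    exact (hHK α hα).symm
  -- bounds and the IVT
  have hc' : 0 < c - lam * μ := sub_pos.2 hc1
  have hHub : ∀ α : ℝ, η < α → H α ≤ (α - η) * (lam * M2 + β ^ 2 / 2) := by
    intro α hα
    show (α - η) * (lam * J α + β ^ 2 / 2) ≤ _
    apply mul_le_mul_of_nonneg_left _ (sub_nonneg.2 hα.le)
    nlinarith [mul_le_mul_of_nonneg_left (hJleM2 α hα) hlam.le]
  have hHlb : ∀ α : ℝ, η < α → (α - η) * (β ^ 2 / 2) ≤ H α := by
    intro α hα
    show _ ≤ (α - η) * (lam * J α + β ^ 2 / 2)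
    nlinarith [mul_nonneg hlam.le (hJnn α hα), sub_pos.2 hα]
  set C0 : ℝ := lam * M2 + β ^ 2 / 2 with hC0
  have hC0pos : 0 < C0 := by
    rw [hC0]
    have h1 : 0 ≤ lam * M2 := mul_nonneg hlam.le hM2nn
    have h2 : 0 < β ^ 2 / 2 := by positivity
    linarith
  set a1 : ℝ := η + min 1 ((c - lam * μ) / (2 * C0)) with ha1def
  have ha1η : η < a1 :=
    lt_add_of_pos_right η (lt_min one_pos (div_pos hc' (by linarith)))
  have hHa1 : H a1 < c - lam * μ := by
    have e1 : a1 - η = min 1 ((c - lam * μ) / (2 * C0)) := by rw [ha1def]; ring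
    calc H a1 ≤ (a1 - η) * C0 := hHub a1 ha1η
      _ ≤ ((c - lam * μ) / (2 * C0)) * C0 := by
          apply mul_le_mul_of_nonneg_right _ hC0pos.le
          rw [e1]; exact min_le_right _ _
      _ = (c - lam * μ) / 2 := by field_simp
      _ < c - lam * μ := by linarith
  set A : ℝ := η + 2 * (c - lam * μ) / β ^ 2 + 1 with hAdef
  have hA1 : a1 ≤ A := by
    have h1 : min 1 ((c - lam * μ) / (2 * C0)) ≤ 1 := min_le_left _ _
    have h2 : 0 ≤ 2 * (c - lam * μ) / β ^ 2 := by positivity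
    rw [ha1def, hAdef]; linarith
  have hAη : η < A := lt_of_lt_of_le ha1η hA1
  have hHA : c - lam * μ < H A := by
    have hAe : (A - η) * (β ^ 2 / 2) = (c - lam * μ) + β ^ 2 / 2 := by
      rw [hAdef]
      field_simp
      ring
    nlinarith [hHlb A hAη, pow_pos hβ 2]
  have hIcc : Icc a1 A ⊆ Ioi η := fun x hx => lt_of_lt_of_le ha1η hx.1
  have hHconOn : ContinuousOn H (Icc a1 A) := fun x hx =>
    (hHconAt x (hIcc hx)).continuousWithinAt
  obtain ⟨αstar, hαstarIcc, hαstarval⟩ :=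
    intermediate_value_Icc hA1 hHconOn ⟨hHa1.le, hHA.le⟩
  have hαstarη : η < αstar := hIcc hαstarIcc
  -- value of G at η
  have hRη : ∀ y : ℝ, Rα η y = y := by
    intro y
    rcases eq_or_lt_of_le hη with h0 | h0
    · rw [hRα, if_pos h0.symm]
    · rw [hRα, if_neg h0.ne']
      exact min_eq_right (by rw [le_div_iff₀ h0]; nlinarith)
  have hg1η : g1 η = μ := by rw [hg1, hμ]; simp only [hRη]
  have hg2η : g2 η = σ2 := by rw [hg2, hσ2]; simp only [hRη, sq]
  have hg3η : g3 η = σ2 := by rw [hg3, hσ2]; simp only [hRη]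
  have hGη : G η = (c - lam * μ) / lam := by
    rw [hG, hg1η, hg2η, hg3η, hκ]
    field_simp
    ring
  -- strict antitonicity of G
  have hanti : StrictAntiOn G (Ioi η) := by
    intro a ha b hb hab
    rw [hGH b (mem_Ioi.1 hb), hGH a (mem_Ioi.1 ha)]
    exact (div_lt_div_iff_of_pos_right hlam).2 (sub_lt_sub_left (hmono ha hb hab) _)
  -- tendsto atBot
  have htend : Tendsto G atTop atBot := by
    have hGle : ∀ᶠ α in atTop, G α ≤
        ((c - lam * μ) / lam + η * (β ^ 2 / 2) / lam) + -(β ^ 2 / 2 / lam * α) := by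
      filter_upwards [eventually_gt_atTop η] with α hα
      rw [hGH α hα]
      have h1 := hHlb α hα
      calc ((c - lam * μ) - H α) / lam
          ≤ ((c - lam * μ) - (α - η) * (β ^ 2 / 2)) / lam :=
            (div_le_div_iff_of_pos_right hlam).2 (by linarith)
        _ = ((c - lam * μ) / lam + η * (β ^ 2 / 2) / lam) + -(β ^ 2 / 2 / lam * α) := by
            field_simp
            ring
    have hmul : Tendsto (fun α : ℝ => β ^ 2 / 2 / lam * α) atTop atTop :=
      (tendsto_const_mul_atTop_of_pos (by positivity)).2 tendsto_id
    have hlin : Tendsto (fun α : ℝ =>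
        ((c - lam * μ) / lam + η * (β ^ 2 / 2) / lam) + -(β ^ 2 / 2 / lam * α)) atTop atBot :=
      tendsto_atBot_add_const_left _ _ (tendsto_neg_atTop_atBot.comp hmul)
    exact tendsto_atBot_mono' atTop hGle hlin
  -- assembly
  refine ⟨⟨αstar, ⟨hαstarη, hαstarval.symm⟩, ?_⟩, hGη, by rw [hGη]; exact div_pos hc' hlam,
    hanti, htend, ?_⟩
  · rintro α' ⟨hα'η, hα'val⟩
    have hval' : H α' = H αstar := by
      rw [hαstarval]
      exact hα'val.symm
    exact hmono.injOn (mem_Ioi.2 hα'η) (mem_Ioi.2 hαstarη) hval'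
  · intro α hα
    rw [hGH α hα, div_eq_zero_iff, or_iff_left hlam.ne', sub_eq_zero]
end

section
/- For every α > 0 and every retention function R, θ·E[R(Y)] + η·E[Y·R(Y)] − (α/2)·E[R(Y)²] ≤ θ·E[R_α(Y)] + η·E[Y·R_α(Y)] − (α/2)·E[R_α(Y)²], where R_α(y) = min((θ+ηy)/α, y); that is, among all retention functions, R_α maximizes the functional R ↦ E[θ·R(Y) + η·Y·R(Y) − (α/2)·R(Y)²]. -/
open MeasureTheory Filter Set

lemma key_quad (α c y r : ℝ) (hα : 0 < α) (hc : 0 ≤ c) (hr0 : 0 ≤ r) (hry : r ≤ y) :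
    c * r - α / 2 * r ^ 2 ≤ c * min (c / α) y - α / 2 * (min (c / α) y) ^ 2 := by
  rcases le_total (c / α) y with h | h
  · rw [min_eq_left h]
    have hc' : c = α * (c / α) := by field_simp
    nlinarith [sq_nonneg (c / α - r)]
  · rw [min_eq_right h]
    have h3 : α * y ≤ c := by
      rw [le_div_iff₀ hα] at h
      linarith
    nlinarith [mul_nonneg (sub_nonneg.2 hry) (sub_nonneg.2 h3),
      mul_nonneg hα.le (sq_nonneg (y - r))]

theorem stmt_1
    {Ω : Type*} [MeasurableSpace Ω] (P : Measure Ω) [IsProbabilityMeasure P]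
    (Y : Ω → ℝ) (hYmeas : Measurable Y)
    (hYpos : P {ω | 0 < Y ω} = 1)
    (hYint : Integrable Y P) (hY2int : Integrable (fun ω => (Y ω) ^ 2) P)
    (θ η : ℝ) (hθ : 0 ≤ θ) (hη : 0 ≤ η)
    (α : ℝ) (hα : 0 < α)
    (R : ℝ → ℝ) (hRmeas : Measurable R)
    (hR : ∀ y : ℝ, 0 ≤ y → 0 ≤ R y ∧ R y ≤ y) :
    θ * (∫ ω, R (Y ω) ∂P) + η * (∫ ω, Y ω * R (Y ω) ∂P)
        - α / 2 * (∫ ω, (R (Y ω)) ^ 2 ∂P)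
      ≤ θ * (∫ ω, min ((θ + η * Y ω) / α) (Y ω) ∂P)
        + η * (∫ ω, Y ω * min ((θ + η * Y ω) / α) (Y ω) ∂P)
        - α / 2 * (∫ ω, (min ((θ + η * Y ω) / α) (Y ω)) ^ 2 ∂P) := by
  set S : ℝ → ℝ := fun y => min ((θ + η * y) / α) y with hSdef
  have hSmeas : Measurable S :=
    ((measurable_const.add (measurable_const.mul measurable_id)).div_const α).min measurable_id
  have hae : ∀ᵐ ω ∂P, 0 < Y ω := by
    have hms : MeasurableSet {ω | 0 < Y ω} := hYmeas measurableSet_Ioi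
    have h0 : P {ω | 0 < Y ω}ᶜ = 0 := (prob_compl_eq_zero_iff hms).2 hYpos
    have heq : {ω | ¬ 0 < Y ω} = {ω | 0 < Y ω}ᶜ := by ext ω; simp
    rw [ae_iff, heq]
    exact h0
  have hS : ∀ y : ℝ, 0 < y → 0 ≤ S y ∧ S y ≤ y := fun y hy =>
    ⟨le_min (div_nonneg (add_nonneg hθ (mul_nonneg hη hy.le)) hα.le) hy.le,
      min_le_right _ _⟩
  -- integrability machinery
  have generic : ∀ (RR : ℝ → ℝ), Measurable RR → (∀ y : ℝ, 0 < y → 0 ≤ RR y ∧ RR y ≤ y) →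
      Integrable (fun ω => RR (Y ω)) P ∧ Integrable (fun ω => Y ω * RR (Y ω)) P ∧
        Integrable (fun ω => (RR (Y ω)) ^ 2) P := by
    intro RR hm hb
    have hsm : AEStronglyMeasurable (fun ω => RR (Y ω)) P :=
      (hm.comp hYmeas).aestronglyMeasurable
    have h1 : Integrable (fun ω => RR (Y ω)) P := by
      refine hYint.mono hsm (hae.mono fun ω hω => ?_)
      obtain ⟨h0, h1⟩ := hb (Y ω) hω
      rw [Real.norm_eq_abs, Real.norm_eq_abs, abs_of_nonneg h0, abs_of_pos hω]; exact h1
    refine ⟨h1, ?_, ?_⟩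
    · refine hY2int.mono (hYmeas.aestronglyMeasurable.mul hsm) (hae.mono fun ω hω => ?_)
      obtain ⟨h0, hle⟩ := hb (Y ω) hω
      rw [Real.norm_eq_abs, Real.norm_eq_abs, abs_of_nonneg (mul_nonneg hω.le h0), abs_of_nonneg (sq_nonneg _), sq]
      exact mul_le_mul_of_nonneg_left hle hω.le
    · refine hY2int.mono (hsm.pow 2) (hae.mono fun ω hω => ?_)
      obtain ⟨h0, hle⟩ := hb (Y ω) hω
      rw [Real.norm_eq_abs, Real.norm_eq_abs, abs_of_nonneg (sq_nonneg _), abs_of_nonneg (sq_nonneg _)]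
      exact pow_le_pow_left₀ h0 hle 2
  obtain ⟨hR1, hR2, hR3⟩ := generic R hRmeas (fun y hy => hR y hy.le)
  obtain ⟨hS1, hS2, hS3⟩ := generic S hSmeas hS
  have expand : ∀ (RR : ℝ → ℝ), Integrable (fun ω => RR (Y ω)) P →
      Integrable (fun ω => Y ω * RR (Y ω)) P → Integrable (fun ω => (RR (Y ω)) ^ 2) P →
      θ * (∫ ω, RR (Y ω) ∂P) + η * (∫ ω, Y ω * RR (Y ω) ∂P)
          - α / 2 * (∫ ω, (RR (Y ω)) ^ 2 ∂P)
        = ∫ ω, (θ * RR (Y ω) + η * (Y ω * RR (Y ω)) - α / 2 * (RR (Y ω)) ^ 2) ∂P := by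
    intro RR h1 h2 h3
    rw [← integral_const_mul θ, ← integral_const_mul η, ← integral_const_mul (α / 2),
      ← integral_add (h1.const_mul θ) (h2.const_mul η)]
    exact (integral_sub ((h1.const_mul θ).add (h2.const_mul η)) (h3.const_mul (α / 2))).symm
  rw [expand R hR1 hR2 hR3, expand S hS1 hS2 hS3]
  refine integral_mono_ae
    (((hR1.const_mul θ).add (hR2.const_mul η)).sub (hR3.const_mul _))
    (((hS1.const_mul θ).add (hS2.const_mul η)).sub (hS3.const_mul _))
    (hae.mono fun ω hω => ?_)
  obtain ⟨h0, h1⟩ := hR (Y ω) hω.le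
  have h := key_quad α (θ + η * Y ω) (Y ω) (R (Y ω)) hα
    (add_nonneg hθ (mul_nonneg hη hω.le)) h0 h1
  simp only [hSdef]
  nlinarith [h]
end

section
/- For every retention function R, ρ_D(R) ≤ α* − η, and the retention function R_D(y) = min((θ+ηy)/α*, y) attains this bound: ρ_D(R_D) = α* − η. In other words, R_D maximizes the diffusion-approximation adjustment coefficient and the maximum value equals α* − η. -/
open MeasureTheory Filter Set

private lemma integral_linear (c d a b : ℝ) :
    ∫ x in a..b, (c + d * x) = c * (b - a) + d * ((b ^ 2 - a ^ 2) / 2) := by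
  have h1 : IntervalIntegrable (fun x : ℝ => d * x) volume a b := by
    apply Continuous.intervalIntegrable; continuity
  rw [intervalIntegral.integral_add intervalIntegrable_const h1,
    intervalIntegral.integral_const, intervalIntegral.integral_const_mul, integral_id,
    smul_eq_mul]
  ring

/-- Pointwise optimality of the truncated-linear retention. -/
lemma retention_pointwise_max {θ η α y r : ℝ} (hθ : 0 ≤ θ) (hη : 0 ≤ η) (hα : 0 < α)
    (hy : 0 ≤ y) (hr0 : 0 ≤ r) (hry : r ≤ y) :
    θ * r + η * (y * r) - α / 2 * r ^ 2 ≤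
      θ * min ((θ + η * y) / α) y + η * (y * min ((θ + η * y) / α) y)
        - α / 2 * (min ((θ + η * y) / α) y) ^ 2 := by
  rcases min_cases ((θ + η * y) / α) y with ⟨hm, hle⟩ | ⟨hm, hlt⟩ <;> rw [hm]
  · have hcancel : α * ((θ + η * y) / α) = θ + η * y := mul_div_cancel₀ _ hα.ne'
    nlinarith [sq_nonneg (r - (θ + η * y) / α)]
  · have hfact : y * α ≤ θ + η * y := (le_div_iff₀ hα).mp hlt.le
    nlinarith [mul_nonneg (sub_nonneg.2 hry) (sub_nonneg.2 hfact),
      mul_nonneg hα.le (sq_nonneg (y - r))]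

/-- Explicit FTC identity for the candidate optimal retention. -/
lemma retention_integral_identity {θ η α : ℝ} (hθ : 0 ≤ θ) (hη : 0 ≤ η) (hα : η < α)
    {y : ℝ} (hy : 0 ≤ y) :
    θ * y + η / 2 * y ^ 2 -
        (θ * min ((θ + η * y) / α) y + η * (y * min ((θ + η * y) / α) y)
          - α / 2 * (min ((θ + η * y) / α) y) ^ 2)
      = (α - η) * ∫ t in (0:ℝ)..y, min ((θ + η * t) / α) t := by
  have hα0 : 0 < α := lt_of_le_of_lt hη hα
  have hαη : 0 < α - η := by linarith
  set t0 : ℝ := θ / (α - η) with ht0def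
  have ht0 : 0 ≤ t0 := div_nonneg hθ hαη.le
  have hmin_r : ∀ t : ℝ, t ≤ t0 → min ((θ + η * t) / α) t = t := by
    intro t ht
    have h1 : t * (α - η) ≤ θ := (le_div_iff₀ hαη).mp ht
    exact min_eq_right (by rw [le_div_iff₀ hα0]; nlinarith)
  have hmin_l : ∀ t : ℝ, t0 ≤ t → min ((θ + η * t) / α) t = (θ + η * t) / α := by
    intro t ht
    have h1 : θ ≤ t * (α - η) := (div_le_iff₀ hαη).mp ht
    exact min_eq_left (by rw [div_le_iff₀ hα0]; nlinarith)
  have hcont : Continuous fun t : ℝ => min ((θ + η * t) / α) t :=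
    (((continuous_const.add (continuous_const.mul continuous_id)).div_const _).min
      continuous_id)
  rcases le_or_gt y t0 with h | h
  · rw [intervalIntegral.integral_congr (g := fun t : ℝ => t)
      (fun t ht => by
        rw [uIcc_of_le hy] at ht
        exact hmin_r t (ht.2.trans h)),
      integral_id, hmin_r y h]
    ring
  · have hsplit : (∫ t in (0:ℝ)..y, min ((θ + η * t) / α) t)
        = (∫ t in (0:ℝ)..t0, min ((θ + η * t) / α) t)
          + ∫ t in t0..y, min ((θ + η * t) / α) t :=
      (intervalIntegral.integral_add_adjacent_intervals
        (hcont.intervalIntegrable _ _) (hcont.intervalIntegrable _ _)).symm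
    have h1 : (∫ t in (0:ℝ)..t0, min ((θ + η * t) / α) t) = (t0 ^ 2 - 0 ^ 2) / 2 := by
      rw [intervalIntegral.integral_congr (g := fun t : ℝ => t)
        (fun t ht => by
          rw [uIcc_of_le ht0] at ht
          exact hmin_r t ht.2),
        integral_id]
    have h2 : (∫ t in t0..y, min ((θ + η * t) / α) t)
        = (θ * (y - t0) + η * ((y ^ 2 - t0 ^ 2) / 2)) / α := by
      rw [intervalIntegral.integral_congr (g := fun t : ℝ => (θ + η * t) / α)
        (fun t ht => by
          rw [uIcc_of_le h.le] at ht
          exact hmin_l t ht.1)]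
      rw [intervalIntegral.integral_div, integral_linear]
    rw [hsplit, h1, h2, hmin_l y h.le, ht0def]
    field_simp
    ring
/-- Weighted layer-cake formula in Bochner form for a.e.-positive `Y`. -/
private lemma layercake_bochner {Ω : Type*} [MeasurableSpace Ω] (P : Measure Ω)
    [IsProbabilityMeasure P] (Y : Ω → ℝ) (hY : Measurable Y)
    (hpos : ∀ᵐ ω ∂P, 0 < Y ω) (hY2 : Integrable (fun ω => Y ω ^ 2) P)
    (RD : ℝ → ℝ) (hRD : Continuous RD) (hRD0 : ∀ t, 0 ≤ t → 0 ≤ RD t)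
    (hRDle : ∀ t, 0 ≤ t → RD t ≤ t) :
    ∫ ω, (∫ t in (0:ℝ)..Y ω, RD t) ∂P
      = ∫ t in Ioi (0:ℝ), RD t * (P {ω | t < Y ω}).toReal := by
  set G : ℝ → ℝ := fun y => ∫ t in (0:ℝ)..y, RD t with hGdef
  have hGcont : Continuous G :=
    intervalIntegral.continuous_primitive (fun a b => hRD.intervalIntegrable a b) 0
  have hGnn : ∀ y : ℝ, 0 ≤ y → 0 ≤ G y := fun y hy =>
    intervalIntegral.integral_nonneg hy (fun t ht => hRD0 t ht.1)
  have hGle : ∀ y : ℝ, 0 ≤ y → G y ≤ y ^ 2 / 2 := by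
    intro y hy
    have : G y ≤ ∫ t in (0:ℝ)..y, t :=
      intervalIntegral.integral_mono_on hy (hRD.intervalIntegrable _ _)
        (continuous_id.intervalIntegrable _ _) (fun t ht => hRDle t ht.1)
    rw [integral_id] at this
    nlinarith
  have hGY_int : Integrable (fun ω => G (Y ω)) P := by
    refine Integrable.mono' (hY2.div_const 2)
      ((hGcont.measurable.comp hY).aestronglyMeasurable) ?_
    filter_upwards [hpos] with ω hω
    rw [Real.norm_eq_abs, abs_of_nonneg (hGnn _ hω.le)]
    exact hGle _ hω.le
  have g_nn : ∀ᵐ t ∂(volume.restrict (Ioi (0:ℝ))), 0 ≤ RD t :=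
    ae_restrict_of_forall_mem measurableSet_Ioi (fun t ht => hRD0 t (le_of_lt ht))
  have key := lintegral_comp_eq_lintegral_meas_lt_mul P
    (hpos.mono fun ω h => h.le) hY.aemeasurable
    (fun t _ => hRD.intervalIntegrable 0 t) g_nn
  have hGYnn : 0 ≤ᵐ[P] fun ω => G (Y ω) := hpos.mono fun ω h => hGnn _ h.le
  rw [← ofReal_integral_eq_lintegral_ofReal hGY_int hGYnn] at key
  -- measurability of the survival function
  have meas_S : Measurable fun t : ℝ => (P {ω | t < Y ω}).toReal :=
    Measurable.ennreal_toReal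
      (Antitone.measurable fun s t hst => measure_mono fun ω h => lt_of_le_of_lt hst h)
  have hRHS : ∫⁻ t in Ioi (0:ℝ), P {a | t < Y a} * ENNReal.ofReal (RD t)
      = ∫⁻ t in Ioi (0:ℝ), ENNReal.ofReal (RD t * (P {ω | t < Y ω}).toReal) := by
    refine setLIntegral_congr_fun measurableSet_Ioi (fun t ht => ?_)
    conv_lhs => rw [← ENNReal.ofReal_toReal (measure_ne_top P _),
      ← ENNReal.ofReal_mul ENNReal.toReal_nonneg, mul_comm]
  rw [hRHS] at key
  have hfin : (∫⁻ t in Ioi (0:ℝ), ENNReal.ofReal (RD t * (P {ω | t < Y ω}).toReal)) < ⊤ := by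
    rw [← key]; exact ENNReal.ofReal_lt_top
  have hfnn : 0 ≤ᵐ[volume.restrict (Ioi (0:ℝ))]
      fun t => RD t * (P {ω | t < Y ω}).toReal :=
    ae_restrict_of_forall_mem measurableSet_Ioi
      (fun t ht => mul_nonneg (hRD0 t (le_of_lt ht)) ENNReal.toReal_nonneg)
  have hint : Integrable (fun t => RD t * (P {ω | t < Y ω}).toReal)
      (volume.restrict (Ioi (0:ℝ))) := by
    refine ⟨(hRD.measurable.mul meas_S).aestronglyMeasurable, ?_⟩
    rw [hasFiniteIntegral_iff_ofReal hfnn]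
    exact hfin
  rw [← ofReal_integral_eq_lintegral_ofReal hint hfnn] at key
  have h1 : 0 ≤ ∫ ω, G (Y ω) ∂P := integral_nonneg_of_ae hGYnn
  have h2 : 0 ≤ ∫ t in Ioi (0:ℝ), RD t * (P {ω | t < Y ω}).toReal :=
    integral_nonneg_of_ae hfnn
  exact (ENNReal.ofReal_eq_ofReal_iff h1 h2).mp key

private lemma integral_q {Ω : Type*} [MeasurableSpace Ω] (P : Measure Ω)
    (f g h : Ω → ℝ) (a b c : ℝ)
    (hf : Integrable f P) (hg : Integrable g P) (hh : Integrable h P) :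
    ∫ ω, (a * f ω + b * g ω - c * h ω) ∂P
      = a * (∫ ω, f ω ∂P) + b * (∫ ω, g ω ∂P) - c * (∫ ω, h ω ∂P) := by
  have h1 : Integrable (fun ω => a * f ω + b * g ω) P := (hf.const_mul a).add (hg.const_mul b)
  have h2 : Integrable (fun ω => a * f ω) P := hf.const_mul a
  have h3 : Integrable (fun ω => b * g ω) P := hg.const_mul b
  rw [integral_sub h1 (hh.const_mul c), integral_add h2 h3,
    integral_const_mul, integral_const_mul, integral_const_mul]

set_option maxHeartbeats 1000000 in
theorem stmt_2
    {Ω : Type*} [MeasurableSpace Ω] (P : Measure Ω) [IsProbabilityMeasure P]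
    (Y : Ω → ℝ) (hYmeas : Measurable Y)
    (hYpos : P {ω | 0 < Y ω} = 1)
    (hfull : ∀ y : ℝ, 0 < y → 0 < P {ω | Y ω ≤ y} ∧ 0 < P {ω | y < Y ω})
    (μ σ2 : ℝ) (hμ : μ = ∫ ω, Y ω ∂P) (hσ2 : σ2 = ∫ ω, (Y ω) ^ 2 ∂P)
    (hYint : Integrable Y P) (hY2int : Integrable (fun ω => (Y ω) ^ 2) P)
    (hmgf : ∃ ε : ℝ, 0 < ε ∧ ∀ r : ℝ, |r| < ε →
      Integrable (fun ω => Real.exp (r * Y ω)) P)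
    (lam β θ η c κ : ℝ)
    (hlam : 0 < lam) (hβ : 0 < β) (hθ : 0 ≤ θ) (hη : 0 ≤ η) (hθη : 0 < θ + η)
    (hc1 : lam * μ < c) (hc2 : c < (1 + θ) * lam * μ + η / 2 * lam * σ2)
    (hκ : κ = (1 + θ) * lam * μ + η / 2 * lam * σ2 - c)
    (S : ℝ → ℝ) (hS : ∀ y, S y = (P {ω | y < Y ω}).toReal)
    (ρD : (ℝ → ℝ) → ℝ)
    (hρD : ∀ R : ℝ → ℝ, ρD R =
      2 * (-κ + lam * (θ * (∫ ω, R (Y ω) ∂P) + η * (∫ ω, Y ω * R (Y ω) ∂P)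
            - η / 2 * (∫ ω, (R (Y ω)) ^ 2 ∂P)))
        / (lam * (∫ ω, (R (Y ω)) ^ 2 ∂P) + β ^ 2))
    (αs : ℝ) (hαs_gt : η < αs)
    (hαs_eq : c - lam * μ =
      (αs - η) * (lam * (∫ y in Ioi (0 : ℝ), min ((θ + η * y) / αs) y * S y) + β ^ 2 / 2))
    (hαs_uniq : ∀ α : ℝ, η < α →
      c - lam * μ =
        (α - η) * (lam * (∫ y in Ioi (0 : ℝ), min ((θ + η * y) / α) y * S y) + β ^ 2 / 2) →
      α = αs) :
    (∀ R : ℝ → ℝ, Measurable R → (∀ y : ℝ, 0 ≤ y → 0 ≤ R y ∧ R y ≤ y) →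
      ρD R ≤ αs - η)
    ∧ ρD (fun y => min ((θ + η * y) / αs) y) = αs - η := by
  have hαpos : 0 < αs := lt_of_le_of_lt hη hαs_gt
  set RD : ℝ → ℝ := fun y => min ((θ + η * y) / αs) y with hRDdef
  have hRDcont : Continuous RD :=
    ((continuous_const.add (continuous_const.mul continuous_id)).div_const _).min
      continuous_id
  have hRDmeas : Measurable RD := hRDcont.measurable
  have hRD0 : ∀ t : ℝ, 0 ≤ t → 0 ≤ RD t := fun t ht =>
    le_min (div_nonneg (by nlinarith) hαpos.le) ht
  have hRDle : ∀ t : ℝ, 0 ≤ t → RD t ≤ t := fun t _ => min_le_right _ _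
  have hae : ∀ᵐ ω ∂P, 0 < Y ω := by
    have hms : MeasurableSet {ω | 0 < Y ω} := measurableSet_lt measurable_const hYmeas
    rw [ae_iff]
    exact (prob_compl_eq_zero_iff hms).mpr hYpos
  -- integrability of the three relevant moments, for any retention function
  have intR : ∀ R : ℝ → ℝ, Measurable R → (∀ y : ℝ, 0 ≤ y → 0 ≤ R y ∧ R y ≤ y) →
      Integrable (fun ω => R (Y ω)) P ∧ Integrable (fun ω => Y ω * R (Y ω)) P ∧
        Integrable (fun ω => (R (Y ω)) ^ 2) P := by
    intro R hRm hRb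
    refine ⟨?_, ?_, ?_⟩
    · refine hYint.mono' ((hRm.comp hYmeas).aestronglyMeasurable) ?_
      filter_upwards [hae] with ω hω
      rw [Real.norm_eq_abs, abs_of_nonneg (hRb _ hω.le).1]
      exact (hRb _ hω.le).2
    · refine hY2int.mono' ((hYmeas.mul (hRm.comp hYmeas)).aestronglyMeasurable) ?_
      filter_upwards [hae] with ω hω
      have h1 := (hRb _ hω.le).1
      have h2 := (hRb _ hω.le).2
      rw [Real.norm_eq_abs, abs_of_nonneg (mul_nonneg hω.le h1)]
      nlinarith
    · refine hY2int.mono' (((hRm.comp hYmeas).pow_const 2).aestronglyMeasurable) ?_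
      filter_upwards [hae] with ω hω
      have h1 := (hRb _ hω.le).1
      have h2 := (hRb _ hω.le).2
      rw [Real.norm_eq_abs, abs_of_nonneg (sq_nonneg _)]
      nlinarith
  obtain ⟨iR1, iR2, iR3⟩ := intR RD hRDmeas (fun y hy => ⟨hRD0 y hy, hRDle y hy⟩)
  -- the layer-cake identity
  have hLC := layercake_bochner P Y hYmeas hae hY2int RD hRDcont hRD0 hRDle
  -- key integral identity
  have hE1 : (∫ ω, (θ * Y ω + η / 2 * Y ω ^ 2 -
        (θ * RD (Y ω) + η * (Y ω * RD (Y ω)) - αs / 2 * (RD (Y ω)) ^ 2)) ∂P)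
      = (αs - η) * ∫ y in Ioi (0 : ℝ), RD y * S y := by
    have hptw : ∀ᵐ ω ∂P, θ * Y ω + η / 2 * Y ω ^ 2 -
        (θ * RD (Y ω) + η * (Y ω * RD (Y ω)) - αs / 2 * (RD (Y ω)) ^ 2)
        = (αs - η) * ∫ t in (0:ℝ)..Y ω, RD t := by
      filter_upwards [hae] with ω hω
      exact retention_integral_identity hθ hη hαs_gt hω.le
    rw [integral_congr_ae hptw, integral_const_mul, hLC]
    congr 1
    refine setIntegral_congr_fun measurableSet_Ioi (fun y _ => ?_)
    rw [hS]
  have hE2 : (∫ ω, (θ * Y ω + η / 2 * Y ω ^ 2 -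
        (θ * RD (Y ω) + η * (Y ω * RD (Y ω)) - αs / 2 * (RD (Y ω)) ^ 2)) ∂P)
      = θ * μ + η / 2 * σ2 -
        (θ * (∫ ω, RD (Y ω) ∂P) + η * (∫ ω, Y ω * RD (Y ω) ∂P)
          - αs / 2 * (∫ ω, (RD (Y ω)) ^ 2 ∂P)) := by
    have k1 : Integrable (fun ω => θ * Y ω + η / 2 * Y ω ^ 2) P :=
      (hYint.const_mul θ).add (hY2int.const_mul (η / 2))
    have k2 : Integrable (fun ω =>
        θ * RD (Y ω) + η * (Y ω * RD (Y ω)) - αs / 2 * (RD (Y ω)) ^ 2) P :=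
      ((iR1.const_mul θ).add (iR2.const_mul η)).sub (iR3.const_mul (αs / 2))
    have k3 : Integrable (fun ω => θ * Y ω) P := hYint.const_mul θ
    have k4 : Integrable (fun ω => η / 2 * Y ω ^ 2) P := hY2int.const_mul (η / 2)
    rw [integral_sub k1 k2, integral_add k3 k4, integral_const_mul, integral_const_mul,
      integral_q P _ _ _ θ η (αs / 2) iR1 iR2 iR3, hμ, hσ2]
  have hcomb : θ * μ + η / 2 * σ2 -
        (θ * (∫ ω, RD (Y ω) ∂P) + η * (∫ ω, Y ω * RD (Y ω) ∂P)
          - αs / 2 * (∫ ω, (RD (Y ω)) ^ 2 ∂P))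
      = (αs - η) * ∫ y in Ioi (0 : ℝ), RD y * S y := hE2 ▸ hE1
  have hαs_eq' : c - lam * μ =
      (αs - η) * (lam * (∫ y in Ioi (0 : ℝ), RD y * S y) + β ^ 2 / 2) := hαs_eq
  have KE : -κ + lam * (θ * (∫ ω, RD (Y ω) ∂P) + η * (∫ ω, Y ω * RD (Y ω) ∂P)
        - αs / 2 * (∫ ω, (RD (Y ω)) ^ 2 ∂P)) = (αs - η) * β ^ 2 / 2 := by
    linear_combination -hκ + hαs_eq' - lam * hcomb
  constructor
  · -- the upper bound for an arbitrary retention function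
    intro R hRm hRb
    obtain ⟨j1, j2, j3⟩ := intR R hRm hRb
    have hmono : (∫ ω, (θ * R (Y ω) + η * (Y ω * R (Y ω)) - αs / 2 * (R (Y ω)) ^ 2) ∂P)
        ≤ ∫ ω, (θ * RD (Y ω) + η * (Y ω * RD (Y ω)) - αs / 2 * (RD (Y ω)) ^ 2) ∂P := by
      have k1 : Integrable (fun ω =>
          θ * R (Y ω) + η * (Y ω * R (Y ω)) - αs / 2 * (R (Y ω)) ^ 2) P :=
        ((j1.const_mul θ).add (j2.const_mul η)).sub (j3.const_mul (αs / 2))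
      have k2 : Integrable (fun ω =>
          θ * RD (Y ω) + η * (Y ω * RD (Y ω)) - αs / 2 * (RD (Y ω)) ^ 2) P :=
        ((iR1.const_mul θ).add (iR2.const_mul η)).sub (iR3.const_mul (αs / 2))
      refine integral_mono_ae k1 k2 ?_
      filter_upwards [hae] with ω hω
      exact retention_pointwise_max hθ hη hαpos hω.le (hRb _ hω.le).1 (hRb _ hω.le).2
    rw [integral_q P _ _ _ θ η (αs / 2) j1 j2 j3,
      integral_q P _ _ _ θ η (αs / 2) iR1 iR2 iR3] at hmono
    have hCRnn : (0:ℝ) ≤ ∫ ω, (R (Y ω)) ^ 2 ∂P := integral_nonneg fun ω => sq_nonneg _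
    have hD : (0:ℝ) < lam * (∫ ω, (R (Y ω)) ^ 2 ∂P) + β ^ 2 := by nlinarith
    rw [hρD R, div_le_iff₀ hD]
    nlinarith [KE, mul_le_mul_of_nonneg_left hmono hlam.le]
  · -- equality for the optimal retention function
    have hD : (0:ℝ) < lam * (∫ ω, (RD (Y ω)) ^ 2 ∂P) + β ^ 2 := by
      have : (0:ℝ) ≤ ∫ ω, (RD (Y ω)) ^ 2 ∂P := integral_nonneg fun ω => sq_nonneg _
      nlinarith
    rw [hρD RD, div_eq_iff hD.ne']
    linear_combination 2 * KE
end

section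
/- Suppose η = 0 and θ > 0, so λμ < c < (1+θ)λμ. Then there exists a unique α* > 0 satisfying (1+θ)λμ − c + (β²/2)·α* = λ·∫₀^{θ/α*} (θ − α* y)·S_Y(y) dy, and the retention function R*(y) = min(θ/α*, y) (excess-of-loss with constant deductible θ/α*) maximizes the diffusion-approximation adjustment coefficient: for every retention function R, ρ_D(R) ≤ ρ_D(R*) = α*. -/
open MeasureTheory Filter Set

open ENNReal

set_option linter.unusedSectionVars false

namespace Stmt4Aux

variable {Ω : Type*} [MeasurableSpace Ω] (P : Measure Ω) [IsProbabilityMeasure P] (Y : Ω → ℝ)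

lemma tail_anti : Antitone (fun t => (P {ω | t < Y ω}).toReal) := by
  intro s t hst
  exact ENNReal.toReal_mono (measure_ne_top _ _)
    (measure_mono (fun ω h => lt_of_le_of_lt hst h))

lemma tail_meas : Measurable (fun t => (P {ω | t < Y ω}).toReal) :=
  (tail_anti P Y).measurable

lemma tail_le_one : ∀ t, (P {ω | t < Y ω}).toReal ≤ 1 := by
  intro t
  have := prob_le_one (μ := P) (s := {ω | t < Y ω})
  simpa using ENNReal.toReal_mono (by simp) this

lemma tail_nonneg : ∀ t, 0 ≤ (P {ω | t < Y ω}).toReal := fun _ => ENNReal.toReal_nonneg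

variable {Y}

lemma tail_integrableOn (hY : Measurable Y) (hnn : 0 ≤ᵐ[P] Y) (hint : Integrable Y P) :
    IntegrableOn (fun t => (P {ω | t < Y ω}).toReal) (Ioi 0) volume := by
  refine ⟨((tail_meas P Y).aestronglyMeasurable).restrict, ?_⟩
  have key := lintegral_eq_lintegral_meas_lt P hnn hY.aemeasurable
  have fin : ∫⁻ ω, ENNReal.ofReal (Y ω) ∂P < ⊤ := hint.lintegral_lt_top
  rw [hasFiniteIntegral_iff_ofReal (Eventually.of_forall (fun t => ENNReal.toReal_nonneg))]
  calc ∫⁻ t in Ioi 0, ENNReal.ofReal ((P {ω | t < Y ω}).toReal)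
      = ∫⁻ t in Ioi 0, P {ω | t < Y ω} :=
        lintegral_congr (fun t => ENNReal.ofReal_toReal (measure_ne_top _ _))
    _ < ⊤ := by rw [← key]; exact fin


lemma ae_ne_real (m : ℝ) : ∀ᵐ t : ℝ ∂volume, t ≠ m := by
  have h0 : volume ({m} : Set ℝ) = 0 := Real.volume_singleton
  have := (measure_eq_zero_iff_ae_notMem (μ := volume) (s := ({m} : Set ℝ))).mp h0
  filter_upwards [this] with t ht
  simpa using ht

lemma integral_min (m : ℝ) (hm : 0 < m) (hY : Measurable Y) (hpos : ∀ᵐ ω ∂P, 0 < Y ω) :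
    ∫ ω, min m (Y ω) ∂P = ∫ t in Ioc 0 m, (P {ω | t < Y ω}).toReal := by
  have hfm : Measurable fun ω => min m (Y ω) := measurable_const.min hY
  have hfint : Integrable (fun ω => min m (Y ω)) P := by
    refine (integrable_const m).mono' hfm.aestronglyMeasurable ?_
    filter_upwards [hpos] with ω hω
    rw [Real.norm_of_nonneg (le_min hm.le hω.le)]
    exact min_le_left _ _
  have hfnn : 0 ≤ᵐ[P] fun ω => min m (Y ω) := by
    filter_upwards [hpos] with ω hω; exact le_min hm.le hω.le
  rw [hfint.integral_eq_integral_meas_lt hfnn]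
  rw [setIntegral_eq_of_subset_of_ae_diff_eq_zero measurableSet_Ioi.nullMeasurableSet
    Ioc_subset_Ioi_self ?_]
  · refine setIntegral_congr_ae measurableSet_Ioc ?_
    filter_upwards [ae_ne_real m] with t htm ht
    have htlt : t < m := lt_of_le_of_ne ht.2 htm
    congr 1
    ext ω
    simp only [mem_setOf_eq, lt_min_iff]
    exact ⟨fun h => h.2, fun h => ⟨htlt, h⟩⟩
  · refine Eventually.of_forall (fun t ht => ?_)
    rcases ht with ⟨h1, h2⟩
    have htm : m < t := by
      by_contra hc
      exact h2 ⟨h1, not_lt.mp hc⟩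
    have hempty : {ω | t < min m (Y ω)} = (∅ : Set Ω) := by
      ext ω
      simp only [mem_setOf_eq, mem_empty_iff_false, iff_false, not_lt]
      exact le_trans (min_le_left _ _) htm.le
    rw [hempty]
    simp

lemma integral_min_sq (m : ℝ) (hm : 0 < m) (hY : Measurable Y) (hpos : ∀ᵐ ω ∂P, 0 < Y ω) :
    ∫ ω, (min m (Y ω)) ^ 2 ∂P = ∫ t in Ioc 0 m, 2 * t * (P {ω | t < Y ω}).toReal := by
  set T : ℝ → ℝ := fun t => (P {ω | t < min m (Y ω)}).toReal with hT
  have hfm : Measurable fun ω => min m (Y ω) := measurable_const.min hY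
  have hgint : Integrable (fun ω => (min m (Y ω)) ^ 2) P := by
    refine (integrable_const (m ^ 2)).mono' (hfm.pow_const 2).aestronglyMeasurable ?_
    filter_upwards [hpos] with ω hω
    rw [Real.norm_of_nonneg (sq_nonneg _)]
    exact pow_le_pow_left₀ (le_min hm.le hω.le) (min_le_left _ _) 2
  have hgnn : 0 ≤ᵐ[P] fun ω => (min m (Y ω)) ^ 2 :=
    Eventually.of_forall (fun ω => sq_nonneg _)
  rw [hgint.integral_eq_integral_meas_lt hgnn]
  -- step 1 : rewrite integrand on Ioi 0 as T ∘ sqrt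
  have hstep1 : ∫ t in Ioi (0:ℝ), (P {ω | t < (min m (Y ω)) ^ 2}).toReal
      = ∫ t in Ioi (0:ℝ), T (Real.sqrt t) := by
    refine setIntegral_congr_fun measurableSet_Ioi (fun t ht => ?_)
    have ht' : (0:ℝ) < t := ht
    congr 1
    apply measure_congr
    rw [eventuallyEq_set]
    filter_upwards [hpos] with ω hω
    have hx : 0 < min m (Y ω) := lt_min hm hω
    exact (Real.sqrt_lt' hx).symm
  refine Eq.trans hstep1 ?_
  -- step 2 : change of variables t = x ^ 2
  have himg : (fun x : ℝ => x ^ 2) '' (Ioi 0) = Ioi 0 := by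
    ext y
    simp only [mem_image, mem_Ioi]
    constructor
    · rintro ⟨x, hx, rfl⟩; positivity
    · intro hy; exact ⟨Real.sqrt y, Real.sqrt_pos.2 hy, Real.sq_sqrt hy.le⟩
  have hinj : InjOn (fun x : ℝ => x ^ 2) (Ioi 0) := by
    intro a ha b hb h
    have ha' : (0:ℝ) < a := ha
    have hb' : (0:ℝ) < b := hb
    have h' : a ^ 2 = b ^ 2 := h
    nlinarith [sq_nonneg (a - b), sq_nonneg (a + b)]
  have hderiv : ∀ x ∈ Ioi (0:ℝ), HasDerivWithinAt (fun x : ℝ => x ^ 2) (2 * x) (Ioi 0) x := by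
    intro x _
    simpa using (hasDerivAt_pow 2 x).hasDerivWithinAt
  have hcv := integral_image_eq_integral_abs_deriv_smul measurableSet_Ioi hderiv hinj
    (fun t => T (Real.sqrt t))
  rw [himg] at hcv
  rw [hcv]
  -- step 3 : simplify
  have hstep3 : ∫ x in Ioi (0:ℝ), |2 * x| • T (Real.sqrt (x ^ 2))
      = ∫ x in Ioi (0:ℝ), 2 * x * T x := by
    refine setIntegral_congr_fun measurableSet_Ioi (fun x hx => ?_)
    have hx' : (0:ℝ) < x := hx
    rw [Real.sqrt_sq hx'.le, abs_of_nonneg (by linarith : (0:ℝ) ≤ 2 * x), smul_eq_mul]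
  rw [hstep3]
  -- step 4 : restrict to Ioc 0 m and replace T by the tail of Y
  rw [setIntegral_eq_of_subset_of_ae_diff_eq_zero measurableSet_Ioi.nullMeasurableSet
    Ioc_subset_Ioi_self ?_]
  · refine setIntegral_congr_ae measurableSet_Ioc ?_
    filter_upwards [ae_ne_real m] with t htm ht
    have htlt : t < m := lt_of_le_of_ne ht.2 htm
    have : T t = (P {ω | t < Y ω}).toReal := by
      show (P {ω | t < min m (Y ω)}).toReal = (P {ω | t < Y ω}).toReal
      congr 1
      apply measure_congr
      rw [eventuallyEq_set]
      refine Eventually.of_forall (fun ω => ?_)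
      simp only [mem_setOf_eq, lt_min_iff]
      exact ⟨fun h => h.2, fun h => ⟨htlt, h⟩⟩
    rw [this]
  · refine Eventually.of_forall (fun t ht => ?_)
    rcases ht with ⟨h1, h2⟩
    have htm : m < t := by
      by_contra hc
      exact h2 ⟨h1, not_lt.mp hc⟩
    have hempty : {ω | t < min m (Y ω)} = (∅ : Set Ω) := by
      ext ω
      simp only [mem_setOf_eq, mem_empty_iff_false, iff_false, not_lt]
      exact le_trans (min_le_left _ _) htm.le
    have hT0 : T t = 0 := by
      show (P {ω | t < min m (Y ω)}).toReal = 0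
      rw [hempty]; simp
    rw [hT0, mul_zero]

end Stmt4Aux


theorem stmt_4
    {Ω : Type*} [MeasurableSpace Ω] (P : Measure Ω) [IsProbabilityMeasure P]
    (Y : Ω → ℝ) (hYmeas : Measurable Y)
    (hYpos : P {ω | 0 < Y ω} = 1)
    (hfull : ∀ y : ℝ, 0 < y → 0 < P {ω | Y ω ≤ y} ∧ 0 < P {ω | y < Y ω})
    (μ σ2 : ℝ) (hμ : μ = ∫ ω, Y ω ∂P) (hσ2 : σ2 = ∫ ω, (Y ω) ^ 2 ∂P)
    (hYint : Integrable Y P) (hY2int : Integrable (fun ω => (Y ω) ^ 2) P)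
    (hmgf : ∃ ε : ℝ, 0 < ε ∧ ∀ r : ℝ, |r| < ε →
      Integrable (fun ω => Real.exp (r * Y ω)) P)
    (lam β θ c κ : ℝ)
    (hlam : 0 < lam) (hβ : 0 < β) (hθ : 0 < θ)
    (hc1 : lam * μ < c) (hc2 : c < (1 + θ) * lam * μ)
    (hκ : κ = (1 + θ) * lam * μ - c)
    (S : ℝ → ℝ) (hS : ∀ y, S y = (P {ω | y < Y ω}).toReal)
    (ρD : (ℝ → ℝ) → ℝ)
    (hρD : ∀ R : ℝ → ℝ, ρD R =
      2 * (-κ + lam * θ * (∫ ω, R (Y ω) ∂P))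
        / (lam * (∫ ω, (R (Y ω)) ^ 2 ∂P) + β ^ 2)) :
    (∃! α : ℝ, 0 < α ∧
      (1 + θ) * lam * μ - c + β ^ 2 / 2 * α =
        lam * ∫ y in (0 : ℝ)..(θ / α), (θ - α * y) * S y)
    ∧ ∀ α : ℝ, 0 < α →
        (1 + θ) * lam * μ - c + β ^ 2 / 2 * α =
          lam * ∫ y in (0 : ℝ)..(θ / α), (θ - α * y) * S y →
        (∀ R : ℝ → ℝ, Measurable R → (∀ y : ℝ, 0 ≤ y → 0 ≤ R y ∧ R y ≤ y) →
          ρD R ≤ ρD (fun y => min (θ / α) y))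
        ∧ ρD (fun y => min (θ / α) y) = α := by
  -- basic facts
  have haeY : ∀ᵐ ω ∂P, 0 < Y ω := by
    rw [ae_iff]
    have hms : MeasurableSet {ω | 0 < Y ω} := measurableSet_lt measurable_const hYmeas
    have hcm : {ω | ¬ 0 < Y ω} = {ω | 0 < Y ω}ᶜ := rfl
    rw [hcm, measure_compl hms (measure_ne_top _ _), hYpos, measure_univ, tsub_self]
  have hSfun : S = fun t => (P {ω | t < Y ω}).toReal := funext hS
  have hSmeasfun : Measurable S := by rw [hSfun]; exact Stmt4Aux.tail_meas P Y
  have hSnn : ∀ t, 0 ≤ S t := fun t => by rw [hS t]; exact ENNReal.toReal_nonneg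
  have hSle1 : ∀ t, S t ≤ 1 := fun t => by rw [hS t]; exact Stmt4Aux.tail_le_one P Y t
  have hStail : IntegrableOn S (Ioi 0) volume := by
    rw [hSfun]; exact Stmt4Aux.tail_integrableOn P hYmeas (haeY.mono fun ω h => h.le) hYint
  have hμint : μ = ∫ t in Ioi (0:ℝ), S t := by
    rw [hμ, hYint.integral_eq_integral_meas_lt (haeY.mono fun ω h => h.le)]
    exact setIntegral_congr_fun measurableSet_Ioi fun t _ => (hS t).symm
  -- the optimality part
  have hopt : ∀ α : ℝ, 0 < α →
        (1 + θ) * lam * μ - c + β ^ 2 / 2 * α =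
          lam * ∫ y in (0 : ℝ)..(θ / α), (θ - α * y) * S y →
        (∀ R : ℝ → ℝ, Measurable R → (∀ y : ℝ, 0 ≤ y → 0 ≤ R y ∧ R y ≤ y) →
          ρD R ≤ ρD (fun y => min (θ / α) y))
        ∧ ρD (fun y => min (θ / α) y) = α := by
    intro α hα heq
    obtain ⟨m, hmdef⟩ : ∃ m : ℝ, m = θ / α := ⟨_, rfl⟩
    rw [← hmdef] at heq ⊢
    have hm : 0 < m := hmdef ▸ div_pos hθ hα
    have hαm : α * m = θ := by rw [hmdef]; field_simp
    have hAeq : ∫ ω, min m (Y ω) ∂P = ∫ t in Ioc (0:ℝ) m, S t := by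
      rw [Stmt4Aux.integral_min P m hm hYmeas haeY]
      exact setIntegral_congr_fun measurableSet_Ioc fun t _ => (hS t).symm
    have hBeq : ∫ ω, (min m (Y ω)) ^ 2 ∂P = ∫ t in Ioc (0:ℝ) m, 2 * t * S t := by
      rw [Stmt4Aux.integral_min_sq P m hm hYmeas haeY]
      exact setIntegral_congr_fun measurableSet_Ioc fun t _ => by rw [hS t]
    obtain ⟨A, hAdef⟩ : ∃ A : ℝ, A = ∫ t in Ioc (0:ℝ) m, S t := ⟨_, rfl⟩
    obtain ⟨B, hBdef⟩ : ∃ B : ℝ, B = ∫ t in Ioc (0:ℝ) m, 2 * t * S t := ⟨_, rfl⟩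
    rw [← hAdef] at hAeq
    rw [← hBdef] at hBeq
    have hSIoc : IntegrableOn S (Ioc 0 m) volume := hStail.mono_set Ioc_subset_Ioi_self
    have htSIoc : IntegrableOn (fun t => 2 * t * S t) (Ioc 0 m) volume := by
      refine (integrable_const (2 * m)).mono'
        (((measurable_const.mul measurable_id).mul hSmeasfun).aestronglyMeasurable).restrict ?_
      rw [ae_restrict_iff' measurableSet_Ioc]
      refine Eventually.of_forall (fun t ht => ?_)
      have h1 : (0:ℝ) ≤ 2 * t := by linarith [ht.1]
      rw [Real.norm_of_nonneg (mul_nonneg h1 (hSnn t))]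
      have h2 : (2 * t) * S t ≤ (2 * t) * 1 := mul_le_mul_of_nonneg_left (hSle1 t) h1
      linarith [ht.2]
    have heqAB : (1 + θ) * lam * μ - c + β ^ 2 / 2 * α = lam * (θ * A - α / 2 * B) := by
      rw [heq]
      congr 1
      rw [intervalIntegral.integral_of_le hm.le]
      have h1 : ∀ y ∈ Ioc (0:ℝ) m, (θ - α * y) * S y = θ * S y - α / 2 * (2 * y * S y) :=
        fun y _ => by ring
      rw [setIntegral_congr_fun measurableSet_Ioc h1,
        integral_sub (hSIoc.const_mul θ) (htSIoc.const_mul (α / 2)),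
        integral_const_mul, integral_const_mul, ← hAdef, ← hBdef]
    have hAnn : 0 ≤ A := hAdef ▸ setIntegral_nonneg measurableSet_Ioc (fun t _ => hSnn t)
    have hBnn : 0 ≤ B := hBdef ▸ setIntegral_nonneg measurableSet_Ioc
        (fun t ht => mul_nonneg (by linarith [ht.1]) (hSnn t))
    -- integrability for retention functions
    have hints : ∀ R : ℝ → ℝ, Measurable R → (∀ y : ℝ, 0 ≤ y → 0 ≤ R y ∧ R y ≤ y) →
        Integrable (fun ω => R (Y ω)) P ∧ Integrable (fun ω => (R (Y ω)) ^ 2) P := by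
      intro R hRm hRp
      constructor
      · refine hYint.mono (hRm.comp hYmeas).aestronglyMeasurable ?_
        filter_upwards [haeY] with ω hω
        rcases hRp _ hω.le with ⟨h0, h1⟩
        rw [Real.norm_of_nonneg h0, Real.norm_of_nonneg hω.le]
        exact h1
      · refine hY2int.mono ((hRm.comp hYmeas).pow_const 2).aestronglyMeasurable ?_
        filter_upwards [haeY] with ω hω
        rcases hRp _ hω.le with ⟨h0, h1⟩
        rw [Real.norm_of_nonneg (sq_nonneg _), Real.norm_of_nonneg (sq_nonneg _)]
        exact pow_le_pow_left₀ h0 h1 2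
    have hRstarm : Measurable (fun y : ℝ => min m y) := measurable_const.min measurable_id
    have hRstarp : ∀ y : ℝ, 0 ≤ y → 0 ≤ min m y ∧ min m y ≤ y :=
      fun y hy => ⟨le_min hm.le hy, min_le_right _ _⟩
    obtain ⟨hi1s, hi2s⟩ := hints _ hRstarm hRstarp
    have hDstar : 0 < lam * (∫ ω, (min m (Y ω)) ^ 2 ∂P) + β ^ 2 :=
      add_pos_of_nonneg_of_pos
        (mul_nonneg hlam.le (integral_nonneg fun ω => sq_nonneg _)) (pow_pos hβ 2)
    have hstar_val : ρD (fun y => min m y) = α := by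
      simp only [hρD]
      rw [div_eq_iff hDstar.ne', hκ, hAeq, hBeq]
      linarith [heqAB]
    refine ⟨?_, hstar_val⟩
    intro R hRm hRp
    obtain ⟨hint1, hint2⟩ := hints R hRm hRp
    have hptw : (fun ω => 2 * θ * (R (Y ω)) - α * (R (Y ω)) ^ 2) ≤ᵐ[P]
        (fun ω => 2 * θ * (min m (Y ω)) - α * (min m (Y ω)) ^ 2) := by
      filter_upwards [haeY] with ω hω
      rcases hRp _ hω.le with ⟨h0, h1⟩
      rcases le_total m (Y ω) with hmy | hym
      · rw [min_eq_left hmy, ← hαm]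
        have e : (2 * (α * m) * m - α * m ^ 2) - (2 * (α * m) * R (Y ω) - α * R (Y ω) ^ 2)
            = α * (R (Y ω) - m) ^ 2 := by ring
        linarith [mul_nonneg hα.le (sq_nonneg (R (Y ω) - m)), e]
      · rw [min_eq_right hym]
        have hαy : α * Y ω ≤ θ := by
          calc α * Y ω ≤ α * m := mul_le_mul_of_nonneg_left hym hα.le
            _ = θ := hαm
        have hαr : α * R (Y ω) ≤ θ :=
          le_trans (mul_le_mul_of_nonneg_left h1 hα.le) hαy
        have hprod : 0 ≤ (Y ω - R (Y ω)) * (2 * θ - α * (Y ω + R (Y ω))) :=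
          mul_nonneg (sub_nonneg.2 h1) (by linarith)
        have e : (Y ω - R (Y ω)) * (2 * θ - α * (Y ω + R (Y ω)))
            = (2 * θ * Y ω - α * Y ω ^ 2) - (2 * θ * R (Y ω) - α * R (Y ω) ^ 2) := by ring
        linarith [hprod, e]
    have hfint' : Integrable (fun ω => 2 * θ * (R (Y ω)) - α * (R (Y ω)) ^ 2) P :=
      (hint1.const_mul (2 * θ)).sub (hint2.const_mul α)
    have hgint' : Integrable (fun ω => 2 * θ * (min m (Y ω)) - α * (min m (Y ω)) ^ 2) P :=
      (hi1s.const_mul (2 * θ)).sub (hi2s.const_mul α)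
    have hcomp : 2 * θ * (∫ ω, R (Y ω) ∂P) - α * (∫ ω, (R (Y ω)) ^ 2 ∂P)
        ≤ 2 * θ * A - α * B := by
      have hii := integral_mono_ae hfint' hgint' hptw
      rw [integral_sub (hint1.const_mul (2 * θ)) (hint2.const_mul α),
        integral_sub (hi1s.const_mul (2 * θ)) (hi2s.const_mul α),
        integral_const_mul, integral_const_mul, integral_const_mul, integral_const_mul,
        hAeq, hBeq] at hii
      exact hii
    have hD : 0 < lam * (∫ ω, (R (Y ω)) ^ 2 ∂P) + β ^ 2 :=
      add_pos_of_nonneg_of_pos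
        (mul_nonneg hlam.le (integral_nonneg fun ω => sq_nonneg _)) (pow_pos hβ 2)
    rw [hstar_val, hρD, div_le_iff₀ hD, hκ]
    linarith [mul_le_mul_of_nonneg_left hcomp hlam.le, heqAB]
  refine ⟨?_, hopt⟩
  -- existence and uniqueness
  have hgmeas : ∀ a : ℝ, Measurable (fun y => max (θ - a * y) 0 * S y) := fun a =>
    ((measurable_const.sub (measurable_id.const_mul a)).max measurable_const).mul hSmeasfun
  have hgbound : ∀ a : ℝ, 0 ≤ a → ∀ y ∈ Ioi (0:ℝ), ‖max (θ - a * y) 0 * S y‖ ≤ θ * S y := by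
    intro a ha y hy
    have h1 : 0 ≤ max (θ - a * y) 0 := le_max_right _ _
    rw [Real.norm_of_nonneg (mul_nonneg h1 (hSnn y))]
    refine mul_le_mul_of_nonneg_right (max_le ?_ hθ.le) (hSnn y)
    have : 0 ≤ a * y := mul_nonneg ha (le_of_lt hy)
    linarith
  have hgnn : ∀ a : ℝ, ∀ y : ℝ, 0 ≤ max (θ - a * y) 0 * S y :=
    fun a y => mul_nonneg (le_max_right _ _) (hSnn y)
  have hgint : ∀ a : ℝ, 0 ≤ a →
      IntegrableOn (fun y => max (θ - a * y) 0 * S y) (Ioi 0) volume := by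
    intro a ha
    refine (hStail.const_mul θ).mono' ((hgmeas a).aestronglyMeasurable).restrict ?_
    rw [ae_restrict_iff' measurableSet_Ioi]
    exact Eventually.of_forall (fun y hy => hgbound a ha y hy)
  obtain ⟨G, hGdef⟩ : ∃ G : ℝ → ℝ, G = fun a => ∫ y in Ioi (0:ℝ), max (θ - a * y) 0 * S y :=
    ⟨_, rfl⟩
  have hGa : ∀ a : ℝ, G a = ∫ y in Ioi (0:ℝ), max (θ - a * y) 0 * S y := fun a => by
    rw [hGdef]
  have hGinterval : ∀ a : ℝ, 0 < a →
      (∫ y in (0:ℝ)..(θ / a), (θ - a * y) * S y) = G a := by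
    intro a ha
    have hma : 0 < θ / a := div_pos hθ ha
    rw [intervalIntegral.integral_of_le hma.le, hGa a]
    have hsub : ∫ y in Ioi (0:ℝ), max (θ - a * y) 0 * S y
        = ∫ y in Ioc (0:ℝ) (θ / a), max (θ - a * y) 0 * S y := by
      refine setIntegral_eq_of_subset_of_ae_diff_eq_zero measurableSet_Ioi.nullMeasurableSet
        Ioc_subset_Ioi_self ?_
      refine Eventually.of_forall (fun y hy => ?_)
      rcases hy with ⟨h1, h2⟩
      have h3 : θ / a < y := by
        by_contra hcon
        exact h2 ⟨h1, not_lt.mp hcon⟩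
      have h4 : θ < a * y := by
        have := (div_lt_iff₀ ha).mp h3
        linarith
      rw [max_eq_right (by linarith : θ - a * y ≤ 0), zero_mul]
    rw [hsub]
    refine setIntegral_congr_fun measurableSet_Ioc (fun y hy => ?_)
    have h4 : a * y ≤ θ := by
      have := (le_div_iff₀ ha).mp hy.2
      linarith
    rw [max_eq_left (by linarith : 0 ≤ θ - a * y)]
  have hGmono : ∀ a b : ℝ, 0 ≤ a → a ≤ b → G b ≤ G a := by
    intro a b ha hab
    rw [hGa a, hGa b]
    refine setIntegral_mono_on ((hgint b (ha.trans hab)) : _) ((hgint a ha) : _)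
      measurableSet_Ioi (fun y hy => ?_)
    refine mul_le_mul_of_nonneg_right (max_le_max ?_ le_rfl) (hSnn y)
    have hy' : (0:ℝ) < y := hy
    have : a * y ≤ b * y := mul_le_mul_of_nonneg_right hab hy'.le
    linarith
  have hGcont : ∀ x : ℝ, 0 < x → ContinuousAt G x := by
    intro x hx
    rw [hGdef]
    refine continuousAt_of_dominated (bound := fun y => θ * S y)
      (Eventually.of_forall (fun a => ((hgmeas a).aestronglyMeasurable).restrict)) ?_
      (hStail.const_mul θ) ?_
    · filter_upwards [isOpen_Ioi.eventually_mem (show x ∈ Ioi (0:ℝ) from hx)] with a ha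
      rw [ae_restrict_iff' measurableSet_Ioi]
      exact Eventually.of_forall (fun y hy => hgbound a (le_of_lt ha) y hy)
    · refine Eventually.of_forall (fun y => ?_)
      exact (((continuous_const.sub (continuous_id.mul continuous_const)).max
        continuous_const).mul continuous_const).continuousAt
  obtain ⟨Φ, hΦdef⟩ : ∃ Φ : ℝ → ℝ,
      Φ = fun a => ((1 + θ) * lam * μ - c) + β ^ 2 / 2 * a - lam * G a := ⟨_, rfl⟩
  have hΦa : ∀ a : ℝ, Φ a = ((1 + θ) * lam * μ - c) + β ^ 2 / 2 * a - lam * G a :=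
    fun a => by rw [hΦdef]
  have hΦiff : ∀ a : ℝ, 0 < a →
      (((1 + θ) * lam * μ - c + β ^ 2 / 2 * a =
        lam * ∫ y in (0:ℝ)..(θ / a), (θ - a * y) * S y) ↔ Φ a = 0) := by
    intro a ha
    rw [hΦa a, hGinterval a ha]
    constructor <;> intro h <;> linarith
  have hstrict : ∀ u v : ℝ, 0 < u → u < v → Φ u < Φ v := by
    intro u v hu huv
    have hG := hGmono u v hu.le huv.le
    rw [hΦa u, hΦa v]
    have h1 : lam * G v ≤ lam * G u := mul_le_mul_of_nonneg_left hG hlam.le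
    have h3 : β ^ 2 / 2 * u < β ^ 2 / 2 * v :=
      mul_lt_mul_of_pos_left huv (by positivity)
    linarith [h1, h3]
  -- upper endpoint
  obtain ⟨b₀, hb₀def⟩ : ∃ b₀ : ℝ, b₀ = max 1 (2 * lam * θ ^ 2 / β ^ 2) + 1 := ⟨_, rfl⟩
  have hb₀1 : 1 ≤ b₀ := by rw [hb₀def]; have := le_max_left 1 (2 * lam * θ ^ 2 / β ^ 2); linarith
  have hb₀pos : 0 < b₀ := lt_of_lt_of_le one_pos hb₀1
  have hb₀2 : 2 * lam * θ ^ 2 / β ^ 2 < b₀ := by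
    rw [hb₀def]; have := le_max_right 1 (2 * lam * θ ^ 2 / β ^ 2); linarith
  have hΦb : 0 < Φ b₀ := by
    have hmb : 0 < θ / b₀ := div_pos hθ hb₀pos
    have hGb : G b₀ ≤ θ * (θ / b₀) := by
      rw [hGa b₀]
      have hsub : ∫ y in Ioi (0:ℝ), max (θ - b₀ * y) 0 * S y
          = ∫ y in Ioc (0:ℝ) (θ / b₀), max (θ - b₀ * y) 0 * S y := by
        refine setIntegral_eq_of_subset_of_ae_diff_eq_zero measurableSet_Ioi.nullMeasurableSet
          Ioc_subset_Ioi_self ?_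
        refine Eventually.of_forall (fun y hy => ?_)
        rcases hy with ⟨h1, h2⟩
        have h3 : θ / b₀ < y := by
          by_contra hcon
          exact h2 ⟨h1, not_lt.mp hcon⟩
        have h4 : θ < b₀ * y := by
          have := (div_lt_iff₀ hb₀pos).mp h3
          linarith
        rw [max_eq_right (by linarith : θ - b₀ * y ≤ 0), zero_mul]
      rw [hsub]
      calc ∫ y in Ioc (0:ℝ) (θ / b₀), max (θ - b₀ * y) 0 * S y
          ≤ ∫ _y in Ioc (0:ℝ) (θ / b₀), θ := by
            refine setIntegral_mono_on
              (((hgint b₀ hb₀pos.le).mono_set Ioc_subset_Ioi_self) : _)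
              ((integrableOn_const_iff).mpr (Or.inr (by rw [Real.volume_Ioc]; exact ENNReal.ofReal_lt_top)))
              measurableSet_Ioc (fun y hy => ?_)
            have h5 : max (θ - b₀ * y) 0 ≤ θ := by
              refine max_le ?_ hθ.le
              have : 0 ≤ b₀ * y := mul_nonneg hb₀pos.le hy.1.le
              linarith
            calc max (θ - b₀ * y) 0 * S y ≤ θ * S y :=
                  mul_le_mul_of_nonneg_right h5 (hSnn y)
              _ ≤ θ * 1 := mul_le_mul_of_nonneg_left (hSle1 y) hθ.le
              _ = θ := mul_one θ
        _ = θ * (θ / b₀) := by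
            rw [setIntegral_const, measureReal_def, Real.volume_Ioc, smul_eq_mul,
              ENNReal.toReal_ofReal (by linarith : (0:ℝ) ≤ θ / b₀ - 0)]
            ring
    rw [hΦa b₀]
    have hκpos : 0 < (1 + θ) * lam * μ - c := by linarith
    have h6 : 2 * lam * θ ^ 2 < b₀ * β ^ 2 := by
      have := (div_lt_iff₀ (pow_pos hβ 2)).mp hb₀2
      linarith
    have h8 : lam * G b₀ ≤ lam * (θ * (θ / b₀)) := mul_le_mul_of_nonneg_left hGb hlam.le
    have hx : θ / b₀ ≤ θ := div_le_self hθ.le hb₀1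
    have h9 : lam * (θ * (θ / b₀)) ≤ β ^ 2 / 2 * b₀ := by
      have h91 : lam * (θ * (θ / b₀)) ≤ lam * (θ * θ) :=
        mul_le_mul_of_nonneg_left (mul_le_mul_of_nonneg_left hx hθ.le) hlam.le
      have h92 : lam * (θ * θ) ≤ β ^ 2 / 2 * b₀ := by linarith [h6]
      linarith
    linarith
  -- lower endpoint
  have hμpos : 0 < μ := by
    by_contra hcon
    push_neg at hcon
    have h1 : θ * (lam * μ) ≤ 0 :=
      mul_nonpos_of_nonneg_of_nonpos hθ.le (by nlinarith [hlam.le])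
    nlinarith
  obtain ⟨δ, hδdef⟩ : ∃ δ : ℝ, δ = (c - lam * μ) / (2 * θ * lam) := ⟨_, rfl⟩
  have hclam : 0 < c - lam * μ := by linarith
  have hδpos : 0 < δ := by rw [hδdef]; positivity
  have hq : lam * θ * (μ - δ) - ((1 + θ) * lam * μ - c) = (c - lam * μ) / 2 := by
    rw [hδdef]
    field_simp
    ring
  have hμδ : 0 < μ - δ := by
    have hκpos : 0 < (1 + θ) * lam * μ - c := by linarith
    have h1 : 0 < lam * θ * (μ - δ) := by linarith
    by_contra hcon
    push_neg at hcon
    have h2 : lam * θ * (μ - δ) ≤ 0 :=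
      mul_nonpos_of_nonneg_of_nonpos (mul_pos hlam hθ).le hcon
    linarith
  have htend : Tendsto (fun n : ℕ => ∫ t in Ioc (0:ℝ) (n:ℝ), S t) atTop
      (nhds (∫ t in Ioi (0:ℝ), S t)) := by
    have hmono : Monotone (fun n : ℕ => Ioc (0:ℝ) (n:ℝ)) :=
      fun i j hij => Ioc_subset_Ioc le_rfl (Nat.cast_le.2 hij)
    have hunion : ⋃ n : ℕ, Ioc (0:ℝ) (n:ℝ) = Ioi 0 := by
      ext y
      simp only [mem_iUnion, mem_Ioc, mem_Ioi]
      constructor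
      · rintro ⟨n, h1, _⟩; exact h1
      · intro hy
        obtain ⟨n, hn⟩ := exists_nat_ge y
        exact ⟨n, hy, hn⟩
    have := tendsto_setIntegral_of_monotone (fun n => measurableSet_Ioc) hmono
      (by rw [hunion]; exact hStail)
    rwa [hunion] at this
  have hev : ∀ᶠ n : ℕ in atTop, μ - δ < ∫ t in Ioc (0:ℝ) (n:ℝ), S t :=
    htend.eventually (eventually_gt_nhds (by rw [← hμint]; linarith))
  obtain ⟨N, hN⟩ := hev.exists
  obtain ⟨M, hMdef⟩ : ∃ M : ℝ, M = max (N:ℝ) 1 := ⟨_, rfl⟩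
  have hM1 : 1 ≤ M := by rw [hMdef]; exact le_max_right _ _
  have hMpos : 0 < M := lt_of_lt_of_le one_pos hM1
  have hSnnIoi : 0 ≤ᵐ[volume.restrict (Ioi (0:ℝ))] S :=
    Eventually.of_forall (fun t => hSnn t)
  have hAM : μ - δ < ∫ t in Ioc (0:ℝ) M, S t := by
    refine lt_of_lt_of_le hN (setIntegral_mono_set
      (hStail.mono_set Ioc_subset_Ioi_self) ?_ ?_)
    · exact Eventually.of_forall (fun t => hSnn t)
    · exact HasSubset.Subset.eventuallyLE
        (Ioc_subset_Ioc le_rfl (by rw [hMdef]; exact le_max_left _ _))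
  obtain ⟨AM, hAMdef⟩ : ∃ AM : ℝ, AM = ∫ t in Ioc (0:ℝ) M, S t := ⟨_, rfl⟩
  rw [← hAMdef] at hAM
  obtain ⟨D, hDdef⟩ : ∃ D : ℝ, D = β ^ 2 / 2 + lam * M * (μ - δ) + 1 := ⟨_, rfl⟩
  have hDpos : 0 < D := by
    rw [hDdef]
    have h1 : 0 ≤ lam * M * (μ - δ) := mul_nonneg (mul_nonneg hlam.le hMpos.le) hμδ.le
    linarith [sq_nonneg β, h1]
  obtain ⟨a₀, ha₀def⟩ : ∃ a₀ : ℝ, a₀ = min (θ / (2 * M)) ((c - lam * μ) / 2 / D) := ⟨_, rfl⟩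
  have ha₀pos : 0 < a₀ := by
    rw [ha₀def]
    exact lt_min (div_pos hθ (by linarith)) (div_pos (by linarith) hDpos)
  have ha₀M : a₀ * M ≤ θ / 2 := by
    have h1 : a₀ ≤ θ / (2 * M) := ha₀def ▸ min_le_left _ _
    have h2 : a₀ * M ≤ θ / (2 * M) * M := mul_le_mul_of_nonneg_right h1 hMpos.le
    have h3 : θ / (2 * M) * M = θ / 2 := by field_simp
    linarith
  have hGlower : (θ - a₀ * M) * AM ≤ G a₀ := by
    have h1 : ∫ t in Ioc (0:ℝ) M, (θ - a₀ * M) * S t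
        ≤ ∫ t in Ioc (0:ℝ) M, max (θ - a₀ * t) 0 * S t := by
      refine setIntegral_mono_on
        (((hStail.mono_set Ioc_subset_Ioi_self).const_mul _) : _)
        (((hgint a₀ ha₀pos.le).mono_set Ioc_subset_Ioi_self) : _)
        measurableSet_Ioc (fun t ht => ?_)
      refine mul_le_mul_of_nonneg_right ?_ (hSnn t)
      have h2 : a₀ * t ≤ a₀ * M := mul_le_mul_of_nonneg_left ht.2 ha₀pos.le
      have h3 : θ - a₀ * M ≤ θ - a₀ * t := by linarith
      exact le_trans h3 (le_max_left _ _)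
    have h4 : ∫ t in Ioc (0:ℝ) M, max (θ - a₀ * t) 0 * S t ≤ G a₀ := by
      rw [hGa a₀]
      refine setIntegral_mono_set ((hgint a₀ ha₀pos.le) : _)
        (Eventually.of_forall (fun t => hgnn a₀ t)) ?_
      exact HasSubset.Subset.eventuallyLE Ioc_subset_Ioi_self
    rw [integral_const_mul, ← hAMdef] at h1
    linarith
  have hΦlow : Φ a₀ < 0 := by
    have hθM : 0 ≤ θ - a₀ * M := by linarith [ha₀M, hθ]
    have e1 : (θ - a₀ * M) * (μ - δ) ≤ (θ - a₀ * M) * AM :=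
      mul_le_mul_of_nonneg_left hAM.le hθM
    have e2 : lam * ((θ - a₀ * M) * (μ - δ)) ≤ lam * G a₀ :=
      mul_le_mul_of_nonneg_left (le_trans e1 hGlower) hlam.le
    have e3 : a₀ * D ≤ (c - lam * μ) / 2 := by
      have h1 : a₀ ≤ (c - lam * μ) / 2 / D := ha₀def ▸ min_le_right _ _
      have h2 : a₀ * D ≤ (c - lam * μ) / 2 / D * D := mul_le_mul_of_nonneg_right h1 hDpos.le
      rw [div_mul_cancel₀ _ hDpos.ne'] at h2
      exact h2
    rw [hΦa a₀]
    -- Φ a₀ ≤ κ' + β²/2 a₀ - lam (θ - a₀ M)(μ - δ) = a₀ (D - 1) - (c - lam μ)/2 ≤ -a₀ < 0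
    have e4 : lam * ((θ - a₀ * M) * (μ - δ))
        = lam * θ * (μ - δ) - a₀ * (lam * M * (μ - δ)) := by ring
    have e5 : a₀ * D = a₀ * (β ^ 2 / 2) + a₀ * (lam * M * (μ - δ)) + a₀ := by
      rw [hDdef]; ring
    linarith [hq, e2, e3, ha₀pos, e4, e5]
  have hab : a₀ ≤ b₀ := by
    by_contra hcon
    push_neg at hcon
    have := hstrict b₀ a₀ hb₀pos hcon
    linarith
  have hΦcont : ContinuousOn Φ (Icc a₀ b₀) := by
    intro x hx
    have hx0 : 0 < x := lt_of_lt_of_le ha₀pos hx.1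
    have h1 : ContinuousAt Φ x := by
      rw [hΦdef]
      exact (continuousAt_const.add (continuousAt_id.const_mul _)).sub
        ((hGcont x hx0).const_mul lam)
    exact h1.continuousWithinAt
  obtain ⟨α₀, hα₀mem, hα₀eq⟩ :=
    intermediate_value_Icc hab hΦcont ⟨hΦlow.le, hΦb.le⟩
  have hα₀pos : 0 < α₀ := lt_of_lt_of_le ha₀pos hα₀mem.1
  refine ⟨α₀, ⟨hα₀pos, (hΦiff α₀ hα₀pos).mpr hα₀eq⟩, ?_⟩
  rintro y ⟨hy0, hyeq⟩
  have hΦy : Φ y = 0 := (hΦiff y hy0).mp hyeq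
  by_contra hne
  rcases lt_or_gt_of_ne hne with h | h
  · have := hstrict y α₀ hy0 h
    rw [hΦy, hα₀eq] at this
    exact lt_irrefl 0 this
  · have := hstrict α₀ y hα₀pos h
    rw [hΦy, hα₀eq] at this
    exact lt_irrefl 0 this
end

section
/- Suppose θ = 0 and η > 0, and write c = λμ + (η₀/2)λσ² with 0 < η₀ < η. Then the unique α* > η solving (η₀/2)λσ² = (α − η)·(λησ²/(2α) + β²/2) is given explicitly by α* = (1/(2β²))·[ (ηβ² − (η−η₀)λσ²) + √( (ηβ² − (η−η₀)λσ²)² + 4η²β²λσ² ) ]; consequently the maximizing retention function is the proportional retention R_D(y) = (η/α*)·y and the maximum diffusion-approximation adjustment coefficient equals α* − η. -/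
open MeasureTheory Filter Set

set_option maxHeartbeats 1000000 in
theorem stmt_5
    {Ω : Type*} [MeasurableSpace Ω] (P : Measure Ω) [IsProbabilityMeasure P]
    (Y : Ω → ℝ) (hYmeas : Measurable Y)
    (hYpos : P {ω | 0 < Y ω} = 1)
    (hfull : ∀ y : ℝ, 0 < y → 0 < P {ω | Y ω ≤ y} ∧ 0 < P {ω | y < Y ω})
    (μ σ2 : ℝ) (hμ : μ = ∫ ω, Y ω ∂P) (hσ2 : σ2 = ∫ ω, (Y ω) ^ 2 ∂P)
    (hσ2pos : 0 < σ2)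
    (hYint : Integrable Y P) (hY2int : Integrable (fun ω => (Y ω) ^ 2) P)
    (lam β η c κ : ℝ)
    (hlam : 0 < lam) (hβ : 0 < β) (hη : 0 < η)
    (hc1 : lam * μ < c) (hc2 : c < lam * μ + η / 2 * lam * σ2)
    (hκ : κ = lam * μ + η / 2 * lam * σ2 - c)
    (η0 : ℝ) (hη0pos : 0 < η0) (hη0lt : η0 < η)
    (hη0 : c = lam * μ + η0 / 2 * lam * σ2)
    (ρD : (ℝ → ℝ) → ℝ)
    (hρD : ∀ R : ℝ → ℝ, ρD R =
      2 * (-κ + lam * (η * (∫ ω, Y ω * R (Y ω) ∂P)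
            - η / 2 * (∫ ω, (R (Y ω)) ^ 2 ∂P)))
        / (lam * (∫ ω, (R (Y ω)) ^ 2 ∂P) + β ^ 2))
    (αs : ℝ)
    (hαs : αs = 1 / (2 * β ^ 2) *
      ((η * β ^ 2 - (η - η0) * lam * σ2)
        + Real.sqrt ((η * β ^ 2 - (η - η0) * lam * σ2) ^ 2
            + 4 * η ^ 2 * β ^ 2 * lam * σ2))) :
    (η < αs
      ∧ η0 / 2 * lam * σ2 = (αs - η) * (lam * η * σ2 / (2 * αs) + β ^ 2 / 2)
      ∧ ∀ α : ℝ, η < α →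
          η0 / 2 * lam * σ2 = (α - η) * (lam * η * σ2 / (2 * α) + β ^ 2 / 2) →
          α = αs)
    ∧ (∀ R : ℝ → ℝ, Measurable R → (∀ y : ℝ, 0 ≤ y → 0 ≤ R y ∧ R y ≤ y) →
        ρD R ≤ αs - η)
    ∧ ρD (fun y => η / αs * y) = αs - η := by
  have hβ2 : (0:ℝ) < β ^ 2 := by positivity
  obtain ⟨b, hb⟩ : ∃ x : ℝ, x = η * β ^ 2 - (η - η0) * lam * σ2 := ⟨_, rfl⟩
  rw [← hb] at hαs
  obtain ⟨D, hD⟩ : ∃ x : ℝ, x = b ^ 2 + 4 * η ^ 2 * β ^ 2 * lam * σ2 := ⟨_, rfl⟩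
  rw [← hD] at hαs
  have hp2 : (0:ℝ) < 4 * η ^ 2 * β ^ 2 * lam * σ2 := by
    have h1 : (0:ℝ) < 4 * η ^ 2 * β ^ 2 := by positivity
    exact mul_pos (mul_pos h1 hlam) hσ2pos
  have hDpos : 0 < D := by
    rw [hD]; linarith only [sq_nonneg b, hp2]
  have hsq : Real.sqrt D ^ 2 = D := Real.sq_sqrt hDpos.le
  have hsnn : 0 ≤ Real.sqrt D := Real.sqrt_nonneg D
  have hαs' : αs = (b + Real.sqrt D) / (2 * β ^ 2) := by rw [hαs]; ring
  have hsub : 0 < (η - η0) * lam * σ2 :=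
    mul_pos (mul_pos (sub_pos.mpr hη0lt) hlam) hσ2pos
  have hηβ2 : 0 < η * β ^ 2 := mul_pos hη hβ2
  have h2bη : 0 < 2 * β ^ 2 * η - b := by linarith only [hb, hsub, hηβ2]
  have hkeyD : D - (2 * β ^ 2 * η - b) ^ 2 = 4 * β ^ 2 * η * (η0 * lam * σ2) := by
    rw [hD, hb]; ring
  have hp3 : (0:ℝ) < 4 * β ^ 2 * η * (η0 * lam * σ2) := by
    have h1 : (0:ℝ) < 4 * β ^ 2 * η := by positivity
    exact mul_pos h1 (mul_pos (mul_pos hη0pos hlam) hσ2pos)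
  have hDgt : (2 * β ^ 2 * η - b) ^ 2 < D := by linarith only [hkeyD, hp3]
  have hsgt : 2 * β ^ 2 * η - b < Real.sqrt D := (Real.lt_sqrt h2bη.le).mpr hDgt
  have hηαs : η < αs := by
    rw [hαs', lt_div_iff₀ (by positivity)]; linarith only [hsgt]
  have hαpos : 0 < αs := hη.trans hηαs
  have hαne : αs ≠ 0 := hαpos.ne'
  have h2 : 2 * β ^ 2 * αs = b + Real.sqrt D := by
    rw [hαs']; field_simp
  have hquad4 : 4 * β ^ 2 * (β ^ 2 * αs ^ 2 - b * αs - η ^ 2 * lam * σ2) = 0 := by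
    linear_combination (2 * β ^ 2 * αs - b + Real.sqrt D) * h2 + hsq + hD
  have hquad : β ^ 2 * αs ^ 2 - b * αs - η ^ 2 * lam * σ2 = 0 := by
    rcases mul_eq_zero.mp hquad4 with h | h
    · exact absurd h (by positivity)
    · exact h
  have h2αs : ((2:ℝ) * αs) ≠ 0 := by positivity
  have hEq : η0 / 2 * lam * σ2 = (αs - η) * (lam * η * σ2 / (2 * αs) + β ^ 2 / 2) := by
    have h1 : lam * η * σ2 / (2 * αs) + β ^ 2 / 2
        = (lam * η * σ2 + αs * β ^ 2) / (2 * αs) := by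
      field_simp
    rw [h1, ← mul_div_assoc, eq_div_iff h2αs]
    linear_combination - hquad - αs * hb
  have hκ' : κ = (η - η0) / 2 * lam * σ2 := by rw [hκ, hη0]; ring
  refine ⟨⟨hηαs, hEq, ?_⟩, ?_, ?_⟩
  · intro α hα hαeq
    have hαpos' : 0 < α := hη.trans hα
    have h2α : ((2:ℝ) * α) ≠ 0 := by positivity
    have h1 : lam * η * σ2 / (2 * α) + β ^ 2 / 2
        = (lam * η * σ2 + α * β ^ 2) / (2 * α) := by
      field_simp
    rw [h1, ← mul_div_assoc, eq_div_iff h2α] at hαeq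
    have hq2 : β ^ 2 * α ^ 2 - b * α - η ^ 2 * lam * σ2 = 0 := by
      linear_combination - hαeq - α * hb
    have hfac : (α - αs) * (β ^ 2 * (α + αs) - b) = 0 := by
      linear_combination hq2 - hquad
    have hpos : 0 < β ^ 2 * (α + αs) - b := by
      have hm : β ^ 2 * (2 * η) < β ^ 2 * (α + αs) :=
        mul_lt_mul_of_pos_left (by linarith only [hα, hηαs]) hβ2
      linarith only [hm, h2bη]
    rcases mul_eq_zero.mp hfac with h | h
    · linarith only [h]
    · linarith only [h, hpos]
  · intro R hRmeas hR
    have hYae : ∀ᵐ ω ∂P, 0 < Y ω := by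
      have hm : MeasurableSet {ω | 0 < Y ω} := measurableSet_lt measurable_const hYmeas
      rw [ae_iff]
      have he : {ω | ¬ 0 < Y ω} = {ω | 0 < Y ω}ᶜ := rfl
      rw [he, prob_compl_eq_zero_iff hm]
      exact hYpos
    have hRm : Measurable (fun ω => R (Y ω)) := hRmeas.comp hYmeas
    have hbound1 : ∀ᵐ ω ∂P, ‖Y ω * R (Y ω)‖ ≤ (Y ω) ^ 2 := by
      filter_upwards [hYae] with ω hω
      obtain ⟨h1, h2⟩ := hR (Y ω) hω.le
      rw [Real.norm_eq_abs, abs_of_nonneg (mul_nonneg hω.le h1)]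
      have hmm := mul_le_mul_of_nonneg_left h2 hω.le
      linarith only [hmm]
    have hbound2 : ∀ᵐ ω ∂P, ‖(R (Y ω)) ^ 2‖ ≤ (Y ω) ^ 2 := by
      filter_upwards [hYae] with ω hω
      obtain ⟨h1, h2⟩ := hR (Y ω) hω.le
      rw [Real.norm_eq_abs, abs_of_nonneg (sq_nonneg _)]
      have hmm := mul_le_mul h2 h2 h1 hω.le
      linarith only [hmm]
    have hI1int : Integrable (fun ω => Y ω * R (Y ω)) P :=
      hY2int.mono' (hYmeas.mul hRm).aestronglyMeasurable hbound1
    have hI2int : Integrable (fun ω => (R (Y ω)) ^ 2) P :=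
      hY2int.mono' (hRm.pow_const 2).aestronglyMeasurable hbound2
    rw [hρD R]
    set I1 : ℝ := ∫ ω, Y ω * R (Y ω) ∂P with hI1
    set I2 : ℝ := ∫ ω, (R (Y ω)) ^ 2 ∂P with hI2
    have hI2nn : 0 ≤ I2 := integral_nonneg fun ω => sq_nonneg _
    have hden : 0 < lam * I2 + β ^ 2 := by
      have : 0 ≤ lam * I2 := mul_nonneg hlam.le hI2nn
      linarith only [this, hβ2]
    have hAM : 2 * αs * η * I1 ≤ αs ^ 2 * I2 + η ^ 2 * σ2 := by
      have h1 : 2 * αs * η * I1 = ∫ ω, 2 * αs * η * (Y ω * R (Y ω)) ∂P :=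
        (integral_const_mul _ _).symm
      have h2' : αs ^ 2 * I2 + η ^ 2 * σ2
          = ∫ ω, (αs ^ 2 * (R (Y ω)) ^ 2 + η ^ 2 * (Y ω) ^ 2) ∂P := by
        rw [integral_add (hI2int.const_mul _) (hY2int.const_mul _),
          integral_const_mul, integral_const_mul, hσ2]
      rw [h1, h2']
      refine integral_mono (hI1int.const_mul _)
        ((hI2int.const_mul _).add (hY2int.const_mul _)) fun ω => ?_
      linarith only [sq_nonneg (αs * R (Y ω) - η * Y ω)]
    have hA2 : lam * (2 * αs * η * I1) ≤ lam * (αs ^ 2 * I2 + η ^ 2 * σ2) :=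
      mul_le_mul_of_nonneg_left hAM hlam.le
    have heq2 : -2 * κ * αs + lam * αs ^ 2 * I2 + lam * η ^ 2 * σ2 - lam * η * αs * I2
        = ((αs - η) * (lam * I2 + β ^ 2)) * αs := by
      linear_combination (-2 * αs) * hκ' - hquad - αs * hb
    rw [div_le_iff₀ hden]
    have key : (2 * (-κ + lam * (η * I1 - η / 2 * I2))) * αs
        ≤ ((αs - η) * (lam * I2 + β ^ 2)) * αs := by
      linarith only [hA2, heq2]
    exact le_of_mul_le_mul_right key hαpos
  · rw [hρD]
    have e1 : ∫ ω, Y ω * (η / αs * Y ω) ∂P = η / αs * σ2 := by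
      rw [hσ2, ← integral_const_mul]
      congr 1; funext ω; ring
    have e2 : ∫ ω, (η / αs * Y ω) ^ 2 ∂P = (η / αs) ^ 2 * σ2 := by
      rw [hσ2, ← integral_const_mul]
      congr 1; funext ω; ring
    rw [e1, e2]
    have hden : 0 < lam * ((η / αs) ^ 2 * σ2) + β ^ 2 := by
      have : 0 ≤ lam * ((η / αs) ^ 2 * σ2) :=
        mul_nonneg hlam.le (mul_nonneg (sq_nonneg _) hσ2pos.le)
      linarith only [this, hβ2]
    rw [div_eq_iff hden.ne']
    refine mul_right_cancel₀ (pow_ne_zero 2 hαne) ?_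
    have h1 : (η / αs) ^ 2 * αs ^ 2 = η ^ 2 := by field_simp
    have h2' : (η / αs) * αs = η := div_mul_cancel₀ _ hαne
    linear_combination (-lam * σ2 * αs) * h1 + (2 * lam * η * σ2 * αs) * h2'
      + (-2 * αs ^ 2) * hκ' + (-αs) * hquad + (-αs ^ 2) * hb
end

section
/- Fix r > 0, θ ≥ 0, η ≥ 0. For every y > 0 with θ + ηy > 0, the equation (1+θ) + ηy − ηR = e^{rR} has a unique solution R = R_c(r,y) in (0,∞); moreover R_c(r,y) ≤ y if and only if y ≥ (1/r)·ln(1+θ), with R_c(r,y) = y when y = (1/r)·ln(1+θ). The map y ↦ R_c(r,y) is differentiable with ∂R_c/∂y = η/(η + r·e^{r·R_c(r,y)}) ∈ [0,1), and the map r ↦ R_c(r,y) is differentiable with ∂R_c/∂r = −R_c·e^{r·R_c}/(η + r·e^{r·R_c}) < 0. -/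
open Set

private lemma phi_mono {η r : ℝ} (hη : 0 ≤ η) (hr : 0 < r) {a b : ℝ} (hab : a < b) :
    Real.exp (r * a) + η * a < Real.exp (r * b) + η * b := by
  have h1 : Real.exp (r * a) < Real.exp (r * b) := by
    apply Real.exp_lt_exp.2
    nlinarith
  nlinarith [mul_le_mul_of_nonneg_left hab.le hη]

private lemma root_exists {θ η r y : ℝ} (hη : 0 ≤ η) (hr : 0 < r)
    (hC : 0 < θ + η * y) :
    ∃ R, 0 < R ∧ Real.exp (r * R) + η * R = (1 + θ) + η * y := by
  set C := (1 + θ) + η * y with hCdef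
  have hC1 : 1 < C := by simp only [hCdef]; linarith
  set M : ℝ := max 1 (Real.log C / r) with hM
  have hM0 : (0:ℝ) < M := lt_of_lt_of_le one_pos (le_max_left _ _)
  have hMle : C ≤ Real.exp (r * M) + η * M := by
    have h1 : Real.log C ≤ r * M := by
      rw [mul_comm]
      calc Real.log C = (Real.log C / r) * r := by field_simp
        _ ≤ M * r := mul_le_mul_of_nonneg_right (le_max_right _ _) hr.le
    have h2 : C ≤ Real.exp (r * M) := by
      calc C = Real.exp (Real.log C) := (Real.exp_log (by linarith)).symm
        _ ≤ _ := Real.exp_le_exp.2 h1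
    nlinarith [mul_nonneg hη hM0.le]
  have hcont : ContinuousOn (fun R => Real.exp (r * R) + η * R) (Icc 0 M) := by
    apply Continuous.continuousOn; continuity
  have := intermediate_value_Icc hM0.le hcont
  have hmem : C ∈ Icc (Real.exp (r * 0) + η * 0) (Real.exp (r * M) + η * M) := by
    constructor
    · simp; linarith
    · exact hMle
  obtain ⟨R, hRmem, hReq⟩ := this hmem
  refine ⟨R, ?_, hReq⟩
  rcases lt_or_eq_of_le hRmem.1 with h | h
  · exact h
  · exfalso; rw [← h] at hReq; simp at hReq; linarith

open Classical in
noncomputable def Rcfun (θ η : ℝ) (r y : ℝ) : ℝ :=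
  if h : ∃ R, 0 < R ∧ Real.exp (r * R) + η * R = (1 + θ) + η * y then h.choose else 0

private lemma Rc_spec {θ η r y : ℝ} (hη : 0 ≤ η) (hr : 0 < r) (hC : 0 < θ + η * y) :
    0 < Rcfun θ η r y ∧
      Real.exp (r * Rcfun θ η r y) + η * Rcfun θ η r y = (1 + θ) + η * y := by
  have h := root_exists hη hr hC
  rw [Rcfun]
  rw [dif_pos h]
  exact h.choose_spec

private lemma eq_Rc {θ η r y R : ℝ} (hη : 0 ≤ η) (hr : 0 < r) (hR : 0 < R)
    (heq : Real.exp (r * R) + η * R = (1 + θ) + η * y) : R = Rcfun θ η r y := by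
  have hC : 0 < θ + η * y := by
    nlinarith [Real.add_one_le_exp (r * R), mul_pos hr hR, mul_nonneg hη hR.le]
  obtain ⟨h1, h2⟩ := Rc_spec hη hr hC
  by_contra hne
  rcases lt_or_gt_of_ne hne with h | h
  · have := phi_mono hη hr h; linarith
  · have := phi_mono hη hr h; linarith

private lemma Rc_mono {θ η r : ℝ} {y y' : ℝ} (hη : 0 < η) (hr : 0 < r)
    (hC : 0 < θ + η * y) (hyy : y < y') : Rcfun θ η r y < Rcfun θ η r y' := by
  have hC' : 0 < θ + η * y' := by nlinarith
  obtain ⟨h1, h2⟩ := Rc_spec hη.le hr hC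
  obtain ⟨h1', h2'⟩ := Rc_spec hη.le hr hC'
  by_contra hne
  push_neg at hne
  rcases lt_or_eq_of_le hne with h | h
  · have := phi_mono hη.le hr h; nlinarith
  · rw [h] at h2'; nlinarith

private lemma Rc_anti {θ η y : ℝ} {s s' : ℝ} (hη : 0 ≤ η) (hs : 0 < s)
    (hss : s < s') (hC : 0 < θ + η * y) : Rcfun θ η s' y < Rcfun θ η s y := by
  obtain ⟨h1, h2⟩ := Rc_spec hη hs hC
  obtain ⟨h1', h2'⟩ := Rc_spec hη (hs.trans hss) hC
  by_contra hne
  push_neg at hne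
  have : Real.exp (s * Rcfun θ η s y) < Real.exp (s' * Rcfun θ η s' y) := by
    apply Real.exp_lt_exp.2
    nlinarith
  nlinarith [mul_le_mul_of_nonneg_left hne hη]

private lemma cont_y {θ η r y : ℝ} (hη : 0 < η) (hr : 0 < r) (hC : 0 < θ + η * y) :
    ContinuousAt (fun z => Rcfun θ η r z) y := by
  rw [Metric.continuousAt_iff]
  intro ε hε
  obtain ⟨hR0, heq⟩ := Rc_spec hη.le hr hC
  set R0 := Rcfun θ η r y with hR0def
  set ε' : ℝ := min (ε / 2) (R0 / 2) with hε'def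
  have hε'pos : 0 < ε' := lt_min (by linarith) (by linarith)
  have hε'lt : ε' < ε := lt_of_le_of_lt (min_le_left _ _) (by linarith)
  have hR0ε : 0 < R0 - ε' := by
    have : ε' ≤ R0 / 2 := min_le_right _ _
    linarith
  set yp : ℝ := (Real.exp (r * (R0 + ε')) + η * (R0 + ε') - (1 + θ)) / η with hypdef
  set ym : ℝ := (Real.exp (r * (R0 - ε')) + η * (R0 - ε') - (1 + θ)) / η with hymdef
  have hyp : Rcfun θ η r yp = R0 + ε' := by
    refine (eq_Rc hη.le hr (by linarith) ?_).symm
    rw [hypdef]; field_simp; ring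
  have hym : Rcfun θ η r ym = R0 - ε' := by
    refine (eq_Rc hη.le hr hR0ε ?_).symm
    rw [hymdef]; field_simp; ring
  have hypy : y < yp := by
    have h := phi_mono hη.le hr (show R0 < R0 + ε' by linarith)
    rw [hypdef]
    rw [lt_div_iff₀ hη]
    nlinarith
  have hymy : ym < y := by
    have h := phi_mono hη.le hr (show R0 - ε' < R0 by linarith)
    rw [hymdef]
    rw [div_lt_iff₀ hη]
    nlinarith
  have hymC : 0 < θ + η * ym := by
    have h1 : 0 < r * (R0 - ε') := mul_pos hr hR0ε
    have h2 : (1:ℝ) < Real.exp (r * (R0 - ε')) := by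
      nlinarith [Real.add_one_le_exp (r * (R0 - ε'))]
    have : θ + η * ym = Real.exp (r * (R0 - ε')) + η * (R0 - ε') - 1 := by
      rw [hymdef]; field_simp; ring
    rw [this]
    nlinarith [mul_pos hη hR0ε]
  refine ⟨min (yp - y) (y - ym), lt_min (by linarith) (by linarith), ?_⟩
  intro z hz
  rw [Real.dist_eq] at hz ⊢
  have hz1 : z < yp := by
    have := abs_lt.1 (lt_of_lt_of_le hz (min_le_left _ _))
    linarith [this.2]
  have hz2 : ym < z := by
    have := abs_lt.1 (lt_of_lt_of_le hz (min_le_right _ _))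
    linarith [this.1]
  have hzC : 0 < θ + η * z := by nlinarith
  have hb1 : Rcfun θ η r z < R0 + ε' := by
    have := Rc_mono hη hr hzC hz1
    rw [hyp] at this; exact this
  have hb2 : R0 - ε' < Rcfun θ η r z := by
    have := Rc_mono hη hr hymC hz2
    rw [hym] at this; exact this
  rw [abs_lt]
  constructor <;> linarith

private lemma cont_r {θ η r y : ℝ} (hη : 0 < η) (hr : 0 < r) (hC : 0 < θ + η * y) :
    ContinuousAt (fun s => Rcfun θ η s y) r := by
  rw [Metric.continuousAt_iff]
  intro ε hε
  obtain ⟨hR0, heq⟩ := Rc_spec hη.le hr hC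
  set R0 := Rcfun θ η r y with hR0def
  set C : ℝ := (1 + θ) + η * y with hCdef
  have hE1 : 1 < Real.exp (r * R0) := by
    nlinarith [Real.add_one_le_exp (r * R0), mul_pos hr hR0]
  have hgap : 0 < (C - 1) / η - R0 := by
    rw [lt_sub_iff_add_lt, lt_div_iff₀ hη]
    nlinarith
  set ε' : ℝ := min (ε / 2) (min (R0 / 2) (((C - 1) / η - R0) / 2)) with hε'def
  have hε'pos : 0 < ε' := lt_min (by linarith) (lt_min (by linarith) (by linarith))
  have hε'lt : ε' < ε := lt_of_le_of_lt (min_le_left _ _) (by linarith)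
  have hε'R0 : ε' ≤ R0 / 2 := le_trans (min_le_right _ _) (min_le_left _ _)
  have hε'gap : ε' ≤ ((C - 1) / η - R0) / 2 := le_trans (min_le_right _ _) (min_le_right _ _)
  have hR0ε : 0 < R0 - ε' := by linarith
  have hCm : 1 < C - η * (R0 - ε') := by
    have : C - η * R0 = Real.exp (r * R0) := by linarith
    nlinarith [mul_pos hη hε'pos]
  have hCp : 1 < C - η * (R0 + ε') := by
    have h1 : R0 + ε' < (C - 1) / η := by linarith
    rw [lt_div_iff₀ hη] at h1
    nlinarith
  set sp : ℝ := Real.log (C - η * (R0 - ε')) / (R0 - ε') with hspdef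
  set sm : ℝ := Real.log (C - η * (R0 + ε')) / (R0 + ε') with hsmdef
  have hsp0 : 0 < sp := div_pos (Real.log_pos hCm) hR0ε
  have hsm0 : 0 < sm := div_pos (Real.log_pos hCp) (by linarith)
  have hsp : Rcfun θ η sp y = R0 - ε' := by
    refine (eq_Rc hη.le hsp0 hR0ε ?_).symm
    have : sp * (R0 - ε') = Real.log (C - η * (R0 - ε')) := by
      rw [hspdef]; field_simp
    rw [this, Real.exp_log (by linarith)]
    rw [hCdef]; ring
  have hsm : Rcfun θ η sm y = R0 + ε' := by
    refine (eq_Rc hη.le hsm0 (by linarith) ?_).symm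
    have : sm * (R0 + ε') = Real.log (C - η * (R0 + ε')) := by
      rw [hsmdef]; field_simp
    rw [this, Real.exp_log (by linarith)]
    rw [hCdef]; ring
  have hrsp : r < sp := by
    by_contra h
    push_neg at h
    rcases lt_or_eq_of_le h with h | h
    · have := Rc_anti hη.le hsp0 h hC
      rw [hsp] at this; simp only [← hR0def] at this; linarith
    · rw [h] at hsp; simp only [← hR0def] at hsp; linarith
  have hsmr : sm < r := by
    by_contra h
    push_neg at h
    rcases lt_or_eq_of_le h with h | h
    · have := Rc_anti hη.le hr h hC
      rw [hsm] at this; simp only [← hR0def] at this; linarith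
    · rw [← h] at hsm; simp only [← hR0def] at hsm; linarith
  refine ⟨min (sp - r) (r - sm), lt_min (by linarith) (by linarith), ?_⟩
  intro s hs
  rw [Real.dist_eq] at hs ⊢
  have hs1 : s < sp := by
    have := abs_lt.1 (lt_of_lt_of_le hs (min_le_left _ _))
    linarith [this.2]
  have hs2 : sm < s := by
    have := abs_lt.1 (lt_of_lt_of_le hs (min_le_right _ _))
    linarith [this.1]
  have hs0 : 0 < s := hsm0.trans hs2
  have hb1 : R0 - ε' < Rcfun θ η s y := by
    have := Rc_anti hη.le hs0 hs1 hC
    rw [hsp] at this; exact this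
  have hb2 : Rcfun θ η s y < R0 + ε' := by
    have := Rc_anti hη.le hsm0 hs2 hC
    rw [hsm] at this; exact this
  rw [abs_lt]
  constructor <;> linarith


theorem stmt_6 (θ η : ℝ) (hθ : 0 ≤ θ) (hη : 0 ≤ η) :
    ∃ Rc : ℝ → ℝ → ℝ,
      ∀ r : ℝ, 0 < r → ∀ y : ℝ, 0 < y → 0 < θ + η * y →
        (0 < Rc r y
          ∧ (1 + θ) + η * y - η * Rc r y = Real.exp (r * Rc r y))
        ∧ (∀ R : ℝ, 0 < R → (1 + θ) + η * y - η * R = Real.exp (r * R) → R = Rc r y)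
        ∧ (Rc r y ≤ y ↔ 1 / r * Real.log (1 + θ) ≤ y)
        ∧ (y = 1 / r * Real.log (1 + θ) → Rc r y = y)
        ∧ HasDerivAt (fun z => Rc r z)
            (η / (η + r * Real.exp (r * Rc r y))) y
        ∧ η / (η + r * Real.exp (r * Rc r y)) ∈ Ico (0 : ℝ) 1
        ∧ HasDerivAt (fun s => Rc s y)
            (-(Rc r y * Real.exp (r * Rc r y)) / (η + r * Real.exp (r * Rc r y))) r
        ∧ -(Rc r y * Real.exp (r * Rc r y)) / (η + r * Real.exp (r * Rc r y)) < 0 := by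
  rcases eq_or_lt_of_le hη with hη0 | hηpos
  · -- η = 0
    subst hη0
    refine ⟨fun r _ => Real.log (1 + θ) / r, ?_⟩
    intro r hr y hy hCy
    simp only [zero_mul, add_zero] at hCy
    have hθ1 : (1:ℝ) < 1 + θ := by linarith
    have hL : 0 < Real.log (1 + θ) := Real.log_pos hθ1
    have hrL : r * (Real.log (1 + θ) / r) = Real.log (1 + θ) := by field_simp
    have hE : Real.exp (r * (Real.log (1 + θ) / r)) = 1 + θ := by
      rw [hrL, Real.exp_log (by linarith)]
    refine ⟨⟨by positivity, by rw [hE]; ring⟩, ?_, ?_, ?_, ?_, ?_, ?_, ?_⟩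
    · intro R hR hReq
      simp only [zero_mul, add_zero, sub_zero] at hReq
      have h1 : r * R = Real.log (1 + θ) := by
        rw [hReq, Real.log_exp]
      rw [eq_div_iff hr.ne']
      linarith [h1]
    · rw [one_div_mul_eq_div]
    · intro h
      rw [h, one_div_mul_eq_div]
    · rw [zero_div]
      exact hasDerivAt_const y _
    · rw [zero_div]
      exact ⟨le_refl 0, one_pos⟩
    · have hfun : (fun s : ℝ => Real.log (1 + θ) / s)
          = (fun s : ℝ => Real.log (1 + θ) * s⁻¹) := by
        funext s; rw [div_eq_mul_inv]
      rw [hfun]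
      have h1 := (hasDerivAt_inv hr.ne').const_mul (Real.log (1 + θ))
      refine h1.congr_deriv ?_
      rw [hE]
      have h2 : (1:ℝ) + θ ≠ 0 := by linarith
      field_simp
      ring
    · rw [hE]
      refine div_neg_of_neg_of_pos (neg_lt_zero.2 (by positivity)) (by positivity)
  · -- η > 0
    refine ⟨Rcfun θ η, ?_⟩
    intro r hr y hy hCy
    obtain ⟨hR0, heq⟩ := Rc_spec hηpos.le hr hCy
    have hE0 : 0 < Real.exp (r * Rcfun θ η r y) := Real.exp_pos _
    have hden : 0 < η + r * Real.exp (r * Rcfun θ η r y) :=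
      add_pos hηpos (mul_pos hr hE0)
    refine ⟨⟨hR0, by linarith⟩, ?_, ?_, ?_, ?_, ?_, ?_, ?_⟩
    · -- uniqueness
      intro R hRpos hReq
      exact eq_Rc hηpos.le hr hRpos (by linarith)
    · -- iff
      constructor
      · intro h
        have hm : Real.exp (r * Rcfun θ η r y) + η * Rcfun θ η r y
            ≤ Real.exp (r * y) + η * y := by
          rcases lt_or_eq_of_le h with h | h
          · exact (phi_mono hηpos.le hr h).le
          · rw [h]
        have h1 : 1 + θ ≤ Real.exp (r * y) := by linarith
        have h2 : Real.log (1 + θ) ≤ r * y := (Real.log_le_iff_le_exp (by linarith)).2 h1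
        rw [one_div_mul_eq_div, div_le_iff₀ hr]
        linarith
      · intro h
        rw [one_div_mul_eq_div, div_le_iff₀ hr] at h
        have h1 : 1 + θ ≤ Real.exp (r * y) := by
          rw [← Real.exp_log (show (0:ℝ) < 1 + θ by linarith)]
          apply Real.exp_le_exp.2
          linarith
        by_contra hcon
        push_neg at hcon
        have := phi_mono hηpos.le hr hcon
        nlinarith
    · -- equality case
      intro h
      have hry : r * y = Real.log (1 + θ) := by
        rw [h, one_div_mul_eq_div]
        field_simp
      have hphi : Real.exp (r * y) + η * y = (1 + θ) + η * y := by
        rw [hry, Real.exp_log (by linarith)]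
      exact (eq_Rc hηpos.le hr hy hphi).symm
    · -- derivative in y
      have h1 : HasDerivAt (fun R : ℝ => r * R) (r * 1) (Rcfun θ η r y) :=
        (hasDerivAt_id _).const_mul r
      have h2 := h1.exp
      have h3 : HasDerivAt (fun R : ℝ => η * R) (η * 1) (Rcfun θ η r y) :=
        (hasDerivAt_id _).const_mul η
      have hF : HasDerivAt (fun R => (Real.exp (r * R) + η * R - (1 + θ)) / η)
          ((Real.exp (r * Rcfun θ η r y) * r + η) / η) (Rcfun θ η r y) := by
        have := ((h2.add h3).sub_const (1 + θ)).div_const η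
        simpa [mul_one] using this
      have hcont := cont_y hηpos hr hCy
      have hfg : ∀ᶠ z in nhds y,
          (fun R => (Real.exp (r * R) + η * R - (1 + θ)) / η) (Rcfun θ η r z) = z := by
        have hopen : IsOpen {z : ℝ | 0 < θ + η * z} :=
          isOpen_lt continuous_const (by continuity)
        filter_upwards [hopen.mem_nhds hCy] with z hz
        obtain ⟨_, hzeq⟩ := Rc_spec hηpos.le hr hz
        field_simp
        linarith
      have hne : (Real.exp (r * Rcfun θ η r y) * r + η) / η ≠ 0 :=
        (div_pos (add_pos (mul_pos hE0 hr) hηpos) hηpos).ne'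
      have hder := HasDerivAt.of_local_left_inverse hcont hF hne hfg
      have hval : ((Real.exp (r * Rcfun θ η r y) * r + η) / η)⁻¹
          = η / (η + r * Real.exp (r * Rcfun θ η r y)) := by
        rw [inv_div]
        ring_nf
      rw [hval] at hder
      exact hder
    · -- Ico
      refine ⟨div_nonneg hηpos.le hden.le, (div_lt_one hden).2 ?_⟩
      nlinarith [mul_pos hr hE0]
    · -- derivative in r
      have hEeq : (1 + θ) + η * y - η * Rcfun θ η r y = Real.exp (r * Rcfun θ η r y) := by
        linarith
      have hinner : HasDerivAt (fun R : ℝ => (1 + θ) + η * y - η * R) (-(η * 1))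
          (Rcfun θ η r y) :=
        ((hasDerivAt_id _).const_mul η).const_sub ((1 + θ) + η * y)
      have hnum := hinner.log (by rw [hEeq]; exact hE0.ne')
      have hdiv := hnum.div (hasDerivAt_id (Rcfun θ η r y)) hR0.ne'
      simp only [id_eq] at hdiv
      have hD : (-(η * 1) / ((1 + θ) + η * y - η * Rcfun θ η r y) * Rcfun θ η r y -
            Real.log ((1 + θ) + η * y - η * Rcfun θ η r y) * 1) / Rcfun θ η r y ^ 2
          = -((η + r * Real.exp (r * Rcfun θ η r y)) /
              (Rcfun θ η r y * Real.exp (r * Rcfun θ η r y))) := by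
        rw [hEeq, Real.log_exp]
        field_simp
        ring
      rw [hD] at hdiv
      have hne : -((η + r * Real.exp (r * Rcfun θ η r y)) /
          (Rcfun θ η r y * Real.exp (r * Rcfun θ η r y))) ≠ 0 :=
        (neg_lt_zero.2 (div_pos hden (mul_pos hR0 hE0))).ne
      have hcont := cont_r hηpos hr hCy
      have hfg : ∀ᶠ s in nhds r,
          (fun R => Real.log ((1 + θ) + η * y - η * R) / R) (Rcfun θ η s y) = s := by
        filter_upwards [isOpen_Ioi.mem_nhds hr] with s hs
        obtain ⟨hpos, hseq⟩ := Rc_spec hηpos.le hs hCy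
        have h4 : (1 + θ) + η * y - η * Rcfun θ η s y
            = Real.exp (s * Rcfun θ η s y) := by linarith
        rw [h4, Real.log_exp]
        field_simp
      have hder := HasDerivAt.of_local_left_inverse hcont hdiv hne hfg
      have hval : (-((η + r * Real.exp (r * Rcfun θ η r y)) /
            (Rcfun θ η r y * Real.exp (r * Rcfun θ η r y))))⁻¹
          = -(Rcfun θ η r y * Real.exp (r * Rcfun θ η r y)) /
              (η + r * Real.exp (r * Rcfun θ η r y)) := by
        rw [inv_neg, inv_div, neg_div]
      rw [hval] at hder
      exact hder
    · -- negativity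
      exact div_neg_of_neg_of_pos (neg_lt_zero.2 (mul_pos hR0 hE0)) hden
end

section
/- There exists a unique r > 0 such that c − λμ = λ·∫₀^∞ (e^{r·R̂(r,y)} − 1)·S_Y(y) dy + (β²/2)·r, where R̂(r,y) = y for 0 ≤ y < (1/r)·ln(1+θ) and R̂(r,y) = R_c(r,y) for y ≥ (1/r)·ln(1+θ), with R_c(r,y) the unique nonnegative solution of (1+θ) + ηy − ηR = e^{rR}. (This unique r is the maximum adjustment coefficient ρ_J of the classical risk process perturbed by a diffusion.) -/
open MeasureTheory Filter Set
open Topology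

-- Region 2 basic facts
lemma stmt8_reg2 (θ η r y R : ℝ) (hθ : 0 ≤ θ) (hη : 0 ≤ η) (hr : 0 < r) (hy : 0 ≤ y)
    (hR0 : 0 ≤ R) (heq : (1 + θ) + η * y - η * R = Real.exp (r * R))
    (hge : 1 / r * Real.log (1 + θ) ≤ y) :
    R ≤ y ∧ 1 + θ ≤ Real.exp (r * R) := by
  have h1θ : (0:ℝ) < 1 + θ := by linarith
  have hLy : Real.log (1 + θ) ≤ r * y := by
    have h := mul_le_mul_of_nonneg_left hge hr.le
    rw [mul_comm (1/r)] at h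
    rw [← mul_assoc] at h
    field_simp at h
    linarith [h]
  have hRy : R ≤ y := by
    by_contra h
    push_neg at h
    have h1 : Real.exp (r * R) ≤ 1 + θ := by nlinarith
    have h2 : r * R ≤ Real.log (1 + θ) := by
      have := Real.exp_log h1θ
      rw [← this] at h1
      exact (Real.exp_le_exp).mp h1
    have : R ≤ y := by
      have : r * R ≤ r * y := le_trans h2 hLy
      exact le_of_mul_le_mul_left this hr
    linarith
  refine ⟨hRy, ?_⟩
  nlinarith

def stmt8_hyp (θ η : ℝ) (Rhat : ℝ → ℝ → ℝ) : Prop :=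
  ∀ r : ℝ, 0 < r → ∀ y : ℝ, 0 ≤ y →
    (y < 1 / r * Real.log (1 + θ) → Rhat r y = y)
    ∧ (1 / r * Real.log (1 + θ) ≤ y →
        0 ≤ Rhat r y
        ∧ (1 + θ) + η * y - η * Rhat r y = Real.exp (r * Rhat r y))

section

variable {θ η : ℝ} {Rhat : ℝ → ℝ → ℝ}
variable (hθ : 0 ≤ θ) (hη : 0 ≤ η) (hR : stmt8_hyp θ η Rhat)
include hθ hη hR

lemma stmt8_bounds {r y : ℝ} (hr : 0 < r) (hy : 0 ≤ y) :
    1 ≤ Real.exp (r * Rhat r y) ∧ Real.exp (r * Rhat r y) ≤ 1 + θ + η * y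
      ∧ Real.exp (r * Rhat r y) ≤ Real.exp (r * y) := by
  have h1θ : (0:ℝ) < 1 + θ := by linarith
  rcases lt_or_ge y (1 / r * Real.log (1 + θ)) with hcase | hcase
  · have he : Rhat r y = y := (hR r hr y hy).1 hcase
    rw [he]
    have hry : r * y < Real.log (1 + θ) := by
      have h := mul_lt_mul_of_pos_left hcase hr
      rw [← mul_assoc] at h
      field_simp at h
      linarith [h]
    have hle : Real.exp (r * y) ≤ 1 + θ := by
      calc Real.exp (r * y) ≤ Real.exp (Real.log (1 + θ)) := Real.exp_le_exp.mpr hry.le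
        _ = 1 + θ := Real.exp_log h1θ
    exact ⟨Real.one_le_exp (by positivity), by nlinarith, le_refl _⟩
  · obtain ⟨hR0, heq⟩ := (hR r hr y hy).2 hcase
    obtain ⟨hRy, hge⟩ := stmt8_reg2 θ η r y _ hθ hη hr hy hR0 heq hcase
    refine ⟨by linarith, by nlinarith, Real.exp_le_exp.mpr (by nlinarith)⟩

-- comparison in r : for 0 < r ≤ r',  exp(r Rhat r y) ≤ exp(r' Rhat r' y) ≤ exp(r Rhat r y) * exp((r'-r) y)
lemma stmt8_compr {r r' y : ℝ} (hr : 0 < r) (hrr : r ≤ r') (hy : 0 ≤ y) :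
    Real.exp (r * Rhat r y) ≤ Real.exp (r' * Rhat r' y)
      ∧ Real.exp (r' * Rhat r' y) ≤ Real.exp (r * Rhat r y) * Real.exp ((r' - r) * y) := by
  have hr' : 0 < r' := lt_of_lt_of_le hr hrr
  have h1θ : (0:ℝ) < 1 + θ := by linarith
  have hL0 : 0 ≤ Real.log (1 + θ) := Real.log_nonneg (by linarith)
  have hthr : 1 / r' * Real.log (1 + θ) ≤ 1 / r * Real.log (1 + θ) := by
    apply mul_le_mul_of_nonneg_right _ hL0
    apply one_div_le_one_div_of_le hr hrr
  rw [← Real.exp_add]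
  rcases lt_or_ge y (1 / r' * Real.log (1 + θ)) with hc2 | hc2
  · -- both region 1
    have hc1 : y < 1 / r * Real.log (1 + θ) := lt_of_lt_of_le hc2 hthr
    rw [(hR r hr y hy).1 hc1, (hR r' hr' y hy).1 hc2]
    constructor
    · exact Real.exp_le_exp.mpr (by nlinarith)
    · exact Real.exp_le_exp.mpr (by ring_nf; exact le_refl _)
  · obtain ⟨hR0', heq'⟩ := (hR r' hr' y hy).2 hc2
    obtain ⟨hRy', hge'⟩ := stmt8_reg2 θ η r' y _ hθ hη hr' hy hR0' heq' hc2
    rcases lt_or_ge y (1 / r * Real.log (1 + θ)) with hc1 | hc1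
    · -- r region 1, r' region 2
      rw [(hR r hr y hy).1 hc1]
      have hry : r * y < Real.log (1 + θ) := by
        have h := mul_lt_mul_of_pos_left hc1 hr
        rw [← mul_assoc] at h
        field_simp at h
        linarith [h]
      constructor
      · calc Real.exp (r * y) ≤ Real.exp (Real.log (1+θ)) := Real.exp_le_exp.mpr hry.le
          _ = 1 + θ := Real.exp_log h1θ
          _ ≤ _ := hge'
      · exact Real.exp_le_exp.mpr (by nlinarith)
    · -- both region 2
      obtain ⟨hR0, heq⟩ := (hR r hr y hy).2 hc1
      obtain ⟨hRy, hge⟩ := stmt8_reg2 θ η r y _ hθ hη hr hy hR0 heq hc1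
      have hfirst : Real.exp (r * Rhat r y) ≤ Real.exp (r' * Rhat r' y) := by
        by_contra h
        push_neg at h
        have h1 : η * Rhat r y < η * Rhat r' y := by nlinarith
        have h2 : Rhat r y < Rhat r' y := by
          rcases lt_or_ge 0 η with hη' | hη'
          · exact lt_of_mul_lt_mul_left h1 hη'.le
          · have : η = 0 := le_antisymm hη' hη
            rw [this] at h1; simp at h1
        have : Real.exp (r * Rhat r y) ≤ Real.exp (r' * Rhat r' y) :=
          Real.exp_le_exp.mpr (by nlinarith)
        linarith
      refine ⟨hfirst, ?_⟩
      rcases eq_or_lt_of_le hη with hη0 | hη0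
      · -- η = 0 : both exps equal 1+θ
        have e1 : Real.exp (r * Rhat r y) = 1 + θ := by rw [← heq, ← hη0]; ring
        have e2 : Real.exp (r' * Rhat r' y) = 1 + θ := by rw [← heq', ← hη0]; ring
        have e3 : r' * Rhat r' y = r * Rhat r y := Real.exp_eq_exp.mp (e2.trans e1.symm)
        apply Real.exp_le_exp.mpr
        have : 0 ≤ (r' - r) * y := by nlinarith
        linarith
      · have hRR : Rhat r' y ≤ Rhat r y := by
          have h1 : η * Rhat r' y ≤ η * Rhat r y := by nlinarith [hfirst]
          exact le_of_mul_le_mul_left h1 hη0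
        apply Real.exp_le_exp.mpr
        nlinarith

-- monotone in y
lemma stmt8_monoy {r y₁ y₂ : ℝ} (hr : 0 < r) (hy1 : 0 ≤ y₁) (hy12 : y₁ ≤ y₂) :
    Real.exp (r * Rhat r y₁) ≤ Real.exp (r * Rhat r y₂) := by
  have hy2 : 0 ≤ y₂ := le_trans hy1 hy12
  have h1θ : (0:ℝ) < 1 + θ := by linarith
  rcases lt_or_ge y₂ (1 / r * Real.log (1 + θ)) with hc2 | hc2
  · have hc1 : y₁ < 1 / r * Real.log (1 + θ) := lt_of_le_of_lt hy12 hc2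
    rw [(hR r hr y₁ hy1).1 hc1, (hR r hr y₂ hy2).1 hc2]
    exact Real.exp_le_exp.mpr (by nlinarith)
  · obtain ⟨hR02, heq2⟩ := (hR r hr y₂ hy2).2 hc2
    obtain ⟨hRy2, hge2⟩ := stmt8_reg2 θ η r y₂ _ hθ hη hr hy2 hR02 heq2 hc2
    rcases lt_or_ge y₁ (1 / r * Real.log (1 + θ)) with hc1 | hc1
    · rw [(hR r hr y₁ hy1).1 hc1]
      have hry : r * y₁ < Real.log (1 + θ) := by
        have h := mul_lt_mul_of_pos_left hc1 hr
        rw [← mul_assoc] at h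
        field_simp at h
        linarith [h]
      calc Real.exp (r * y₁) ≤ Real.exp (Real.log (1+θ)) := Real.exp_le_exp.mpr hry.le
        _ = 1 + θ := Real.exp_log h1θ
        _ ≤ _ := hge2
    · obtain ⟨hR01, heq1⟩ := (hR r hr y₁ hy1).2 hc1
      obtain ⟨hRy1, hge1⟩ := stmt8_reg2 θ η r y₁ _ hθ hη hr hy1 hR01 heq1 hc1
      by_contra h
      push_neg at h
      have h1 : η * (y₂ - Rhat r y₂) < η * (y₁ - Rhat r y₁) := by nlinarith
      have h2 : r * Rhat r y₂ < r * Rhat r y₁ := Real.exp_lt_exp.mp h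
      have h3 : Rhat r y₂ < Rhat r y₁ := lt_of_mul_lt_mul_left h2 hr.le
      nlinarith

end

set_option maxHeartbeats 2000000 in
theorem stmt_8
    {Ω : Type*} [MeasurableSpace Ω] (P : Measure Ω) [IsProbabilityMeasure P]
    (Y : Ω → ℝ) (hYmeas : Measurable Y)
    (hYpos : P {ω | 0 < Y ω} = 1)
    (hfull : ∀ y : ℝ, 0 < y → 0 < P {ω | Y ω ≤ y} ∧ 0 < P {ω | y < Y ω})
    (μ σ2 : ℝ) (hμ : μ = ∫ ω, Y ω ∂P) (hσ2 : σ2 = ∫ ω, (Y ω) ^ 2 ∂P)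
    (hYint : Integrable Y P) (hY2int : Integrable (fun ω => (Y ω) ^ 2) P)
    (hmgf : ∃ ε : ℝ, 0 < ε ∧ ∀ r : ℝ, |r| < ε →
      Integrable (fun ω => Real.exp (r * Y ω)) P)
    (lam β θ η c κ : ℝ)
    (hlam : 0 < lam) (hβ : 0 < β) (hθ : 0 ≤ θ) (hη : 0 ≤ η) (hθη : 0 < θ + η)
    (hc1 : lam * μ < c) (hc2 : c < (1 + θ) * lam * μ + η / 2 * lam * σ2)
    (hκ : κ = (1 + θ) * lam * μ + η / 2 * lam * σ2 - c)
    (S : ℝ → ℝ) (hS : ∀ y, S y = (P {ω | y < Y ω}).toReal)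
    (Rhat : ℝ → ℝ → ℝ)
    (hRhat : ∀ r : ℝ, 0 < r → ∀ y : ℝ, 0 ≤ y →
      (y < 1 / r * Real.log (1 + θ) → Rhat r y = y)
      ∧ (1 / r * Real.log (1 + θ) ≤ y →
          0 ≤ Rhat r y
          ∧ (1 + θ) + η * y - η * Rhat r y = Real.exp (r * Rhat r y))) :
    ∃! r : ℝ, 0 < r ∧
      c - lam * μ =
        lam * (∫ y in Ioi (0 : ℝ), (Real.exp (r * Rhat r y) - 1) * S y)
          + β ^ 2 / 2 * r := by
  have hRh : stmt8_hyp θ η Rhat := hRhat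
  -- a.e. positivity of Y
  have hY0ae : ∀ᵐ ω ∂P, 0 < Y ω := by
    rw [ae_iff]
    have hmeasY : MeasurableSet {ω | 0 < Y ω} := hYmeas measurableSet_Ioi
    have hset : {ω | ¬ 0 < Y ω} = {ω | 0 < Y ω}ᶜ := by ext ω; simp
    rw [hset, measure_compl hmeasY (measure_ne_top _ _), hYpos, measure_univ]
    simp
  -- S facts
  have hSanti : Antitone S := by
    intro y₁ y₂ h
    rw [hS, hS]
    exact ENNReal.toReal_mono (measure_ne_top _ _)
      (measure_mono (fun ω hω => lt_of_le_of_lt h hω))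
  have hSmeas : Measurable S := hSanti.measurable
  have hS0 : ∀ y, 0 ≤ S y := fun y => by rw [hS]; exact ENNReal.toReal_nonneg
  have hofS : ∀ y, ENNReal.ofReal (S y) = P {ω | y < Y ω} := fun y => by
    rw [hS]; exact ENNReal.ofReal_toReal (measure_ne_top _ _)
  -- integrability of S on Ioi 0
  have hSint : Integrable S (volume.restrict (Ioi 0)) := by
    refine ⟨hSmeas.aestronglyMeasurable, ?_⟩
    rw [hasFiniteIntegral_iff_ofReal (Eventually.of_forall hS0)]
    have key := lintegral_eq_lintegral_meas_lt P (f := Y)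
      (hY0ae.mono fun ω h => h.le) hYmeas.aemeasurable
    calc ∫⁻ y in Ioi 0, ENNReal.ofReal (S y)
        = ∫⁻ y in Ioi 0, P {ω | y < Y ω} := lintegral_congr fun y => hofS y
      _ = ∫⁻ ω, ENNReal.ofReal (Y ω) ∂P := key.symm
      _ < ⊤ := hYint.lintegral_lt_top
  -- integrability of y * S y on Ioi 0
  have hySint : Integrable (fun y => y * S y) (volume.restrict (Ioi 0)) := by
    refine ⟨(measurable_id.mul hSmeas).aestronglyMeasurable, ?_⟩
    have hnn : 0 ≤ᵐ[volume.restrict (Ioi 0)] fun y => y * S y := by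
      filter_upwards [ae_restrict_mem measurableSet_Ioi] with y hy
      exact mul_nonneg (le_of_lt hy) (hS0 y)
    rw [hasFiniteIntegral_iff_ofReal hnn]
    have key := lintegral_comp_eq_lintegral_meas_lt_mul P (f := Y) (g := id)
      (hY0ae.mono fun ω h => h.le) hYmeas.aemeasurable
      (fun t _ => continuous_id.intervalIntegrable 0 t) ?gnn
    case gnn =>
      filter_upwards [ae_restrict_mem measurableSet_Ioi] with t ht
      exact le_of_lt ht
    have e1 : ∫⁻ y in Ioi (0:ℝ), ENNReal.ofReal (y * S y)
        = ∫⁻ y in Ioi (0:ℝ), P {ω | y < Y ω} * ENNReal.ofReal (id y) := by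
      apply setLIntegral_congr_fun measurableSet_Ioi
      intro y hy
      beta_reduce
      rw [ENNReal.ofReal_mul (le_of_lt hy), ← hofS y, id]
      ring
    have e2 : ∫⁻ ω, ENNReal.ofReal (∫ t in (0:ℝ)..Y ω, id t) ∂P
        = ∫⁻ ω, ENNReal.ofReal ((Y ω) ^ 2 / 2) ∂P := by
      apply lintegral_congr
      intro ω
      congr 1
      simp [integral_id]
    rw [e1, ← key, e2]
    exact (hY2int.div_const 2).lintegral_lt_top
  -- measurability of the integrand
  have hmeasH : ∀ r : ℝ, 0 < r → AEStronglyMeasurable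
      (fun y => (Real.exp (r * Rhat r y) - 1) * S y) (volume.restrict (Ioi 0)) := by
    intro r hr
    have hmono : Monotone fun y => Real.exp (r * Rhat r (max y 0)) := by
      intro y₁ y₂ h
      exact stmt8_monoy hθ hη hRh hr (le_max_right _ _) (max_le_max h (le_refl 0))
    have hm : Measurable fun y => (Real.exp (r * Rhat r (max y 0)) - 1) * S y :=
      (hmono.measurable.sub measurable_const).mul hSmeas
    apply hm.aestronglyMeasurable.congr
    filter_upwards [ae_restrict_mem measurableSet_Ioi] with y hy
    rw [max_eq_left (le_of_lt hy)]
  -- dominating function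
  have hDint : Integrable (fun y => θ * S y + η * (y * S y)) (volume.restrict (Ioi 0)) :=
    (hSint.const_mul θ).add (hySint.const_mul η)
  have hbound : ∀ r : ℝ, 0 < r → ∀ y : ℝ, 0 < y →
      ‖(Real.exp (r * Rhat r y) - 1) * S y‖ ≤ θ * S y + η * (y * S y) := by
    intro r hr y hy
    obtain ⟨h1, h2, _⟩ := stmt8_bounds hθ hη hRh hr hy.le
    rw [Real.norm_eq_abs, abs_of_nonneg (mul_nonneg (by linarith) (hS0 y))]
    nlinarith [hS0 y]
  -- integrability of the integrand
  have hHint : ∀ r : ℝ, 0 < r → Integrable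
      (fun y => (Real.exp (r * Rhat r y) - 1) * S y) (volume.restrict (Ioi 0)) := by
    intro r hr
    refine hDint.mono (hmeasH r hr) ?_
    filter_upwards [ae_restrict_mem measurableSet_Ioi] with y hy
    refine le_trans (hbound r hr y hy) ?_
    rw [Real.norm_eq_abs]
    exact le_abs_self _
  set I : ℝ → ℝ := fun r => ∫ y in Ioi (0:ℝ), (Real.exp (r * Rhat r y) - 1) * S y with hIdef
  -- nonnegativity
  have hInn : ∀ r : ℝ, 0 < r → 0 ≤ I r := by
    intro r hr
    apply setIntegral_nonneg measurableSet_Ioi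
    intro y hy
    obtain ⟨h1, _, _⟩ := stmt8_bounds hθ hη hRh hr (le_of_lt hy)
    exact mul_nonneg (by linarith) (hS0 y)
  -- monotone
  have hImono : ∀ r₁ r₂ : ℝ, 0 < r₁ → r₁ ≤ r₂ → I r₁ ≤ I r₂ := by
    intro r₁ r₂ h1 h12
    apply integral_mono_ae (hHint r₁ h1) (hHint r₂ (lt_of_lt_of_le h1 h12))
    filter_upwards [ae_restrict_mem measurableSet_Ioi] with y hy
    have hc := (stmt8_compr hθ hη hRh h1 h12 (le_of_lt hy)).1
    exact mul_le_mul_of_nonneg_right (by linarith) (hS0 y)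
  -- continuity of r ↦ exp (r * Rhat r y) at r₀ > 0
  have hφcont : ∀ r₀ : ℝ, 0 < r₀ → ∀ y : ℝ, 0 ≤ y →
      ContinuousAt (fun r => Real.exp (r * Rhat r y)) r₀ := by
    intro r₀ hr₀ y hy
    set B := 1 + θ + η * y with hBdef
    have hB1 : (1:ℝ) ≤ B := by nlinarith
    have hkey : ∀ r : ℝ, 0 < r →
        |Real.exp (r * Rhat r y) - Real.exp (r₀ * Rhat r₀ y)|
          ≤ B * (Real.exp (|r - r₀| * y) - 1) := by
      intro r hr
      rcases le_total r r₀ with hle | hle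
      · obtain ⟨hmo, hub⟩ := stmt8_compr hθ hη hRh hr hle hy
        obtain ⟨_, hBb, _⟩ := stmt8_bounds hθ hη hRh hr hy
        rw [abs_of_nonpos (by linarith : Real.exp (r * Rhat r y) - Real.exp (r₀ * Rhat r₀ y) ≤ 0),
          abs_of_nonpos (by linarith : r - r₀ ≤ 0), neg_sub, neg_sub]
        have : Real.exp (r₀ * Rhat r₀ y) - Real.exp (r * Rhat r y)
            ≤ Real.exp (r * Rhat r y) * (Real.exp ((r₀ - r) * y) - 1) := by nlinarith
        have hexp1 : 1 ≤ Real.exp ((r₀ - r) * y) :=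
          Real.one_le_exp (mul_nonneg (by linarith) hy)
        nlinarith
      · obtain ⟨hmo, hub⟩ := stmt8_compr hθ hη hRh hr₀ hle hy
        obtain ⟨_, hBb, _⟩ := stmt8_bounds hθ hη hRh hr₀ hy
        rw [abs_of_nonneg (by linarith), abs_of_nonneg (by linarith)]
        have : Real.exp (r * Rhat r y) - Real.exp (r₀ * Rhat r₀ y)
            ≤ Real.exp (r₀ * Rhat r₀ y) * (Real.exp ((r - r₀) * y) - 1) := by nlinarith
        have hexp1 : 1 ≤ Real.exp ((r - r₀) * y) :=
          Real.one_le_exp (mul_nonneg (by linarith) hy)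
        nlinarith
    rw [ContinuousAt, tendsto_iff_dist_tendsto_zero]
    apply squeeze_zero' (g := fun r => B * (Real.exp (|r - r₀| * y) - 1))
    · exact Eventually.of_forall fun r => dist_nonneg
    · filter_upwards [Ioi_mem_nhds hr₀ (a := 0)] with r hr
      rw [Real.dist_eq]
      exact hkey r hr
    · have hgc : Continuous fun r : ℝ => B * (Real.exp (|r - r₀| * y) - 1) := by
        apply continuous_const.mul
        apply Continuous.sub _ continuous_const
        exact Real.continuous_exp.comp (((continuous_id.sub continuous_const).abs).mul
          continuous_const)
      have := hgc.tendsto r₀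
      simpa using this
  -- continuity of I
  have hIcont : ∀ r₀ : ℝ, 0 < r₀ → ContinuousAt I r₀ := by
    intro r₀ hr₀
    apply continuousAt_of_dominated (bound := fun y => θ * S y + η * (y * S y))
    · filter_upwards [Ioi_mem_nhds hr₀ (a := 0)] with r hr
      exact hmeasH r hr
    · filter_upwards [Ioi_mem_nhds hr₀ (a := 0)] with r hr
      filter_upwards [ae_restrict_mem measurableSet_Ioi] with y hy
      exact hbound r hr y hy
    · exact hDint
    · filter_upwards [ae_restrict_mem measurableSet_Ioi] with y hy
      exact ((hφcont r₀ hr₀ y (le_of_lt hy)).sub continuousAt_const).mul continuousAt_const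
  -- limit of I at 0⁺
  have hI0 : Tendsto I (𝓝[>] (0:ℝ)) (𝓝 0) := by
    have key : Tendsto I (𝓝[>] (0:ℝ)) (𝓝 (∫ y in Ioi (0:ℝ), (0:ℝ))) := by
      apply tendsto_integral_filter_of_dominated_convergence
        (bound := fun y => θ * S y + η * (y * S y))
      · filter_upwards [eventually_mem_nhdsWithin] with r hr
        exact hmeasH r hr
      · filter_upwards [eventually_mem_nhdsWithin] with r hr
        filter_upwards [ae_restrict_mem measurableSet_Ioi] with y hy
        exact hbound r hr y hy
      · exact hDint
      · filter_upwards [ae_restrict_mem measurableSet_Ioi] with y hy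
        apply squeeze_zero' (g := fun r => (Real.exp (r * y) - 1) * S y)
        · filter_upwards [eventually_mem_nhdsWithin] with r hr
          obtain ⟨h1, _, _⟩ := stmt8_bounds hθ hη hRh hr (le_of_lt hy)
          exact mul_nonneg (by linarith) (hS0 y)
        · filter_upwards [eventually_mem_nhdsWithin] with r hr
          obtain ⟨_, _, h3⟩ := stmt8_bounds hθ hη hRh hr (le_of_lt hy)
          exact mul_le_mul_of_nonneg_right (by linarith) (hS0 y)
        · have hgc : Continuous fun r : ℝ => (Real.exp (r * y) - 1) * S y := by
            apply Continuous.mul _ continuous_const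
            exact (Real.continuous_exp.comp (continuous_id.mul continuous_const)).sub
              continuous_const
          have h5 : Tendsto (fun r : ℝ => (Real.exp (r * y) - 1) * S y) (𝓝[>] (0:ℝ))
              (𝓝 ((Real.exp ((0:ℝ) * y) - 1) * S y)) :=
            (hgc.tendsto 0).mono_left nhdsWithin_le_nhds
          simpa using h5
    simpa using key
  -- the function G
  have hT : 0 < c - lam * μ := by linarith
  have hb2 : 0 < β ^ 2 / 2 := by positivity
  -- G strictly monotone on positives
  have hGmono : ∀ r₁ r₂ : ℝ, 0 < r₁ → r₁ < r₂ →
      lam * I r₁ + β ^ 2 / 2 * r₁ < lam * I r₂ + β ^ 2 / 2 * r₂ := by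
    intro r₁ r₂ h1 h12
    have hI := hImono r₁ r₂ h1 (le_of_lt h12)
    have h3 : β ^ 2 / 2 * r₁ < β ^ 2 / 2 * r₂ := (mul_lt_mul_iff_right₀ hb2).mpr h12
    have h4 := mul_le_mul_of_nonneg_left hI (le_of_lt hlam)
    exact add_lt_add_of_le_of_lt h4 h3
  -- G tends to 0 at 0⁺
  have hG0 : Tendsto (fun r => lam * I r + β ^ 2 / 2 * r) (𝓝[>] (0:ℝ)) (𝓝 0) := by
    have h1 : Tendsto (fun r => lam * I r) (𝓝[>] (0:ℝ)) (𝓝 (lam * 0)) :=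
      hI0.const_mul lam
    have h2 : Tendsto (fun r : ℝ => β ^ 2 / 2 * r) (𝓝[>] (0:ℝ)) (𝓝 (β ^ 2 / 2 * 0)) :=
      ((continuous_const.mul continuous_id).tendsto 0).mono_left nhdsWithin_le_nhds
    have h3 := h1.add h2
    simpa using h3
  -- choose a with G a < c - lam * μ
  have hev : ∀ᶠ r in 𝓝[>] (0:ℝ),
      lam * I r + β ^ 2 / 2 * r < c - lam * μ ∧ r ∈ Ioi (0:ℝ) :=
    (hG0.eventually_lt_const hT).and eventually_mem_nhdsWithin
  obtain ⟨a, haG, ha⟩ := hev.exists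
  have ha0 : 0 < a := ha
  -- choose b
  obtain ⟨b, hab, hb6⟩ : ∃ b : ℝ, a ≤ b ∧ 2 * (c - lam * μ) < b * β ^ 2 := by
    refine ⟨max a (2 * (c - lam * μ) / β ^ 2) + 1, ?_, ?_⟩
    · linarith [le_max_left a (2 * (c - lam * μ) / β ^ 2)]
    · have hβ2 : 0 < β ^ 2 := by positivity
      have h7 : 2 * (c - lam * μ) / β ^ 2 < max a (2 * (c - lam * μ) / β ^ 2) + 1 := by
        linarith [le_max_right a (2 * (c - lam * μ) / β ^ 2)]
      exact (div_lt_iff₀ hβ2).mp h7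
  have hb0 : 0 < b := lt_of_lt_of_le ha0 hab
  have hGb : c - lam * μ < lam * I b + β ^ 2 / 2 * b := by
    have h1 : 0 ≤ lam * I b := mul_nonneg (le_of_lt hlam) (hInn b hb0)
    linarith [h1, hb6]
  -- IVT
  have hGcont : ContinuousOn (fun r => lam * I r + β ^ 2 / 2 * r) (Icc a b) := by
    intro r hr
    have hrpos : 0 < r := lt_of_lt_of_le ha0 hr.1
    exact ((continuousAt_const.mul (hIcont r hrpos)).add
      ((continuous_const.mul continuous_id).continuousAt)).continuousWithinAt
  have hmem : c - lam * μ ∈ Icc (lam * I a + β ^ 2 / 2 * a) (lam * I b + β ^ 2 / 2 * b) :=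
    ⟨le_of_lt haG, le_of_lt hGb⟩
  obtain ⟨r, hrmem, hGr⟩ := intermediate_value_Icc hab hGcont hmem
  have hrpos : 0 < r := lt_of_lt_of_le ha0 hrmem.1
  refine ⟨r, ⟨hrpos, hGr.symm⟩, ?_⟩
  rintro r' ⟨hr', heq'⟩
  have hGr' : lam * I r' + β ^ 2 / 2 * r' = c - lam * μ := heq'.symm
  rcases lt_trichotomy r' r with h | h | h
  · exact absurd (hGr'.trans hGr.symm) (ne_of_lt (hGmono r' r hr' h))
  · exact h
  · exact absurd (hGr.trans hGr'.symm) (ne_of_lt (hGmono r r' hrpos h))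
end

section
/- Let ρ_J > 0 be the unique solution of c − λμ = λ·∫₀^∞ (e^{ρ·R̂(ρ,y)} − 1)·S_Y(y) dy + (β²/2)·ρ, where R̂(ρ,y) = y for y < (1/ρ)·ln(1+θ) and R̂(ρ,y) is the unique nonnegative solution of (1+θ) + ηy − ηR = e^{ρR} for y ≥ (1/ρ)·ln(1+θ). Then for every retention function R and every r > 0 with E[e^{r·R(Y)}] < ∞ satisfying the Lundberg equation [−κ + λ·((1+θ)·E[R(Y)] + η·E[Y·R(Y)] − (η/2)·E[R(Y)²])]·r − (β²/2)·r² − λ·(E[e^{r·R(Y)}] − 1) = 0, one has r ≤ ρ_J. -/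
open MeasureTheory Filter Set

set_option maxHeartbeats 1000000

namespace Stmt9


variable {θ η ρ : ℝ} {Rh : ℝ → ℝ}

lemma thr_nonneg (hθ : 0 ≤ θ) (hρ : 0 < ρ) : 0 ≤ 1 / ρ * Real.log (1 + θ) :=
  mul_nonneg (by positivity) (Real.log_nonneg (by linarith))

lemma exp_thr (hθ : 0 ≤ θ) (hρ : 0 < ρ) :
    Real.exp (ρ * (1 / ρ * Real.log (1 + θ))) = 1 + θ := by
  have h : ρ * (1 / ρ * Real.log (1 + θ)) = Real.log (1 + θ) := by field_simp
  rw [h, Real.exp_log (by linarith)]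

/-- the hypothesis on Rh -/
def RhHyp (θ η ρ : ℝ) (Rh : ℝ → ℝ) : Prop :=
  ∀ y : ℝ, 0 ≤ y →
    (y < 1 / ρ * Real.log (1 + θ) → Rh y = y)
    ∧ (1 / ρ * Real.log (1 + θ) ≤ y →
        0 ≤ Rh y ∧ (1 + θ) + η * y - η * Rh y = Real.exp (ρ * Rh y))

lemma uniq_sol (hη : 0 ≤ η) (hρ : 0 < ρ) {a b : ℝ}
    (h : Real.exp (ρ * a) + η * a = Real.exp (ρ * b) + η * b) : a = b := by
  have hm : StrictMono (fun z : ℝ => Real.exp (ρ * z) + η * z) := by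
    intro x y hxy
    have h1 : Real.exp (ρ * x) < Real.exp (ρ * y) :=
      Real.exp_lt_exp.2 (by nlinarith)
    simp only []
    nlinarith [mul_le_mul_of_nonneg_left hxy.le hη]
  exact hm.injective h

lemma rh_basic (hθ : 0 ≤ θ) (hη : 0 ≤ η) (hρ : 0 < ρ) (hyp : RhHyp θ η ρ Rh)
    {y : ℝ} (hy : 0 ≤ y) : 0 ≤ Rh y ∧ Rh y ≤ y := by
  rcases lt_or_ge y ((1 / ρ * Real.log (1 + θ))) with hlt | hge
  · rw [(hyp y hy).1 hlt]; exact ⟨hy, le_refl y⟩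
  · obtain ⟨h0, heq⟩ := (hyp y hy).2 hge
    refine ⟨h0, ?_⟩
    by_contra hgt
    push_neg at hgt
    have h1 : Real.exp (ρ * Rh y) ≤ 1 + θ := by nlinarith
    rw [← exp_thr hθ hρ] at h1
    have h2 : Rh y ≤ (1 / ρ * Real.log (1 + θ)) := by
      have := Real.exp_le_exp.1 h1
      nlinarith
    linarith

lemma rh_ge_thr (hθ : 0 ≤ θ) (hη : 0 ≤ η) (hρ : 0 < ρ) (hyp : RhHyp θ η ρ Rh)
    {y : ℝ} (hy : 0 ≤ y) (hge : (1 / ρ * Real.log (1 + θ)) ≤ y) : (1 / ρ * Real.log (1 + θ)) ≤ Rh y := by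
  obtain ⟨h0, heq⟩ := (hyp y hy).2 hge
  have hle := (rh_basic hθ hη hρ hyp hy).2
  have h1 : 1 + θ ≤ Real.exp (ρ * Rh y) := by nlinarith
  rw [← exp_thr hθ hρ] at h1
  have := Real.exp_le_exp.1 h1
  nlinarith

lemma rh_exp_one_le (hθ : 0 ≤ θ) (hη : 0 ≤ η) (hρ : 0 < ρ) (hyp : RhHyp θ η ρ Rh)
    {y : ℝ} (hy : 0 ≤ y) : 1 ≤ Real.exp (ρ * Rh y) := by
  have h0 := (rh_basic hθ hη hρ hyp hy).1
  calc (1:ℝ) = Real.exp 0 := Real.exp_zero.symm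
  _ ≤ _ := Real.exp_le_exp.2 (by nlinarith)

lemma rh_exp_le (hθ : 0 ≤ θ) (hη : 0 ≤ η) (hρ : 0 < ρ) (hyp : RhHyp θ η ρ Rh)
    {y : ℝ} (hy : 0 ≤ y) : Real.exp (ρ * Rh y) ≤ 1 + θ + η * y := by
  rcases lt_or_ge y ((1 / ρ * Real.log (1 + θ))) with hlt | hge
  · rw [(hyp y hy).1 hlt]
    have : Real.exp (ρ * y) ≤ Real.exp (ρ * (1 / ρ * Real.log (1 + θ))) :=
      Real.exp_le_exp.2 (by nlinarith)
    rw [exp_thr hθ hρ] at this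
    nlinarith
  · obtain ⟨h0, heq⟩ := (hyp y hy).2 hge
    nlinarith

lemma rh_mono (hθ : 0 ≤ θ) (hη : 0 ≤ η) (hρ : 0 < ρ) (hyp : RhHyp θ η ρ Rh)
    {y₁ y₂ : ℝ} (hy₁ : 0 ≤ y₁) (h12 : y₁ ≤ y₂) :
    Rh y₁ ≤ Rh y₂ ∧ Rh y₂ - Rh y₁ ≤ y₂ - y₁ := by
  have hy₂ : 0 ≤ y₂ := le_trans hy₁ h12
  rcases lt_or_ge y₂ ((1 / ρ * Real.log (1 + θ))) with h2lt | h2ge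
  · rw [(hyp y₁ hy₁).1 (lt_of_le_of_lt h12 h2lt), (hyp y₂ hy₂).1 h2lt]
    exact ⟨h12, by linarith⟩
  rcases lt_or_ge y₁ ((1 / ρ * Real.log (1 + θ))) with h1lt | h1ge
  · rw [(hyp y₁ hy₁).1 h1lt]
    have ha := rh_ge_thr hθ hη hρ hyp hy₂ h2ge
    have hb := (rh_basic hθ hη hρ hyp hy₂).2
    exact ⟨by linarith, by linarith⟩
  · obtain ⟨h01, heq1⟩ := (hyp y₁ hy₁).2 h1ge
    obtain ⟨h02, heq2⟩ := (hyp y₂ hy₂).2 h2ge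
    have hmono : Rh y₁ ≤ Rh y₂ := by
      by_contra hgt
      push_neg at hgt
      have : Real.exp (ρ * Rh y₂) < Real.exp (ρ * Rh y₁) :=
        Real.exp_lt_exp.2 (by nlinarith)
      nlinarith [mul_le_mul_of_nonneg_left hgt.le hη]
    refine ⟨hmono, ?_⟩
    have htan : Real.exp (ρ * Rh y₂) = Real.exp (ρ * Rh y₁) * Real.exp (ρ * (Rh y₂ - Rh y₁)) := by
      rw [← Real.exp_add]; ring_nf
    have h1 : 1 + ρ * (Rh y₂ - Rh y₁) ≤ Real.exp (ρ * (Rh y₂ - Rh y₁)) := by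
      have := Real.add_one_le_exp (ρ * (Rh y₂ - Rh y₁)); linarith
    have h2 : 1 ≤ Real.exp (ρ * Rh y₁) := rh_exp_one_le hθ hη hρ hyp hy₁
    -- (ρ+η)(b-a) ≤ η(y₂-y₁)
    have key : (ρ + η) * (Rh y₂ - Rh y₁) ≤ η * (y₂ - y₁) := by
      nlinarith [mul_nonneg (sub_nonneg.2 hmono) (sub_nonneg.2 h2)]
    nlinarith [mul_le_mul_of_nonneg_left (sub_nonneg.2 h12) hη]

/-- the function whose expectation appears in the Lundberg equation,
with retention value Rv at claim size y -/
noncomputable def psiF (θ η ρ Rv y : ℝ) : ℝ :=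
  Real.exp (ρ * Rv) - 1 + ρ * (1 + θ) * (y - Rv) + ρ * (η / 2) * (y - Rv) ^ 2

lemma tangent (a b : ℝ) : Real.exp a * (1 + (b - a)) ≤ Real.exp b := by
  have h1 : Real.exp b = Real.exp a * Real.exp (b - a) := by rw [← Real.exp_add]; ring_nf
  have h2 : 1 + (b - a) ≤ Real.exp (b - a) := by
    have := Real.add_one_le_exp (b - a); linarith
  rw [h1]
  exact mul_le_mul_of_nonneg_left h2 (Real.exp_nonneg a)

lemma phi_min (hθ : 0 ≤ θ) (hη : 0 ≤ η) (hρ : 0 < ρ) (hyp : RhHyp θ η ρ Rh)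
    {y Rv : ℝ} (hy : 0 ≤ y) (hRv : 0 ≤ Rv)
    (hcase : Rv ≤ y ∨ 1/ρ * Real.log (1+θ) ≤ y) :
    psiF θ η ρ (Rh y) y ≤ psiF θ η ρ Rv y := by
  rcases le_or_gt (1/ρ * Real.log (1+θ)) y with hge | hlt
  · obtain ⟨h0, heq⟩ := (hyp y hy).2 hge
    set s := Rh y with hs
    have htan := tangent (ρ * s) (ρ * Rv)
    have hprod : ρ * (Rv - s) * ((1 + θ) + η * y - η * s)
        = ρ * (Rv - s) * Real.exp (ρ * s) := by rw [heq]
    unfold psiF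
    nlinarith [htan, hprod, mul_nonneg (mul_nonneg hρ.le hη) (sq_nonneg (Rv - s))]
  · have hRvy : Rv ≤ y := by rcases hcase with h | h; exact h; linarith
    have hid : Rh y = y := (hyp y hy).1 hlt
    rw [hid]
    have hET : Real.exp (ρ * y) ≤ 1 + θ := by
      rw [← exp_thr hθ hρ]
      exact Real.exp_le_exp.2 (by nlinarith)
    have htan := tangent (ρ * y) (ρ * Rv)
    unfold psiF
    nlinarith [mul_nonneg (mul_nonneg hρ.le hη) (sq_nonneg (Rv - y)),
      mul_nonneg (mul_nonneg hρ.le (sub_nonneg.2 hRvy)) (sub_nonneg.2 hET)]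

lemma exp_rh_mono_rate {ρ₁ ρ₂ : ℝ} {Rh₁ Rh₂ : ℝ → ℝ}
    (hθ : 0 ≤ θ) (hη : 0 ≤ η) (hρ₁ : 0 < ρ₁) (hρ₂ : 0 < ρ₂) (h12 : ρ₁ ≤ ρ₂)
    (hyp₁ : RhHyp θ η ρ₁ Rh₁) (hyp₂ : RhHyp θ η ρ₂ Rh₂)
    {y : ℝ} (hy : 0 ≤ y) :
    Real.exp (ρ₁ * Rh₁ y) ≤ Real.exp (ρ₂ * Rh₂ y) := by
  have hlog : 0 ≤ Real.log (1 + θ) := Real.log_nonneg (by linarith)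
  have hT : 1/ρ₂ * Real.log (1+θ) ≤ 1/ρ₁ * Real.log (1+θ) := by
    apply mul_le_mul_of_nonneg_right _ hlog
    rw [div_le_div_iff₀ hρ₂ hρ₁]; nlinarith
  rcases lt_or_ge y (1/ρ₂ * Real.log (1+θ)) with h2 | h2
  · rw [(hyp₁ y hy).1 (lt_of_lt_of_le h2 hT), (hyp₂ y hy).1 h2]
    exact Real.exp_le_exp.2 (by nlinarith)
  rcases lt_or_ge y (1/ρ₁ * Real.log (1+θ)) with h1 | h1
  · rw [(hyp₁ y hy).1 h1]
    obtain ⟨h02, heq2⟩ := (hyp₂ y hy).2 h2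
    have hb := (rh_basic hθ hη hρ₂ hyp₂ hy).2
    have : Real.exp (ρ₁ * y) ≤ 1 + θ := by
      rw [← exp_thr hθ hρ₁]
      exact Real.exp_le_exp.2 (by nlinarith)
    nlinarith [mul_le_mul_of_nonneg_left hb hη]
  · obtain ⟨h01, heq1⟩ := (hyp₁ y hy).2 h1
    obtain ⟨h02, heq2⟩ := (hyp₂ y hy).2 h2
    have key : η * Rh₂ y ≤ η * Rh₁ y := by
      by_contra hgt
      push_neg at hgt
      have hηpos : 0 < η := by
        rcases hη.lt_or_eq with h | h; exact h; nlinarith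
      have hRlt : Rh₁ y < Rh₂ y := by
        by_contra hh; push_neg at hh; nlinarith [mul_le_mul_of_nonneg_left hh hη]
      have : Real.exp (ρ₁ * Rh₁ y) < Real.exp (ρ₂ * Rh₂ y) :=
        Real.exp_lt_exp.2 (by nlinarith)
      nlinarith
    nlinarith

lemma g_cont (hθ : 0 ≤ θ) (hη : 0 ≤ η) (hρ : 0 < ρ) (hyp : RhHyp θ η ρ Rh) :
    Continuous (fun y : ℝ => Real.exp (ρ * Rh (max y 0))) := by
  have hlipR : LipschitzWith 1 (fun y : ℝ => Rh (max y 0)) := by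
    apply LipschitzWith.of_dist_le_mul
    have key : ∀ x y : ℝ, x ≤ y → |Rh (max x 0) - Rh (max y 0)| ≤ |x - y| := by
      intro x y hxy
      have hm : max x 0 ≤ max y 0 := max_le_max hxy le_rfl
      have hmono := rh_mono hθ hη hρ hyp (le_max_right x 0) hm
      calc |Rh (max x 0) - Rh (max y 0)| = Rh (max y 0) - Rh (max x 0) := by
            rw [abs_sub_comm, abs_of_nonneg (by linarith [hmono.1])]
        _ ≤ max y 0 - max x 0 := hmono.2
        _ ≤ |max y 0 - max x 0| := le_abs_self _
        _ ≤ |y - x| := abs_max_sub_max_le_abs y x 0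
        _ = |x - y| := abs_sub_comm _ _
    intro x y
    simp only [Real.dist_eq, NNReal.coe_one, one_mul]
    rcases le_total x y with h | h
    · exact key x y h
    · rw [abs_sub_comm, abs_sub_comm x y]; exact key y x h
  exact Real.continuous_exp.comp ((continuous_const.mul hlipR.continuous))

lemma rh_thr_eq (hθ : 0 ≤ θ) (hη : 0 ≤ η) (hρ : 0 < ρ) (hyp : RhHyp θ η ρ Rh) :
    Rh (1/ρ * Real.log (1+θ)) = 1/ρ * Real.log (1+θ) := by
  set T := 1/ρ * Real.log (1+θ) with hT
  have hT0 : 0 ≤ T := thr_nonneg hθ hρ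
  obtain ⟨h0, heq⟩ := (hyp T hT0).2 le_rfl
  apply uniq_sol hη hρ
  rw [← heq, exp_thr hθ hρ]
  ring

lemma rh_eq_self_of_le_thr (hθ : 0 ≤ θ) (hη : 0 ≤ η) (hρ : 0 < ρ) (hyp : RhHyp θ η ρ Rh)
    {x : ℝ} (hx : 0 ≤ x) (hle : x ≤ 1/ρ * Real.log (1+θ)) : Rh x = x := by
  rcases hle.lt_or_eq with h | h
  · exact (hyp x hx).1 h
  · rw [h]; exact h ▸ rh_thr_eq hθ hη hρ hyp

lemma exp_rho_integral {a b : ℝ} :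
    ∫ y in a..b, Real.exp (ρ * y) * ρ = Real.exp (ρ * b) - Real.exp (ρ * a) := by
  have hcont : Continuous fun x : ℝ => Real.exp (ρ * x) * ρ := by fun_prop
  have hder : ∀ y ∈ uIcc a b, HasDerivAt (fun z => Real.exp (ρ * z)) (Real.exp (ρ * y) * ρ) y := by
    intro y _
    simpa [Function.comp_def] using ((Real.hasDerivAt_exp (ρ * y)).comp y ((hasDerivAt_id y).const_mul ρ))
  exact intervalIntegral.integral_eq_sub_of_hasDerivAt hder (hcont.intervalIntegrable _ _)

/-- FTC on the boundary region -/
lemma ftc_low (hθ : 0 ≤ θ) (hη : 0 ≤ η) (hρ : 0 < ρ) (hyp : RhHyp θ η ρ Rh)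
    {x : ℝ} (hx : 0 ≤ x) (hle : x ≤ 1/ρ * Real.log (1+θ)) :
    psiF θ η ρ (Rh x) x = ρ * ∫ y in (0:ℝ)..x, Real.exp (ρ * Rh (max y 0)) := by
  have hid : Rh x = x := rh_eq_self_of_le_thr hθ hη hρ hyp hx hle
  have hcong : ∫ y in (0:ℝ)..x, Real.exp (ρ * Rh (max y 0))
      = ∫ y in (0:ℝ)..x, Real.exp (ρ * y) := by
    apply intervalIntegral.integral_congr
    intro y hy
    rw [uIcc_of_le hx] at hy
    have hy0 : 0 ≤ y := hy.1
    show Real.exp (ρ * Rh (max y 0)) = Real.exp (ρ * y)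
    rw [max_eq_left hy0, rh_eq_self_of_le_thr hθ hη hρ hyp hy0 (le_trans hy.2 hle)]
  rw [hcong, hid]
  have hInt : ∫ y in (0:ℝ)..x, Real.exp (ρ * y) * ρ
      = Real.exp (ρ * x) - Real.exp (ρ * 0) := exp_rho_integral
  have : (∫ y in (0:ℝ)..x, Real.exp (ρ * y) * ρ)
      = (∫ y in (0:ℝ)..x, Real.exp (ρ * y)) * ρ := by
    rw [← intervalIntegral.integral_mul_const]
  rw [this] at hInt
  unfold psiF
  simp only [mul_zero, Real.exp_zero] at hInt
  have hρ' : ρ ≠ 0 := ne_of_gt hρ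
  have hρ2 : (∫ y in (0:ℝ)..x, Real.exp (ρ * y)) = (Real.exp (ρ * x) - 1)/ρ := by
    field_simp at hInt ⊢
    try linarith
  rw [hρ2]
  field_simp
  try ring


lemma ftc_inc (hθ : 0 ≤ θ) (hη : 0 ≤ η) (hρ : 0 < ρ) (hyp : RhHyp θ η ρ Rh)
    {a b : ℝ} (ha : 0 ≤ a) (hTa : 1/ρ * Real.log (1+θ) ≤ a) (hab : a ≤ b) :
    |(psiF θ η ρ (Rh b) b - psiF θ η ρ (Rh a) a)
        - ρ * ∫ y in a..b, Real.exp (ρ * Rh (max y 0))|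
      ≤ ρ * η / 2 * (b - a) ^ 2 := by
  have hb : 0 ≤ b := le_trans ha hab
  have heqa := ((hyp a ha).2 hTa).2
  have heqb := ((hyp b hb).2 (le_trans hTa hab)).2
  have hba := rh_basic hθ hη hρ hyp ha
  have hbb := rh_basic hθ hη hρ hyp hb
  have hmab := rh_mono hθ hη hρ hyp ha hab
  have gc := g_cont hθ hη hρ hyp
  have hlo : (b - a) * Real.exp (ρ * Rh a) ≤ ∫ y in a..b, Real.exp (ρ * Rh (max y 0)) := by
    have := intervalIntegral.integral_mono_on (μ := volume) (f := fun _ => Real.exp (ρ * Rh a))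
        (g := fun y => Real.exp (ρ * Rh (max y 0))) hab
        intervalIntegrable_const (gc.intervalIntegrable a b) ?_
    · simpa [smul_eq_mul] using this
    · intro y hy
      have hy0 : 0 ≤ y := le_trans ha hy.1
      show Real.exp (ρ * Rh a) ≤ Real.exp (ρ * Rh (max y 0))
      rw [max_eq_left hy0]
      exact Real.exp_le_exp.2 (mul_le_mul_of_nonneg_left
        (rh_mono hθ hη hρ hyp ha hy.1).1 hρ.le)
  have hhi : (∫ y in a..b, Real.exp (ρ * Rh (max y 0))) ≤ (b - a) * Real.exp (ρ * Rh b) := by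
    have := intervalIntegral.integral_mono_on (μ := volume) (g := fun _ => Real.exp (ρ * Rh b))
        (f := fun y => Real.exp (ρ * Rh (max y 0))) hab
        (gc.intervalIntegrable a b) intervalIntegrable_const ?_
    · simpa [smul_eq_mul] using this
    · intro y hy
      have hy0 : 0 ≤ y := le_trans ha hy.1
      show Real.exp (ρ * Rh (max y 0)) ≤ Real.exp (ρ * Rh b)
      rw [max_eq_left hy0]
      exact Real.exp_le_exp.2 (mul_le_mul_of_nonneg_left
        (rh_mono hθ hη hρ hyp hy0 hy.2).1 hρ.le)
  have hpb : psiF θ η ρ (Rh b) b ≤ psiF θ η ρ (Rh a) b :=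
    phi_min hθ hη hρ hyp hb hba.1 (Or.inl (le_trans hba.2 hab))
  have hpa : psiF θ η ρ (Rh a) a ≤ psiF θ η ρ (Rh b) a :=
    phi_min hθ hη hρ hyp ha hbb.1 (Or.inr hTa)
  have hlo' := mul_le_mul_of_nonneg_left hlo hρ.le
  have hhi' := mul_le_mul_of_nonneg_left hhi hρ.le
  rw [abs_le]
  constructor
  · -- lower bound : use hpa and hhi
    have hprod : ρ * (b - a) * ((1 + θ) + η * b - η * Rh b)
        = ρ * (b - a) * Real.exp (ρ * Rh b) := by rw [heqb]
    unfold psiF at hpa ⊢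
    nlinarith [hpa, hhi', hprod]
  · have hprod : ρ * (b - a) * ((1 + θ) + η * a - η * Rh a)
        = ρ * (b - a) * Real.exp (ρ * Rh a) := by rw [heqa]
    unfold psiF at hpb ⊢
    nlinarith [hpb, hlo', hprod]

lemma ftc_interior (hθ : 0 ≤ θ) (hη : 0 ≤ η) (hρ : 0 < ρ) (hyp : RhHyp θ η ρ Rh)
    {x : ℝ} (hTx : 1/ρ * Real.log (1+θ) ≤ x) :
    psiF θ η ρ (Rh x) x - psiF θ η ρ (Rh (1/ρ * Real.log (1+θ))) (1/ρ * Real.log (1+θ))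
      = ρ * ∫ y in (1/ρ * Real.log (1+θ))..x, Real.exp (ρ * Rh (max y 0)) := by
  set T := 1/ρ * Real.log (1+θ) with hTdef
  have hT0 : 0 ≤ T := thr_nonneg hθ hρ
  have gc := g_cont hθ hη hρ hyp
  set φ : ℝ → ℝ := fun z => psiF θ η ρ (Rh z) z with hφ
  set D := (φ x - φ T) - ρ * ∫ y in T..x, Real.exp (ρ * Rh (max y 0)) with hD
  have claim : ∀ n : ℕ, 0 < n → |D| ≤ ρ * η / 2 * (x - T)^2 / n := by
    intro n hn
    have hn' : (n : ℝ) ≠ 0 := Nat.cast_ne_zero.2 hn.ne'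
    set d := (x - T)/n with hd
    have hd0 : 0 ≤ d := div_nonneg (by linarith) (Nat.cast_nonneg n)
    set a : ℕ → ℝ := fun i => T + i * d with hadef
    have ha0 : a 0 = T := by simp [hadef]
    have han : a n = x := by
      simp only [hadef, hd]
      field_simp
      ring
    have hstep : ∀ i : ℕ, a (i+1) - a i = d := by
      intro i; simp only [hadef]; push_cast; ring
    have hTai : ∀ i : ℕ, T ≤ a i := by
      intro i; simp only [hadef]
      nlinarith [Nat.cast_nonneg (α := ℝ) i, hd0]
    have hmono_a : ∀ i : ℕ, a i ≤ a (i+1) := by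
      intro i; have := hstep i; linarith
    have sum1 : ∑ i ∈ Finset.range n, (φ (a (i+1)) - φ (a i)) = φ x - φ T := by
      rw [Finset.sum_range_sub (fun i => φ (a i)) n, ha0, han]
    have sum2 : ∑ i ∈ Finset.range n,
        (∫ y in (a i)..(a (i+1)), Real.exp (ρ * Rh (max y 0)))
        = ∫ y in T..x, Real.exp (ρ * Rh (max y 0)) := by
      rw [intervalIntegral.sum_integral_adjacent_intervals
        (fun i _ => gc.intervalIntegrable _ _), ha0, han]
    have hDsum : D = ∑ i ∈ Finset.range n,
        ((φ (a (i+1)) - φ (a i))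
          - ρ * ∫ y in (a i)..(a (i+1)), Real.exp (ρ * Rh (max y 0))) := by
      rw [Finset.sum_sub_distrib, sum1, ← Finset.mul_sum, sum2]
    calc |D| ≤ ∑ i ∈ Finset.range n, |(φ (a (i+1)) - φ (a i))
          - ρ * ∫ y in (a i)..(a (i+1)), Real.exp (ρ * Rh (max y 0))| := by
          rw [hDsum]; exact Finset.abs_sum_le_sum_abs _ _
      _ ≤ ∑ _i ∈ Finset.range n, ρ * η / 2 * d ^ 2 := by
          apply Finset.sum_le_sum
          intro i _
          have := ftc_inc hθ hη hρ hyp (le_trans hT0 (hTai i)) (hTai i) (hmono_a i)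
          rw [hstep i] at this
          exact this
      _ = n * (ρ * η / 2 * d ^ 2) := by rw [Finset.sum_const, Finset.card_range]; ring
      _ = ρ * η / 2 * (x - T)^2 / n := by
          rw [hd]; field_simp
  have hconv : Tendsto (fun n : ℕ => ρ * η / 2 * (x - T)^2 / n) atTop (nhds 0) :=
    tendsto_const_div_atTop_nhds_zero_nat _
  have hle : |D| ≤ 0 :=
    ge_of_tendsto hconv (eventually_atTop.2 ⟨1, fun n hn => claim n hn⟩)
  have : D = 0 := abs_eq_zero.1 (le_antisymm hle (abs_nonneg _))
  rw [hD] at this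
  linarith

lemma ftc_main (hθ : 0 ≤ θ) (hη : 0 ≤ η) (hρ : 0 < ρ) (hyp : RhHyp θ η ρ Rh)
    {x : ℝ} (hx : 0 ≤ x) :
    psiF θ η ρ (Rh x) x = ρ * ∫ y in (0:ℝ)..x, Real.exp (ρ * Rh (max y 0)) := by
  set T := 1/ρ * Real.log (1+θ) with hTdef
  have hT0 : 0 ≤ T := thr_nonneg hθ hρ
  have gc := g_cont hθ hη hρ hyp
  rcases le_or_gt x T with hle | hlt
  · exact ftc_low hθ hη hρ hyp hx hle
  · have h1 := ftc_low hθ hη hρ hyp hT0 (le_refl T)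
    have h2 := ftc_interior hθ hη hρ hyp hlt.le
    have h3 := intervalIntegral.integral_add_adjacent_intervals (μ := volume)
      (a := 0) (b := T) (c := x) (gc.intervalIntegrable _ _) (gc.intervalIntegrable _ _)
    rw [← h3, mul_add]
    linarith


end Stmt9


open Stmt9

theorem stmt_9
    {Ω : Type*} [MeasurableSpace Ω] (P : Measure Ω) [IsProbabilityMeasure P]
    (Y : Ω → ℝ) (hYmeas : Measurable Y)
    (hYpos : P {ω | 0 < Y ω} = 1)
    (hfull : ∀ y : ℝ, 0 < y → 0 < P {ω | Y ω ≤ y} ∧ 0 < P {ω | y < Y ω})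
    (μ σ2 : ℝ) (hμ : μ = ∫ ω, Y ω ∂P) (hσ2 : σ2 = ∫ ω, (Y ω) ^ 2 ∂P)
    (hYint : Integrable Y P) (hY2int : Integrable (fun ω => (Y ω) ^ 2) P)
    (hmgf : ∃ ε : ℝ, 0 < ε ∧ ∀ r : ℝ, |r| < ε →
      Integrable (fun ω => Real.exp (r * Y ω)) P)
    (lam β θ η c κ : ℝ)
    (hlam : 0 < lam) (hβ : 0 < β) (hθ : 0 ≤ θ) (hη : 0 ≤ η) (hθη : 0 < θ + η)
    (hc1 : lam * μ < c) (hc2 : c < (1 + θ) * lam * μ + η / 2 * lam * σ2)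
    (hκ : κ = (1 + θ) * lam * μ + η / 2 * lam * σ2 - c)
    (S : ℝ → ℝ) (hS : ∀ y, S y = (P {ω | y < Y ω}).toReal)
    (Rhat : ℝ → ℝ → ℝ)
    (hRhat : ∀ r : ℝ, 0 < r → ∀ y : ℝ, 0 ≤ y →
      (y < 1 / r * Real.log (1 + θ) → Rhat r y = y)
      ∧ (1 / r * Real.log (1 + θ) ≤ y →
          0 ≤ Rhat r y
          ∧ (1 + θ) + η * y - η * Rhat r y = Real.exp (r * Rhat r y)))
    (ρJ : ℝ) (hρJpos : 0 < ρJ)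
    (hρJeq : c - lam * μ =
      lam * (∫ y in Ioi (0 : ℝ), (Real.exp (ρJ * Rhat ρJ y) - 1) * S y)
        + β ^ 2 / 2 * ρJ)
    (hρJuniq : ∀ r : ℝ, 0 < r →
      c - lam * μ =
        lam * (∫ y in Ioi (0 : ℝ), (Real.exp (r * Rhat r y) - 1) * S y)
          + β ^ 2 / 2 * r →
      r = ρJ) :
    ∀ R : ℝ → ℝ, Measurable R → (∀ y : ℝ, 0 ≤ y → 0 ≤ R y ∧ R y ≤ y) →
      ∀ r : ℝ, 0 < r →
        Integrable (fun ω => Real.exp (r * R (Y ω))) P →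
        (-κ + lam * ((1 + θ) * (∫ ω, R (Y ω) ∂P)
              + η * (∫ ω, Y ω * R (Y ω) ∂P)
              - η / 2 * (∫ ω, (R (Y ω)) ^ 2 ∂P))) * r
          - β ^ 2 / 2 * r ^ 2
          - lam * ((∫ ω, Real.exp (r * R (Y ω)) ∂P) - 1) = 0 →
        r ≤ ρJ := by
  intro R hRmeas hRbd r hr hExpInt hLund
  subst hκ
  have hypr : RhHyp θ η r (Rhat r) := hRhat r hr
  have hypJ : RhHyp θ η ρJ (Rhat ρJ) := hRhat ρJ hρJpos
  have hms : MeasurableSet {ω | 0 < Y ω} := measurableSet_lt measurable_const hYmeas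
  have haeY : ∀ᵐ ω ∂P, 0 < Y ω := (mem_ae_iff_prob_eq_one hms).2 hYpos
  have hYnn : 0 ≤ᵐ[P] Y := haeY.mono fun ω h => h.le
  -- integrability of the building blocks
  have hR1 : Integrable (fun ω => R (Y ω)) P := by
    refine hYint.mono' ((hRmeas.comp hYmeas).aestronglyMeasurable) ?_
    filter_upwards [haeY] with ω hω
    have h := hRbd (Y ω) hω.le
    rw [Real.norm_eq_abs, abs_of_nonneg h.1]; exact h.2
  have hR2 : Integrable (fun ω => Y ω * R (Y ω)) P := by
    refine hY2int.mono' ((hYmeas.mul (hRmeas.comp hYmeas)).aestronglyMeasurable) ?_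
    filter_upwards [haeY] with ω hω
    have h := hRbd (Y ω) hω.le
    rw [Real.norm_eq_abs, abs_of_nonneg (mul_nonneg hω.le h.1)]
    nlinarith [h.2, hω.le, h.1]
  have hR3 : Integrable (fun ω => (R (Y ω))^2) P := by
    refine hY2int.mono' (((hRmeas.comp hYmeas).pow_const 2).aestronglyMeasurable) ?_
    filter_upwards [haeY] with ω hω
    have h := hRbd (Y ω) hω.le
    rw [Real.norm_eq_abs, abs_of_nonneg (sq_nonneg _)]
    nlinarith [h.2, hω.le, h.1]
  -- the Lundberg integrand
  set ψ : Ω → ℝ := fun ω => Real.exp (r * R (Y ω)) - 1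
      + r * (1 + θ) * (Y ω - R (Y ω)) + r * (η/2) * (Y ω - R (Y ω))^2 with hψdef
  have hψeq : ψ = fun ω => Real.exp (r * R (Y ω)) + ((r*(1+θ)) * Y ω
      + ((-(r*(1+θ))) * R (Y ω) + ((r*(η/2)) * ((Y ω)^2)
      + ((-(r*η)) * (Y ω * R (Y ω)) + ((r*(η/2)) * ((R (Y ω))^2) + (-1 : ℝ)))))) := by
    funext ω; simp only [hψdef]; ring
  have t5 : Integrable (fun ω => (r*(η/2)) * ((R (Y ω))^2) + (-1 : ℝ)) P :=
    (hR3.const_mul _).add (integrable_const _)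
  have t4 : Integrable (fun ω => (-(r*η)) * (Y ω * R (Y ω))
      + ((r*(η/2)) * ((R (Y ω))^2) + (-1 : ℝ))) P := (hR2.const_mul _).add t5
  have t3 : Integrable (fun ω => (r*(η/2)) * ((Y ω)^2)
      + ((-(r*η)) * (Y ω * R (Y ω)) + ((r*(η/2)) * ((R (Y ω))^2) + (-1 : ℝ)))) P :=
    (hY2int.const_mul _).add t4
  have t2 : Integrable (fun ω => (-(r*(1+θ))) * R (Y ω) + ((r*(η/2)) * ((Y ω)^2)
      + ((-(r*η)) * (Y ω * R (Y ω)) + ((r*(η/2)) * ((R (Y ω))^2) + (-1 : ℝ))))) P :=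
    (hR1.const_mul _).add t3
  have t1 : Integrable (fun ω => (r*(1+θ)) * Y ω + ((-(r*(1+θ))) * R (Y ω)
      + ((r*(η/2)) * ((Y ω)^2) + ((-(r*η)) * (Y ω * R (Y ω))
      + ((r*(η/2)) * ((R (Y ω))^2) + (-1 : ℝ)))))) P := (hYint.const_mul _).add t2
  have hψInt : Integrable ψ P := by rw [hψeq]; exact hExpInt.add t1
  have hψVal : ∫ ω, ψ ω ∂P = (∫ ω, Real.exp (r * R (Y ω)) ∂P)
      + ((r*(1+θ)) * μ + ((-(r*(1+θ))) * (∫ ω, R (Y ω) ∂P)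
      + ((r*(η/2)) * σ2 + ((-(r*η)) * (∫ ω, Y ω * R (Y ω) ∂P)
      + ((r*(η/2)) * (∫ ω, (R (Y ω))^2 ∂P) + (-1 : ℝ)))))) := by
    rw [hψeq, integral_add hExpInt t1, integral_add (hYint.const_mul _) t2,
      integral_add (hR1.const_mul _) t3, integral_add (hY2int.const_mul _) t4,
      integral_add (hR2.const_mul _) t5, integral_add (hR3.const_mul _) (integrable_const _),
      integral_const_mul, integral_const_mul, integral_const_mul, integral_const_mul,
      integral_const_mul, integral_const]
    simp [hμ, hσ2]
  have hKey : lam * ∫ ω, ψ ω ∂P = c * r - β^2/2 * r^2 := by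
    rw [hψVal]; linear_combination -hLund
  -- the function W
  have hgc : Continuous (fun y : ℝ => Real.exp (r * Rhat r (max y 0))) :=
    g_cont hθ hη hr hypr
  set W : ℝ → ℝ := fun x => ∫ y in (0:ℝ)..x, Real.exp (r * Rhat r (max y 0)) with hWdef
  have hWmono : Monotone W := by
    intro x1 x2 h12
    have h3 := intervalIntegral.integral_add_adjacent_intervals (μ := volume)
      (a := 0) (b := x1) (c := x2) (f := fun y => Real.exp (r * Rhat r (max y 0)))
      (hgc.intervalIntegrable _ _) (hgc.intervalIntegrable _ _)
    have h4 : 0 ≤ ∫ y in x1..x2, Real.exp (r * Rhat r (max y 0)) :=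
      intervalIntegral.integral_nonneg h12 (fun u _ => (Real.exp_pos _).le)
    simp only [hWdef]; linarith
  have hW0 : W 0 = 0 := intervalIntegral.integral_same
  have hphiW : ∀ᵐ ω ∂P, r * W (Y ω) ≤ ψ ω ∧ 0 ≤ W (Y ω) := by
    filter_upwards [haeY] with ω hω
    have hyω : 0 ≤ Y ω := hω.le
    have h1 : psiF θ η r (Rhat r (Y ω)) (Y ω) = r * W (Y ω) :=
      ftc_main hθ hη hr hypr hyω
    have h2 : psiF θ η r (Rhat r (Y ω)) (Y ω) ≤ psiF θ η r (R (Y ω)) (Y ω) :=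
      phi_min hθ hη hr hypr hyω (hRbd _ hyω).1 (Or.inl (hRbd _ hyω).2)
    have h3 : psiF θ η r (R (Y ω)) (Y ω) = ψ ω := by simp only [psiF, hψdef]
    constructor
    · linarith
    · have := hWmono hyω; rw [hW0] at this; linarith
  have hWnn : 0 ≤ᵐ[P] fun ω => W (Y ω) := hphiW.mono fun ω h => h.2
  have hWint : Integrable (fun ω => W (Y ω)) P := by
    refine (hψInt.const_mul (1/r)).mono'
      ((hWmono.measurable.comp hYmeas).aestronglyMeasurable) ?_
    filter_upwards [hphiW] with ω h
    rw [Real.norm_eq_abs, abs_of_nonneg h.2]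
    rw [div_mul_eq_mul_div, le_div_iff₀ hr]
    linarith [h.1]
  have hIneq1 : r * ∫ ω, W (Y ω) ∂P ≤ ∫ ω, ψ ω ∂P := by
    have h := integral_mono_ae (hWint.const_mul r) hψInt (hphiW.mono fun ω h => h.1)
    rwa [integral_const_mul] at h
  -- Tonelli / layer cake
  have hTon := lintegral_comp_eq_lintegral_meas_lt_mul P (f := Y)
    (g := fun y => Real.exp (r * Rhat r (max y 0))) hYnn hYmeas.aemeasurable
    (fun t _ => hgc.intervalIntegrable _ _)
    (Eventually.of_forall fun t => (Real.exp_pos _).le)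
  have hLHSW : ENNReal.ofReal (∫ ω, W (Y ω) ∂P)
      = ∫⁻ t in Ioi 0, P {a | t < Y a} * ENNReal.ofReal (Real.exp (r * Rhat r (max t 0))) := by
    rw [ofReal_integral_eq_lintegral_ofReal hWint hWnn]
    exact hTon
  -- S facts
  have hSanti : Antitone S := by
    intro s t hst
    rw [hS, hS]
    exact ENNReal.toReal_mono (measure_ne_top P _)
      (measure_mono (fun ω h => lt_of_le_of_lt hst h))
  have hSmeas : Measurable S := hSanti.measurable
  have hSofReal : ∀ t, P {ω | t < Y ω} = ENNReal.ofReal (S t) := fun t => by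
    rw [hS]; exact (ENNReal.ofReal_toReal (measure_ne_top P _)).symm
  have hSnn : ∀ t, 0 ≤ S t := fun t => by rw [hS]; exact ENNReal.toReal_nonneg
  -- rewrite RHS as an ofReal integrand
  have hRHSW : (∫⁻ t in Ioi 0, P {a | t < Y a}
        * ENNReal.ofReal (Real.exp (r * Rhat r (max t 0))))
      = ∫⁻ t in Ioi 0, ENNReal.ofReal
          (Real.exp (r * Rhat r (max t 0)) * S t) := by
    apply lintegral_congr
    intro t
    rw [hSofReal t, ← ENNReal.ofReal_mul (hSnn t), mul_comm (S t) _]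
  have hfinW : (∫⁻ t in Ioi 0, ENNReal.ofReal
      (Real.exp (r * Rhat r (max t 0)) * S t)) < ⊤ := by
    rw [← hRHSW, ← hLHSW]; exact ENNReal.ofReal_lt_top
  have hgSint : IntegrableOn (fun t => Real.exp (r * Rhat r (max t 0)) * S t) (Ioi 0) := by
    constructor
    · exact (hgc.measurable.mul hSmeas).aestronglyMeasurable
    · rw [hasFiniteIntegral_iff_ofReal (Eventually.of_forall fun t =>
        mul_nonneg (Real.exp_pos _).le (hSnn t))]
      exact hfinW
  have hgSval : ∫ t in Ioi 0, Real.exp (r * Rhat r (max t 0)) * S t = ∫ ω, W (Y ω) ∂P := by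
    have h1 := ofReal_integral_eq_lintegral_ofReal hgSint
      (Eventually.of_forall fun t => mul_nonneg (Real.exp_pos _).le (hSnn t))
    have h2 : ENNReal.ofReal (∫ t in Ioi 0, Real.exp (r * Rhat r (max t 0)) * S t)
        = ENNReal.ofReal (∫ ω, W (Y ω) ∂P) := by rw [h1, ← hRHSW, ← hLHSW]
    have h3 : 0 ≤ ∫ t in Ioi 0, Real.exp (r * Rhat r (max t 0)) * S t :=
      setIntegral_nonneg measurableSet_Ioi fun t _ =>
        mul_nonneg (Real.exp_pos _).le (hSnn t)
    have h4 : 0 ≤ ∫ ω, W (Y ω) ∂P := integral_nonneg_of_ae hWnn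
    exact (ENNReal.ofReal_eq_ofReal_iff h3 h4).1 h2
  -- integrability of S and t*S on Ioi 0
  have hlcY := lintegral_eq_lintegral_meas_lt P hYnn hYmeas.aemeasurable
  have hSintOn : IntegrableOn S (Ioi 0) := by
    constructor
    · exact hSmeas.aestronglyMeasurable
    · rw [hasFiniteIntegral_iff_ofReal (Eventually.of_forall hSnn)]
      have : (∫⁻ t in Ioi 0, ENNReal.ofReal (S t)) = ∫⁻ t in Ioi 0, P {a | t < Y a} :=
        lintegral_congr fun t => (hSofReal t).symm
      rw [this, ← hlcY]
      exact hYint.lintegral_lt_top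
  have hSval : ∫ t in Ioi 0, S t = μ := by
    rw [hμ, hYint.integral_eq_integral_meas_lt hYnn]
    exact setIntegral_congr_fun measurableSet_Ioi fun t _ => hS t
  -- t * S t integrable
  have h2t := lintegral_comp_eq_lintegral_meas_lt_mul P (f := Y)
    (g := fun t => 2*t) hYnn hYmeas.aemeasurable
    (fun t _ => (continuous_const.mul continuous_id).intervalIntegrable _ _)
    ((ae_restrict_iff' measurableSet_Ioi).2 (Eventually.of_forall fun t ht => by
      simp only [mem_Ioi] at ht; positivity))
  have h2teq : ∀ x : ℝ, (∫ t in (0:ℝ)..x, 2*t) = x^2 := by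
    intro x
    rw [intervalIntegral.integral_const_mul, integral_id]
    ring
  have hfin2 : (∫⁻ t in Ioi 0, P {a | t < Y a} * ENNReal.ofReal (2*t)) < ⊤ := by
    rw [← h2t]
    have : (∫⁻ ω, ENNReal.ofReal (∫ t in (0:ℝ)..Y ω, 2*t) ∂P)
        = ∫⁻ ω, ENNReal.ofReal ((Y ω)^2) ∂P := lintegral_congr fun ω => by rw [h2teq]
    rw [this]
    exact hY2int.lintegral_lt_top
  have htSint : IntegrableOn (fun t => t * S t) (Ioi 0) := by
    constructor
    · exact (measurable_id.mul hSmeas).aestronglyMeasurable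
    · rw [hasFiniteIntegral_iff_ofReal ((ae_restrict_iff' measurableSet_Ioi).2
        (Eventually.of_forall fun t ht => mul_nonneg (le_of_lt ht) (hSnn t)))]
      refine lt_of_le_of_lt ?_ hfin2
      apply setLIntegral_mono' measurableSet_Ioi
      intro t ht
      rw [hSofReal t, ← ENNReal.ofReal_mul (hSnn t)]
      apply ENNReal.ofReal_le_ofReal
      nlinarith [hSnn t, mem_Ioi.1 ht]
  -- domination of (g - 1) * S
  have hdom : IntegrableOn (fun t => (θ + η*t) * S t) (Ioi 0) := by
    have heq : (fun t => (θ + η*t) * S t) = fun t => θ * S t + η * (t * S t) := by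
      funext t; ring
    rw [heq]
    exact (hSintOn.const_mul θ).add (htSint.const_mul η)
  have hgm1S : ∀ (ρ' : ℝ) (hρ' : 0 < ρ'), RhHyp θ η ρ' (Rhat ρ') →
      IntegrableOn (fun t => (Real.exp (ρ' * Rhat ρ' (max t 0)) - 1) * S t) (Ioi 0) := by
    intro ρ' hρ' hyp'
    have hgc' := g_cont hθ hη hρ' hyp'
    refine hdom.mono' (((hgc'.measurable.sub measurable_const).mul hSmeas).aestronglyMeasurable) ?_
    rw [ae_restrict_iff' measurableSet_Ioi]
    refine Eventually.of_forall fun t ht => ?_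
    have ht' : (0:ℝ) < t := mem_Ioi.1 ht
    have hmax : max t 0 = t := max_eq_left ht'.le
    have h1 : 1 ≤ Real.exp (ρ' * Rhat ρ' t) :=
      rh_exp_one_le hθ hη hρ' hyp' ht'.le
    have h2 : Real.exp (ρ' * Rhat ρ' t) ≤ 1 + θ + η * t :=
      rh_exp_le hθ hη hρ' hyp' ht'.le
    show ‖(Real.exp (ρ' * Rhat ρ' (max t 0)) - 1) * S t‖ ≤ (θ + η * t) * S t
    rw [hmax, Real.norm_eq_abs, abs_of_nonneg (mul_nonneg (by linarith) (hSnn t))]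
    nlinarith [hSnn t]
  have hgm1Sr := hgm1S r hr hypr
  have hgm1SJ := hgm1S ρJ hρJpos hypJ
  -- split the integral
  have hsplit : ∫ t in Ioi 0, Real.exp (r * Rhat r (max t 0)) * S t
      = (∫ t in Ioi 0, (Real.exp (r * Rhat r (max t 0)) - 1) * S t)
        + ∫ t in Ioi 0, S t := by
    rw [← integral_add hgm1Sr hSintOn]
    apply setIntegral_congr_fun measurableSet_Ioi
    intro t _
    simp only []
    ring
  -- monotonicity in ρ of the integral
  by_contra hcon
  push_neg at hcon
  have hmonoI : (∫ t in Ioi 0, (Real.exp (ρJ * Rhat ρJ (max t 0)) - 1) * S t)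
      ≤ ∫ t in Ioi 0, (Real.exp (r * Rhat r (max t 0)) - 1) * S t := by
    apply setIntegral_mono_on hgm1SJ hgm1Sr measurableSet_Ioi
    intro t _
    exact mul_le_mul_of_nonneg_right (sub_le_sub_right
      (exp_rh_mono_rate hθ hη hρJpos hr hcon.le hypJ hypr (le_max_right t 0)) 1) (hSnn t)
  have hcongJ : (∫ y in Ioi (0:ℝ), (Real.exp (ρJ * Rhat ρJ y) - 1) * S y)
      = ∫ t in Ioi 0, (Real.exp (ρJ * Rhat ρJ (max t 0)) - 1) * S t := by
    apply setIntegral_congr_fun measurableSet_Ioi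
    intro t ht
    show (Real.exp (ρJ * Rhat ρJ t) - 1) * S t
        = (Real.exp (ρJ * Rhat ρJ (max t 0)) - 1) * S t
    rw [max_eq_left (le_of_lt (mem_Ioi.1 ht))]
  -- final contradiction
  set Ir := ∫ t in Ioi 0, (Real.exp (r * Rhat r (max t 0)) - 1) * S t with hIr
  set IJ := ∫ t in Ioi 0, (Real.exp (ρJ * Rhat ρJ (max t 0)) - 1) * S t with hIJ
  rw [hcongJ] at hρJeq
  have hA : lam * (r * (Ir + μ)) ≤ c * r - β^2/2 * r^2 := by
    rw [← hKey]
    apply mul_le_mul_of_nonneg_left _ hlam.le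
    rw [← hSval, ← hsplit, hgSval]
    exact hIneq1
  have hB : lam * IJ ≤ lam * Ir := mul_le_mul_of_nonneg_left hmonoI hlam.le
  have hb2 : 0 < β^2 := by positivity
  have hA2 : r*(lam*Ir) + lam*(r*μ) ≤ c*r - β^2/2*r^2 :=
    le_of_le_of_eq (le_of_eq (by ring : r*(lam*Ir) + lam*(r*μ) = lam*(r*(Ir+μ)))) rfl |>.trans hA
  have hIrlow : c - lam*μ - β^2/2*ρJ ≤ lam * Ir := by linarith [hB, hρJeq]
  have hC := mul_le_mul_of_nonneg_left hIrlow hr.le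
  have hCr : r * (c - lam*μ - β^2/2*ρJ) = c*r - lam*(r*μ) - β^2/2*(ρJ*r) := by ring
  rw [hCr] at hC
  have hfin : β^2/2*r^2 ≤ β^2/2*(ρJ*r) := by linarith [hA2, hC]
  have : β^2/2*(ρJ*r) < β^2/2*r^2 := by nlinarith [mul_pos hb2 hr, hcon]
  linarith
end

section
/- Let γ ≥ 2c/β². Then for every x > 0 and every retention function R, [−κ + λ·((1+θ)·E[R(Y)] + η·E[Y·R(Y)] − (η/2)·E[R(Y)²])]·γ − (β²/2)·γ² − λ·(E[min(e^{γ·R(Y)}, e^{γx})] − 1) ≤ 0. (This is the analytic content of the assertion that x ↦ min(e^{−γx}, 1) is a stochastic/viscosity subsolution of the Hamilton–Jacobi–Bellman equation of the ruin-minimization problem.) -/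
open MeasureTheory Filter Set

theorem stmt_11
    {Ω : Type*} [MeasurableSpace Ω] (P : Measure Ω) [IsProbabilityMeasure P]
    (Y : Ω → ℝ) (hYmeas : Measurable Y)
    (hYpos : P {ω | 0 < Y ω} = 1)
    (μ σ2 : ℝ) (hμ : μ = ∫ ω, Y ω ∂P) (hσ2 : σ2 = ∫ ω, (Y ω) ^ 2 ∂P)
    (hYint : Integrable Y P) (hY2int : Integrable (fun ω => (Y ω) ^ 2) P)
    (lam β θ η c κ : ℝ)
    (hlam : 0 < lam) (hβ : 0 < β) (hθ : 0 ≤ θ) (hη : 0 ≤ η)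
    (hc1 : lam * μ < c) (hc2 : c < (1 + θ) * lam * μ + η / 2 * lam * σ2)
    (hκ : κ = (1 + θ) * lam * μ + η / 2 * lam * σ2 - c)
    (γ : ℝ) (hγ : 2 * c / β ^ 2 ≤ γ)
    (x : ℝ) (hx : 0 < x)
    (R : ℝ → ℝ) (hRmeas : Measurable R)
    (hR : ∀ y : ℝ, 0 ≤ y → 0 ≤ R y ∧ R y ≤ y) :
    (-κ + lam * ((1 + θ) * (∫ ω, R (Y ω) ∂P)
          + η * (∫ ω, Y ω * R (Y ω) ∂P)
          - η / 2 * (∫ ω, (R (Y ω)) ^ 2 ∂P))) * γ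
      - β ^ 2 / 2 * γ ^ 2
      - lam * ((∫ ω, min (Real.exp (γ * R (Y ω))) (Real.exp (γ * x)) ∂P) - 1)
      ≤ 0 := by
  -- a.e. positivity
  have hms : MeasurableSet {ω | 0 < Y ω} := measurableSet_lt measurable_const hYmeas
  have hae : ∀ᵐ ω ∂P, 0 < Y ω := by
    rw [ae_iff]
    have : {ω | ¬ 0 < Y ω} = {ω | 0 < Y ω}ᶜ := rfl
    rw [this, measure_compl hms (measure_ne_top P _), hYpos, measure_univ]
    simp
  -- μ > 0
  have hμpos : 0 < μ := by
    rw [hμ]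
    rw [integral_pos_iff_support_of_nonneg_ae (hae.mono fun ω h => h.le) hYint]
    have h1 : P {ω | 0 < Y ω} ≤ P (Function.support Y) :=
      measure_mono (fun ω (h : 0 < Y ω) => ne_of_gt h)
    rw [hYpos] at h1
    exact lt_of_lt_of_le (by norm_num) h1
  have hcpos : 0 < c := lt_trans (by positivity) hc1
  have hγpos : 0 < γ := lt_of_lt_of_le (by positivity) hγ
  have hcγ : c * γ ≤ β ^ 2 / 2 * γ ^ 2 := by
    have h1 : 2 * c ≤ β ^ 2 * γ := by
      rw [div_le_iff₀ (by positivity)] at hγ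
      linarith
    nlinarith
  -- a.e. bounds on R(Y)
  have hb : ∀ᵐ ω ∂P, 0 ≤ R (Y ω) ∧ R (Y ω) ≤ Y ω :=
    hae.mono fun ω h => hR (Y ω) h.le
  have hRm : Measurable fun ω => R (Y ω) := hRmeas.comp hYmeas
  have hRint : Integrable (fun ω => R (Y ω)) P := by
    refine hYint.mono' hRm.aestronglyMeasurable (hb.mono fun ω h => ?_)
    rw [Real.norm_eq_abs, abs_of_nonneg h.1]; exact h.2
  have hYRint : Integrable (fun ω => Y ω * R (Y ω)) P := by
    refine hY2int.mono' (hYmeas.mul hRm).aestronglyMeasurable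
      ((hb.and hae).mono fun ω ⟨h, hy⟩ => ?_)
    rw [Real.norm_eq_abs, abs_of_nonneg (mul_nonneg hy.le h.1)]
    nlinarith [h.1, h.2]
  have hR2int : Integrable (fun ω => (R (Y ω)) ^ 2) P := by
    refine hY2int.mono' (hRm.pow_const 2).aestronglyMeasurable
      ((hb.and hae).mono fun ω ⟨h, hy⟩ => ?_)
    rw [Real.norm_eq_abs, abs_of_nonneg (sq_nonneg _)]
    nlinarith [h.1, h.2]
  -- A ≤ μ
  have hA : (∫ ω, R (Y ω) ∂P) ≤ μ := by
    rw [hμ]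
    exact integral_mono_ae hRint hYint (hb.mono fun ω h => h.2)
  -- second moment inequality
  have hsq : 0 ≤ σ2 - 2 * (∫ ω, Y ω * R (Y ω) ∂P) + (∫ ω, (R (Y ω)) ^ 2 ∂P) := by
    have hD : Integrable (fun ω => (Y ω - R (Y ω)) ^ 2) P := by
      have : (fun ω => (Y ω - R (Y ω)) ^ 2)
          = fun ω => (Y ω) ^ 2 - 2 * (Y ω * R (Y ω)) + (R (Y ω)) ^ 2 := by
        funext ω; ring
      rw [this]
      exact (hY2int.sub (hYRint.const_mul 2)).add hR2int
    have h0 : 0 ≤ ∫ ω, (Y ω - R (Y ω)) ^ 2 ∂P :=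
      integral_nonneg fun ω => sq_nonneg _
    have heq : (∫ ω, (Y ω - R (Y ω)) ^ 2 ∂P)
        = σ2 - 2 * (∫ ω, Y ω * R (Y ω) ∂P) + (∫ ω, (R (Y ω)) ^ 2 ∂P) := by
      have : (fun ω => (Y ω - R (Y ω)) ^ 2)
          = fun ω => (Y ω) ^ 2 - 2 * (Y ω * R (Y ω)) + (R (Y ω)) ^ 2 := by
        funext ω; ring
      have e1 : (∫ ω, ((Y ω) ^ 2 - 2 * (Y ω * R (Y ω)) + (R (Y ω)) ^ 2) ∂P)
          = (∫ ω, ((Y ω) ^ 2 - 2 * (Y ω * R (Y ω))) ∂P) + ∫ ω, (R (Y ω)) ^ 2 ∂P :=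
        integral_add (hY2int.sub (hYRint.const_mul 2)) hR2int
      have e2 : (∫ ω, ((Y ω) ^ 2 - 2 * (Y ω * R (Y ω))) ∂P)
          = (∫ ω, (Y ω) ^ 2 ∂P) - ∫ ω, 2 * (Y ω * R (Y ω)) ∂P :=
        integral_sub hY2int (hYRint.const_mul 2)
      have e3 : (∫ ω, 2 * (Y ω * R (Y ω)) ∂P) = 2 * ∫ ω, Y ω * R (Y ω) ∂P :=
        integral_const_mul 2 _
      rw [this, e1, e2, e3, hσ2]
    linarith [heq ▸ h0]
  -- min integral ≥ 1
  have hmin : 1 ≤ ∫ ω, min (Real.exp (γ * R (Y ω))) (Real.exp (γ * x)) ∂P := by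
    have hmint : Integrable (fun ω => min (Real.exp (γ * R (Y ω))) (Real.exp (γ * x))) P := by
      refine (integrable_const (Real.exp (γ * x))).mono'
        (((Real.measurable_exp.comp (hRm.const_mul γ)).min measurable_const).aestronglyMeasurable)
        (Filter.Eventually.of_forall fun ω => ?_)
      rw [Real.norm_eq_abs, abs_of_pos (lt_min (Real.exp_pos _) (Real.exp_pos _))]
      exact min_le_right _ _
    have : (∫ (_ : Ω), (1:ℝ) ∂P) ≤ ∫ ω, min (Real.exp (γ * R (Y ω))) (Real.exp (γ * x)) ∂P := by
      refine integral_mono_ae (integrable_const 1) hmint (hb.mono fun ω h => ?_)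
      refine le_min ?_ ?_
      · exact Real.one_le_exp (mul_nonneg hγpos.le h.1)
      · exact Real.one_le_exp (mul_nonneg hγpos.le hx.le)
    simpa using this
  set A := ∫ ω, R (Y ω) ∂P
  set B := ∫ ω, Y ω * R (Y ω) ∂P
  set C := ∫ ω, (R (Y ω)) ^ 2 ∂P
  set I := ∫ ω, min (Real.exp (γ * R (Y ω))) (Real.exp (γ * x)) ∂P
  nlinarith [mul_nonneg (mul_nonneg (mul_nonneg hγpos.le hlam.le) (by linarith : (0:ℝ) ≤ 1 + θ)) (by linarith : (0:ℝ) ≤ μ - A),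
    mul_nonneg (mul_nonneg (mul_nonneg hγpos.le hlam.le) (by linarith : (0:ℝ) ≤ η / 2)) hsq,
    mul_nonneg hlam.le (by linarith : (0:ℝ) ≤ I - 1)]
end
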